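/- arXiv:1609.06812 — 8 statements merged into one kernel-verified Lean document; each statement's English description precedes it below -/
import Mathlib

section
/- Suppose d1 > d4, and set K* := (c4^{d1/d4}/c1)·d4/(d1−d4). Then for every x ∈ M and every t > 0 the integral ∫_t^∞ du/V(x,φ⁻¹(u)) is finite and satisfies ∫_t^∞ du/V(x,φ⁻¹(u)) ≤ K*·t/V(x,φ⁻¹(t)). -/
open Real Set MeasureTheory

/-- finiteness of the tail integral `∫_t^∞ du / V(x,φ⁻¹(u))`
and the bound by `K* · t / V(x,φ⁻¹(t))` in the transient case `d1 > d4`. -/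
theorem tail_integral_bound
    {M : Type*} [MetricSpace M]
    (V : M → ℝ → ℝ) (c1 c2 d1 d2 : ℝ)
    (hc1 : 0 < c1) (hc1' : c1 ≤ 1) (hc2 : 1 ≤ c2) (hd1 : 0 < d1) (hd12 : d1 ≤ d2)
    (hVpos : ∀ (x : M) (r : ℝ), 0 < r → 0 < V x r)
    (hVmono : ∀ x : M, MonotoneOn (V x) (Ioi (0:ℝ)))
    (hVgrowth : ∀ (x : M) (r R : ℝ), 0 < r → r < R →
      c1 * (R / r) ^ d1 ≤ V x R / V x r ∧ V x R / V x r ≤ c2 * (R / r) ^ d2)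
    (φ φinv : ℝ → ℝ) (c3 c4 d3 d4 : ℝ)
    (hc3 : 0 < c3) (hc3' : c3 ≤ 1) (hc4 : 1 ≤ c4) (hd3 : 0 < d3) (hd34 : d3 ≤ d4)
    (hφ0 : φ 0 = 0)
    (hφmono : StrictMonoOn φ (Ici (0:ℝ)))
    (hφcont : ContinuousOn φ (Ici (0:ℝ)))
    (hφsurj : ∀ y : ℝ, 0 ≤ y → ∃ x : ℝ, 0 ≤ x ∧ φ x = y)
    (hφinv_nonneg : ∀ y : ℝ, 0 ≤ y → 0 ≤ φinv y)
    (hφinv_right : ∀ y : ℝ, 0 ≤ y → φ (φinv y) = y)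
    (hφinv_left : ∀ x : ℝ, 0 ≤ x → φinv (φ x) = x)
    (hφgrowth : ∀ r R : ℝ, 0 < r → r < R →
      c3 * (R / r) ^ d3 ≤ φ R / φ r ∧ φ R / φ r ≤ c4 * (R / r) ^ d4)
    (hd41 : d4 < d1) :
    ∀ (x : M) (t : ℝ), 0 < t →
      IntegrableOn (fun s : ℝ => 1 / V x (φinv s)) (Ioi t) ∧
      ∫ s in Ioi t, 1 / V x (φinv s) ≤
        ((c4 ^ (d1 / d4) / c1) * (d4 / (d1 - d4))) * t / V x (φinv t) := by
  intro x t ht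
  have hd4 : 0 < d4 := lt_of_lt_of_le hd3 hd34
  have hc40 : (0:ℝ) < c4 := lt_of_lt_of_le one_pos hc4
  set p : ℝ := d1 / d4 with hp_def
  have hp1 : 1 < p := (one_lt_div hd4).mpr hd41
  have hp0 : 0 < p := lt_trans one_pos hp1
  -- φinv facts
  have hφinv_pos : ∀ u : ℝ, 0 < u → 0 < φinv u := by
    intro u hu
    rcases lt_or_eq_of_le (hφinv_nonneg u hu.le) with h | h
    · exact h
    · exfalso
      have h2 := hφinv_right u hu.le
      rw [← h, hφ0] at h2
      linarith
  have hφinv_lt : ∀ a b : ℝ, 0 ≤ a → a < b → φinv a < φinv b := by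
    intro a b ha hab
    by_contra hcon
    push_neg at hcon
    have h1 : φ (φinv b) ≤ φ (φinv a) := by
      rcases eq_or_lt_of_le hcon with h | h
      · rw [h]
      · exact le_of_lt (hφmono (mem_Ici.mpr (hφinv_nonneg b (le_trans ha hab.le)))
          (mem_Ici.mpr (hφinv_nonneg a ha)) h)
    rw [hφinv_right a ha, hφinv_right b (le_trans ha hab.le)] at h1
    linarith
  set r : ℝ := φinv t with hr_def
  have hr : 0 < r := hφinv_pos t ht
  have hVr : 0 < V x r := hVpos x r hr
  set C : ℝ := (c4 ^ p * t ^ p) / (c1 * V x r) with hC_def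
  have hC0 : 0 < C := by positivity
  -- pointwise bound
  have key : ∀ s ∈ Ioi t, 1 / V x (φinv s) ≤ C * s ^ (-p) := by
    intro s hs
    have hst : t < s := hs
    have hs0 : 0 < s := lt_trans ht hst
    have hR : r < φinv s := hφinv_lt t s ht.le hst
    have hR0 : 0 < φinv s := lt_trans hr hR
    have hVR : 0 < V x (φinv s) := hVpos x _ hR0
    have hg := (hφgrowth r (φinv s) hr hR).2
    rw [hφinv_right s hs0.le] at hg
    rw [hr_def, hφinv_right t ht.le] at hg
    -- s / t ≤ c4 * (φinv s / r) ^ d4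
    have hratio : (s / (c4 * t)) ^ (1 / d4) ≤ φinv s / r := by
      have h1 : s / (c4 * t) ≤ (φinv s / r) ^ d4 := by
        rw [div_le_iff₀ (by positivity)]
        calc s = (s / t) * t := by field_simp
        _ ≤ (c4 * (φinv s / r) ^ d4) * t := by
            apply mul_le_mul_of_nonneg_right hg ht.le
        _ = (φinv s / r) ^ d4 * (c4 * t) := by ring
      calc (s / (c4 * t)) ^ (1 / d4) ≤ (((φinv s / r) ^ d4) ^ (1 / d4)) := by
            apply Real.rpow_le_rpow (by positivity) h1 (by positivity)
      _ = φinv s / r := by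
          rw [one_div, Real.rpow_rpow_inv (by positivity) hd4.ne']
    have hV := (hVgrowth x r (φinv s) hr hR).1
    have hV2 : c1 * (s / (c4 * t)) ^ p * V x r ≤ V x (φinv s) := by
      have h2 : (s / (c4 * t)) ^ p ≤ (φinv s / r) ^ d1 := by
        have := Real.rpow_le_rpow (by positivity) hratio hd1.le
        rwa [← Real.rpow_mul (by positivity), one_div, inv_mul_eq_div] at this
      calc c1 * (s / (c4 * t)) ^ p * V x r ≤ c1 * (φinv s / r) ^ d1 * V x r := by
            apply mul_le_mul_of_nonneg_right (mul_le_mul_of_nonneg_left h2 hc1.le) hVr.le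
      _ ≤ (V x (φinv s) / V x r) * V x r := mul_le_mul_of_nonneg_right hV hVr.le
      _ = V x (φinv s) := by field_simp
    have h3 : 1 / V x (φinv s) ≤ 1 / (c1 * (s / (c4 * t)) ^ p * V x r) :=
      one_div_le_one_div_of_le (by positivity) hV2
    refine h3.trans (le_of_eq ?_)
    rw [hC_def, Real.div_rpow hs0.le (by positivity), Real.mul_rpow hc40.le ht.le,
      Real.rpow_neg hs0.le]
    have e1 : (0:ℝ) < s ^ p := Real.rpow_pos_of_pos hs0 p
    have e2 : (0:ℝ) < t ^ p := Real.rpow_pos_of_pos ht p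
    have e3 : (0:ℝ) < c4 ^ p := Real.rpow_pos_of_pos hc40 p
    field_simp
  -- measurability
  have hgmono : Monotone (fun s : ℝ => V x (φinv (max s t))) := by
    intro a b hab
    have ha0 : 0 < max a t := lt_max_of_lt_right ht
    have hb0 : 0 < max b t := lt_max_of_lt_right ht
    have h1 : φinv (max a t) ≤ φinv (max b t) := by
      rcases eq_or_lt_of_le (max_le_max hab (le_refl t)) with h | h
      · rw [h]
      · exact (hφinv_lt _ _ ha0.le h).le
    exact hVmono x (mem_Ioi.mpr (hφinv_pos _ ha0)) (mem_Ioi.mpr (hφinv_pos _ hb0)) h1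
  have hmeas : Measurable (fun s : ℝ => 1 / V x (φinv (max s t))) :=
    measurable_const.div hgmono.measurable
  have heq : EqOn (fun s : ℝ => 1 / V x (φinv s)) (fun s : ℝ => 1 / V x (φinv (max s t)))
      (Ioi t) := by
    intro s hs
    simp only [max_eq_left (le_of_lt (mem_Ioi.mp hs))]
  -- integrability
  have hdom : IntegrableOn (fun s : ℝ => C * s ^ (-p)) (Ioi t) :=
    (integrableOn_Ioi_rpow_of_lt (by linarith) ht).const_mul C
  have hint2 : IntegrableOn (fun s : ℝ => 1 / V x (φinv (max s t))) (Ioi t) := by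
    refine Integrable.mono' hdom hmeas.aestronglyMeasurable.restrict ?_
    filter_upwards [ae_restrict_mem measurableSet_Ioi] with s hs
    have hs0 : 0 < s := lt_trans ht (mem_Ioi.mp hs)
    have h1 : 0 < V x (φinv (max s t)) := hVpos x _ (hφinv_pos _ (lt_max_of_lt_right ht))
    rw [Real.norm_eq_abs, abs_of_nonneg (by positivity)]
    rw [max_eq_left (le_of_lt (mem_Ioi.mp hs))]
    exact key s hs
  have hint : IntegrableOn (fun s : ℝ => 1 / V x (φinv s)) (Ioi t) :=
    hint2.congr_fun heq.symm measurableSet_Ioi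
  refine ⟨hint, ?_⟩
  have hle : ∫ s in Ioi t, 1 / V x (φinv s) ≤ ∫ s in Ioi t, C * s ^ (-p) :=
    setIntegral_mono_on hint hdom measurableSet_Ioi key
  refine hle.trans (le_of_eq ?_)
  rw [integral_const_mul, integral_Ioi_rpow_of_lt (by linarith) ht]
  have ht1 : t ^ (-p + 1) = t ^ (-p) * t := by
    rw [Real.rpow_add ht, Real.rpow_one]
  have htp : t ^ p * t ^ (-p) = 1 := by
    rw [← Real.rpow_add ht]; simp
  have hd14 : d1 - d4 ≠ 0 := by linarith
  have hp1' : -p + 1 ≠ 0 := by linarith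
  rw [hC_def, ht1]
  have hpe : p = d1 / d4 := hp_def
  have hc4p : c4 ^ p = c4 ^ (d1 / d4) := by rw [hpe]
  rw [hC_def] at hC0
  have e2 : (0:ℝ) < t ^ p := Real.rpow_pos_of_pos ht p
  have e4 : (0:ℝ) < t ^ (-p) := Real.rpow_pos_of_pos ht (-p)
  rw [← hc4p]
  have hpne : -p + 1 = -((d1 - d4) / d4) := by
    rw [hpe]; field_simp; ring
  have h1 : -(t ^ (-p) * t) / (-p + 1) = t ^ (-p) * t * (d4 / (d1 - d4)) := by
    rw [hpne, neg_div_neg_eq]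
    field_simp
  rw [h1]
  have htt : t ^ p * (t ^ (-p) * t) = t := by rw [← mul_assoc, htp, one_mul]
  calc c4 ^ p * t ^ p / (c1 * V x r) * (t ^ (-p) * t * (d4 / (d1 - d4)))
      = c4 ^ p / c1 * (d4 / (d1 - d4)) * (t ^ p * (t ^ (-p) * t)) / V x r := by
        field_simp
    _ = c4 ^ p / c1 * (d4 / (d1 - d4)) * t / V x r := by rw [htt]
end

section
/- Assume in addition that m(B(x,r)) =: V(x,r) ∈ (0,∞) for every x and r, and that ∫_M p(t,x,y) dm(y) ≤ 1 for all t > 0 and x ∈ M. Then there exist constants 0 < A1 ≤ A2, depending only on L1, L2, c1, c2, d1, d2, c3, c4, d3, d4, such that for every x ∈ M, t > 0 and r > 0: A1·min{1, V(x,r)/V(x,φ⁻¹(t))} ≤ ∫_{{y : d(x,y) ≤ r}} p(t,x,y) dm(y) ≤ A2·min{1, V(x,r)/V(x,φ⁻¹(t))}. -/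
open Real Set MeasureTheory

/-- two-sided estimate for the probability of staying in a ball,
`∫_{d(x,y) ≤ r} p(t,x,y) dm(y) ≍ min{1, V(x,r)/V(x,φ⁻¹(t))}`. -/
theorem ball_probability_estimate
    {M : Type*} [MetricSpace M] [MeasurableSpace M] [BorelSpace M]
    (μ : Measure M)
    (V : M → ℝ → ℝ)
    (hVdef : ∀ (x : M) (r : ℝ), V x r = (μ (Metric.ball x r)).toReal)
    (hμball : ∀ (x : M) (r : ℝ), 0 < r → 0 < μ (Metric.ball x r) ∧ μ (Metric.ball x r) < ⊤)
    (c1 c2 d1 d2 : ℝ)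
    (hc1 : 0 < c1) (hc1' : c1 ≤ 1) (hc2 : 1 ≤ c2) (hd1 : 0 < d1) (hd12 : d1 ≤ d2)
    (hVmono : ∀ x : M, MonotoneOn (V x) (Ioi (0:ℝ)))
    (hVgrowth : ∀ (x : M) (r R : ℝ), 0 < r → r < R →
      c1 * (R / r) ^ d1 ≤ V x R / V x r ∧ V x R / V x r ≤ c2 * (R / r) ^ d2)
    (φ φinv : ℝ → ℝ) (c3 c4 d3 d4 : ℝ)
    (hc3 : 0 < c3) (hc3' : c3 ≤ 1) (hc4 : 1 ≤ c4) (hd3 : 0 < d3) (hd34 : d3 ≤ d4)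
    (hφ0 : φ 0 = 0)
    (hφmono : StrictMonoOn φ (Ici (0:ℝ)))
    (hφcont : ContinuousOn φ (Ici (0:ℝ)))
    (hφsurj : ∀ y : ℝ, 0 ≤ y → ∃ x : ℝ, 0 ≤ x ∧ φ x = y)
    (hφinv_nonneg : ∀ y : ℝ, 0 ≤ y → 0 ≤ φinv y)
    (hφinv_right : ∀ y : ℝ, 0 ≤ y → φ (φinv y) = y)
    (hφinv_left : ∀ x : ℝ, 0 ≤ x → φinv (φ x) = x)
    (hφgrowth : ∀ r R : ℝ, 0 < r → r < R →
      c3 * (R / r) ^ d3 ≤ φ R / φ r ∧ φ R / φ r ≤ c4 * (R / r) ^ d4)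
    (p : ℝ → M → M → ℝ) (L1 L2 : ℝ) (hL1 : 0 < L1) (hL12 : L1 ≤ L2)
    (hp_nonneg : ∀ (t : ℝ) (x y : M), 0 ≤ p t x y)
    (hp_meas : ∀ t : ℝ, 0 < t → Measurable (fun yz : M × M => p t yz.1 yz.2))
    (hp : ∀ (t : ℝ) (x y : M), 0 < t → x ≠ y →
      L1 * min (1 / V x (φinv t)) (t / (V x (dist x y) * φ (dist x y))) ≤ p t x y ∧
      p t x y ≤ L2 * min (1 / V x (φinv t)) (t / (V x (dist x y) * φ (dist x y))))
    (hp_diag : ∀ (t : ℝ) (x : M), 0 < t →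
      L1 / V x (φinv t) ≤ p t x x ∧ p t x x ≤ L2 / V x (φinv t))
    (hp_mass : ∀ (t : ℝ) (x : M), 0 < t →
      ∫⁻ y, ENNReal.ofReal (p t x y) ∂μ ≤ 1) :
    ∃ A1 A2 : ℝ, 0 < A1 ∧ A1 ≤ A2 ∧
      ∀ (x : M) (t r : ℝ), 0 < t → 0 < r →
        A1 * min 1 (V x r / V x (φinv t)) ≤
          ∫ y in {y : M | dist x y ≤ r}, p t x y ∂μ ∧
        ∫ y in {y : M | dist x y ≤ r}, p t x y ∂μ ≤
          A2 * min 1 (V x r / V x (φinv t)) := by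

  -- basic positivity facts
  have hVpos : ∀ (x : M) (s : ℝ), 0 < s → 0 < V x s := by
    intro x s hs
    rw [hVdef]
    exact ENNReal.toReal_pos (hμball x s hs).1.ne' (hμball x s hs).2.ne
  have hL2 : 0 < L2 := lt_of_lt_of_le hL1 hL12
  have hφinvpos : ∀ t : ℝ, 0 < t → 0 < φinv t := by
    intro t ht
    rcases (hφinv_nonneg t ht.le).lt_or_eq with h | h
    · exact h
    · exfalso
      have h2 := hφinv_right t ht.le
      rw [← h, hφ0] at h2
      exact ht.ne h2
  have h2d2 : (1:ℝ) ≤ (2:ℝ) ^ d2 :=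
    Real.one_le_rpow one_le_two (le_trans hd1.le hd12)
  set C : ℝ := L2 * (c2 * (2:ℝ) ^ d2) with hC
  have hc2' : (1:ℝ) ≤ c2 * (2:ℝ) ^ d2 := by
    calc (1:ℝ) = 1 * 1 := (one_mul _).symm
      _ ≤ c2 * (2:ℝ) ^ d2 := mul_le_mul hc2 h2d2 one_pos.le (le_trans one_pos.le hc2)
  have hCpos : 0 < C := lt_of_lt_of_le hL2 (le_mul_of_one_le_right hL2.le hc2')
  have hL1C : L1 ≤ C := le_trans hL12 (le_mul_of_one_le_right hL2.le hc2')
  refine ⟨L1, max 1 C, hL1, le_trans hL1C (le_max_right _ _), ?_⟩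
  intro x t r ht hr
  set Vt := V x (φinv t) with hVt
  have hVtpos : 0 < Vt := hVpos x _ (hφinvpos t ht)
  have hVrpos : 0 < V x r := hVpos x r hr
  -- pointwise upper bound
  have hub : ∀ y : M, p t x y ≤ L2 / Vt := by
    intro y
    by_cases hxy : x = y
    · rw [← hxy]; exact (hp_diag t x ht).2
    · refine le_trans (hp t x y ht hxy).2 ?_
      rw [div_eq_mul_one_div L2 Vt]
      exact mul_le_mul_of_nonneg_left (min_le_left _ _) hL2.le
  -- pointwise lower bound on small ball
  set ρ : ℝ := min r (φinv t) with hρdef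
  have hρpos : 0 < ρ := lt_min hr (hφinvpos t ht)
  have hρr : ρ ≤ r := min_le_left _ _
  have hρφ : ρ ≤ φinv t := min_le_right _ _
  have hlb : ∀ y : M, dist x y ≤ ρ → L1 / Vt ≤ p t x y := by
    intro y hy
    by_cases hxy : x = y
    · rw [← hxy]; exact (hp_diag t x ht).1
    · refine le_trans ?_ (hp t x y ht hxy).1
      have hd0 : 0 < dist x y := dist_pos.2 hxy
      have hdφ : dist x y ≤ φinv t := le_trans hy hρφ
      have hVle : V x (dist x y) ≤ Vt := hVmono x hd0 (hφinvpos t ht) hdφ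
      have hφle : φ (dist x y) ≤ t := by
        have h3 := (hφmono.monotoneOn) (le_of_lt hd0 : (0:ℝ) ≤ dist x y)
          (hφinv_nonneg t ht.le) hdφ
        rwa [hφinv_right t ht.le] at h3
      have hφpos : 0 < φ (dist x y) := by
        have h4 := hφmono (le_refl (0:ℝ)) hd0.le hd0
        rwa [hφ0] at h4
      have hmin : 1 / Vt ≤ t / (V x (dist x y) * φ (dist x y)) := by
        rw [div_le_div_iff₀ hVtpos (mul_pos (hVpos x _ hd0) hφpos)]
        calc 1 * (V x (dist x y) * φ (dist x y)) = V x (dist x y) * φ (dist x y) := one_mul _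
          _ ≤ Vt * t := mul_le_mul hVle hφle hφpos.le hVtpos.le
          _ = t * Vt := mul_comm _ _
      rw [min_eq_left hmin, div_eq_mul_one_div L1 Vt]
  -- measurability
  have hpm : Measurable (fun y : M => p t x y) :=
    (hp_meas t ht).comp (measurable_const.prodMk measurable_id)
  set S : Set M := {y : M | dist x y ≤ r} with hS
  have hSsub : S ⊆ Metric.ball x (2 * r) := by
    intro y hy
    rw [Metric.mem_ball, dist_comm]
    exact lt_of_le_of_lt hy (by linarith)
  have hSfin : μ S < ⊤ := lt_of_le_of_lt (measure_mono hSsub) (hμball x (2*r) (by linarith)).2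
  set I : ENNReal := ∫⁻ y in S, ENNReal.ofReal (p t x y) ∂μ with hI
  have hI1 : I ≤ 1 := le_trans (setLIntegral_le_lintegral _ _) (hp_mass t x ht)
  have hItop : I ≠ ⊤ := ne_top_of_le_ne_top ENNReal.one_ne_top hI1
  have hInt : ∫ y in S, p t x y ∂μ = I.toReal := by
    rw [hI, MeasureTheory.integral_eq_lintegral_of_nonneg_ae
      (Filter.Eventually.of_forall (fun y => hp_nonneg t x y))
      (hpm.aestronglyMeasurable.restrict)]
  rw [hInt]
  constructor
  · -- lower bound
    set S' : Set M := {y : M | dist x y ≤ ρ} with hS'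
    have hsub : S' ⊆ S := fun y hy => le_trans hy hρr
    have hball : Metric.ball x ρ ⊆ S' := by
      intro y hy
      rw [Metric.mem_ball, dist_comm] at hy
      exact hy.le
    have hIlow : ENNReal.ofReal (L1 / Vt) * μ (Metric.ball x ρ) ≤ I := by
      calc ENNReal.ofReal (L1 / Vt) * μ (Metric.ball x ρ)
          ≤ ENNReal.ofReal (L1 / Vt) * μ S' :=
            mul_le_mul_right (measure_mono hball) _
        _ = ∫⁻ _ in S', ENNReal.ofReal (L1 / Vt) ∂μ := by
            rw [MeasureTheory.setLIntegral_const, mul_comm]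
        _ ≤ ∫⁻ y in S', ENNReal.ofReal (p t x y) ∂μ :=
            setLIntegral_mono (hpm.ennreal_ofReal)
              (fun y hy => ENNReal.ofReal_le_ofReal (hlb y hy))
        _ ≤ I := lintegral_mono' (Measure.restrict_mono hsub le_rfl) le_rfl
    have hlow : (L1 / Vt) * V x ρ ≤ I.toReal := by
      have h5 := ENNReal.toReal_mono hItop hIlow
      rwa [ENNReal.toReal_mul, ENNReal.toReal_ofReal (by positivity), ← hVdef] at h5
    refine le_trans ?_ hlow
    rcases le_total r (φinv t) with hcase | hcase
    · have hρ : ρ = r := min_eq_left hcase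
      rw [hρ]
      have : min 1 (V x r / Vt) ≤ V x r / Vt := min_le_right _ _
      calc L1 * min 1 (V x r / Vt) ≤ L1 * (V x r / Vt) :=
            mul_le_mul_of_nonneg_left this hL1.le
        _ = L1 / Vt * V x r := by ring
    · have hρ : ρ = φinv t := min_eq_right hcase
      rw [hρ, ← hVt, div_mul_cancel₀ _ hVtpos.ne']
      exact mul_le_of_le_one_right hL1.le (min_le_left _ _)
  · -- upper bound
    have hμS : (μ S).toReal ≤ (c2 * (2:ℝ) ^ d2) * V x r := by
      have h6 : (μ S).toReal ≤ V x (2 * r) := by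
        rw [hVdef]
        exact ENNReal.toReal_mono (hμball x (2*r) (by linarith)).2.ne (measure_mono hSsub)
      refine le_trans h6 ?_
      have h7 := (hVgrowth x r (2*r) hr (by linarith)).2
      have h2r : (2*r)/r = 2 := by field_simp
      rw [h2r] at h7
      calc V x (2*r) = V x (2*r) / V x r * V x r := by
            field_simp
        _ ≤ c2 * (2:ℝ) ^ d2 * V x r := mul_le_mul_of_nonneg_right h7 hVrpos.le
    have hIub : I ≤ ENNReal.ofReal (L2 / Vt) * μ S := by
      calc I ≤ ∫⁻ _ in S, ENNReal.ofReal (L2 / Vt) ∂μ :=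
            lintegral_mono (fun y => ENNReal.ofReal_le_ofReal (hub y))
        _ = ENNReal.ofReal (L2 / Vt) * μ S := by
            rw [MeasureTheory.setLIntegral_const, mul_comm]
    have hup2 : I.toReal ≤ C * (V x r / Vt) := by
      have h8 := ENNReal.toReal_mono
        (by
          refine ENNReal.mul_ne_top ENNReal.ofReal_ne_top hSfin.ne) hIub
      rw [ENNReal.toReal_mul, ENNReal.toReal_ofReal (by positivity)] at h8
      refine le_trans h8 ?_
      calc L2 / Vt * (μ S).toReal ≤ L2 / Vt * ((c2 * (2:ℝ) ^ d2) * V x r) :=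
            mul_le_mul_of_nonneg_left hμS (by positivity)
        _ = C * (V x r / Vt) := by rw [hC]; ring
    have hup1 : I.toReal ≤ 1 := by
      have := ENNReal.toReal_mono ENNReal.one_ne_top hI1
      simpa using this
    rcases le_total (V x r / Vt) 1 with hcase | hcase
    · rw [min_eq_right hcase]
      calc I.toReal ≤ C * (V x r / Vt) := hup2
        _ ≤ max 1 C * (V x r / Vt) :=
            mul_le_mul_of_nonneg_right (le_max_right _ _) (by positivity)
    · rw [min_eq_left hcase, mul_one]
      exact le_trans hup1 (le_max_left _ _)
end

section
/- Set K1 := 2^{d2}·c2·L2/L1. If a, b, c, r are positive constants with a < b and φ(r) ≤ min{a, c}, then for every x ∈ M: H(x,r,a,b) ≤ K1·(V(x,r)/φ(r))·∫_a^{b+c} du/V(x,φ⁻¹(u)). -/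
open Real Set MeasureTheory

/-- upper bound on the hitting probability of a ball during a
finite time interval (Lemma 4.2 / `prop:hit-prob`). -/
theorem hitting_probability_upper
    {M : Type*} [MetricSpace M]
    (V : M → ℝ → ℝ) (c1 c2 d1 d2 : ℝ)
    (hc1 : 0 < c1) (hc1' : c1 ≤ 1) (hc2 : 1 ≤ c2) (hd1 : 0 < d1) (hd12 : d1 ≤ d2)
    (hVpos : ∀ (x : M) (r : ℝ), 0 < r → 0 < V x r)
    (hVmono : ∀ x : M, MonotoneOn (V x) (Ioi (0:ℝ)))
    (hVgrowth : ∀ (x : M) (r R : ℝ), 0 < r → r < R →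
      c1 * (R / r) ^ d1 ≤ V x R / V x r ∧ V x R / V x r ≤ c2 * (R / r) ^ d2)
    (φ φinv : ℝ → ℝ) (c3 c4 d3 d4 : ℝ)
    (hc3 : 0 < c3) (hc3' : c3 ≤ 1) (hc4 : 1 ≤ c4) (hd3 : 0 < d3) (hd34 : d3 ≤ d4)
    (hφ0 : φ 0 = 0)
    (hφmono : StrictMonoOn φ (Ici (0:ℝ)))
    (hφcont : ContinuousOn φ (Ici (0:ℝ)))
    (hφsurj : ∀ y : ℝ, 0 ≤ y → ∃ x : ℝ, 0 ≤ x ∧ φ x = y)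
    (hφinv_nonneg : ∀ y : ℝ, 0 ≤ y → 0 ≤ φinv y)
    (hφinv_right : ∀ y : ℝ, 0 ≤ y → φ (φinv y) = y)
    (hφinv_left : ∀ x : ℝ, 0 ≤ x → φinv (φ x) = x)
    (hφgrowth : ∀ r R : ℝ, 0 < r → r < R →
      c3 * (R / r) ^ d3 ≤ φ R / φ r ∧ φ R / φ r ≤ c4 * (R / r) ^ d4)
    (u : M → ℝ → ℝ → ℝ) (L1 L2 : ℝ) (hL1 : 0 < L1) (hL12 : L1 ≤ L2)
    (hu_nonneg : ∀ (x : M) (t r : ℝ), 0 ≤ u x t r)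
    (hu : ∀ (x : M) (t r : ℝ), 0 < t → 0 < r →
      L1 * min 1 (V x r / V x (φinv t)) ≤ u x t r ∧
      u x t r ≤ L2 * min 1 (V x r / V x (φinv t)))
    (H : M → ℝ → ℝ → ℝ → ℝ)
    (hH_nonneg : ∀ (x : M) (r a b : ℝ), 0 ≤ H x r a b)
    (hH_upper : ∀ (x : M) (r a b c : ℝ), 0 < r → 0 < a → a < b → 0 < c →
      H x r a b ≤ (∫ t in a..(b + c), u x t (2 * r)) /
        (∫ t in (0:ℝ)..c, ⨅ y : {y : M // dist y x ≤ r}, u y.1 t r)) :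
    ∀ (x : M) (a b c r : ℝ), 0 < a → a < b → 0 < c → 0 < r →
      φ r ≤ min a c →
      H x r a b ≤ ((2:ℝ) ^ d2 * c2 * L2 / L1) * (V x r / φ r) *
        ∫ s in a..(b + c), 1 / V x (φinv s) := by
  intro x a b c r ha hab hc hr hφr
  have hφra : φ r ≤ a := le_trans hφr (min_le_left _ _)
  have hφrc : φ r ≤ c := le_trans hφr (min_le_right _ _)
  have hφrpos : 0 < φ r := by
    have := hφmono (le_refl (0:ℝ) : (0:ℝ) ∈ Ici (0:ℝ)) (le_of_lt hr : r ∈ Ici (0:ℝ)) hr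
    simpa [hφ0] using this
  -- monotonicity of φinv
  have hφinv_mono : ∀ s t : ℝ, 0 ≤ s → s ≤ t → φinv s ≤ φinv t := by
    intro s t hs hst
    by_contra hlt
    push_neg at hlt
    have h1 : φ (φinv t) < φ (φinv s) :=
      hφmono (hφinv_nonneg t (hs.trans hst)) (hφinv_nonneg s hs) hlt
    rw [hφinv_right s hs, hφinv_right t (hs.trans hst)] at h1
    exact absurd h1 (not_lt.mpr hst)
  have hφinv_pos : ∀ t : ℝ, 0 < t → 0 < φinv t := by
    intro t ht
    rcases lt_or_eq_of_le (hφinv_nonneg t ht.le) with h | h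
    · exact h
    · exfalso
      have : φ (φinv t) = 0 := by rw [← h, hφ0]
      rw [hφinv_right t ht.le] at this
      exact ht.ne' this
  have habc : a ≤ b + c := by linarith
  -- antitonicity and integrability of g = 1 / V x (φinv ·)
  set g : ℝ → ℝ := fun s => 1 / V x (φinv s) with hg_def
  have hganti : AntitoneOn g (uIcc a (b + c)) := by
    rw [uIcc_of_le habc]
    intro s hs t ht hst
    have hs0 : 0 < s := lt_of_lt_of_le ha hs.1
    have ht0 : 0 < t := lt_of_lt_of_le ha ht.1
    have h1 : V x (φinv s) ≤ V x (φinv t) :=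
      (hVmono x) (hφinv_pos s hs0) (hφinv_pos t ht0) (hφinv_mono s t hs0.le hst)
    exact one_div_le_one_div_of_le (hVpos x _ (hφinv_pos s hs0)) h1
  have hgint : IntervalIntegrable g volume a (b + c) := hganti.intervalIntegrable
  have hgnonneg : ∀ t ∈ Icc a (b + c), 0 ≤ g t := by
    intro t ht
    have := hVpos x _ (hφinv_pos t (lt_of_lt_of_le ha ht.1))
    positivity
  have hI : (0:ℝ) ≤ ∫ s in a..(b + c), g s :=
    intervalIntegral.integral_nonneg habc hgnonneg
  have hVr : 0 < V x r := hVpos x r hr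
  set K : ℝ := (2:ℝ) ^ d2 * c2 * L2 / L1 with hK
  have hRHS : (0:ℝ) ≤ K * (V x r / φ r) * ∫ s in a..(b + c), g s := by
    have h2d2 : (0:ℝ) < (2:ℝ) ^ d2 := Real.rpow_pos_of_pos two_pos d2
    have hc2 : (0:ℝ) < c2 := lt_of_lt_of_le one_pos hc2
    have hL2 : (0:ℝ) < L2 := lt_of_lt_of_le hL1 hL12
    have hKpos : 0 < K := by positivity
    positivity
  have hHle := hH_upper x r a b c hr ha hab hc
  set N : ℝ := ∫ t in a..(b + c), u x t (2 * r) with hN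
  set f : ℝ → ℝ := fun t => ⨅ y : {y : M // dist y x ≤ r}, u y.1 t r with hf_def
  set D : ℝ := ∫ t in (0:ℝ)..c, f t with hD
  -- case: numerator not integrable
  by_cases hNint : IntervalIntegrable (fun t => u x t (2 * r)) volume a (b + c)
  swap
  · have : N = 0 := intervalIntegral.integral_undef hNint
    rw [this, zero_div] at hHle
    exact le_trans hHle hRHS
  -- case: denominator not integrable
  by_cases hDint : IntervalIntegrable f volume 0 c
  swap
  · have : D = 0 := intervalIntegral.integral_undef hDint
    rw [this, div_zero] at hHle
    exact le_trans hHle hRHS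
  -- the index type is nonempty
  haveI : Nonempty {y : M // dist y x ≤ r} := ⟨⟨x, by simp [dist_self, hr.le]⟩⟩
  have hf_nonneg : ∀ t, 0 ≤ f t := fun t => le_ciInf fun y => hu_nonneg y.1 t r
  -- lower bound on the denominator: D ≥ L1 * φ r
  have hDsplit1 : IntervalIntegrable f volume 0 (φ r) :=
    hDint.mono_set (by rw [uIcc_of_le hφrpos.le, uIcc_of_le hc.le]; exact Icc_subset_Icc le_rfl hφrc)
  have hDsplit2 : IntervalIntegrable f volume (φ r) c :=
    hDint.mono_set (by rw [uIcc_of_le hφrc, uIcc_of_le hc.le]; exact Icc_subset_Icc hφrpos.le le_rfl)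
  have hflow : ∀ t ∈ Ioc (0:ℝ) (φ r), L1 ≤ f t := by
    intro t ht
    refine le_ciInf fun y => ?_
    have h1 := (hu y.1 t r ht.1 hr).1
    have hφinvt : φinv t ≤ r := by
      have := hφinv_mono t (φ r) ht.1.le ht.2
      rwa [hφinv_left r hr.le] at this
    have hVle : V y.1 (φinv t) ≤ V y.1 r :=
      (hVmono y.1) (hφinv_pos t ht.1) hr hφinvt
    have hmin : min 1 (V y.1 r / V y.1 (φinv t)) = 1 := by
      rw [min_eq_left]
      rw [le_div_iff₀ (hVpos y.1 _ (hφinv_pos t ht.1))]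
      linarith
    rw [hmin, mul_one] at h1
    exact h1
  have hae : (fun _ : ℝ => L1) ≤ᵐ[volume.restrict (Icc 0 (φ r))] f := by
    have h2 : ∀ᵐ t : ℝ, t ≠ 0 := by
      rw [ae_iff]
      simp only [ne_eq, not_not, setOf_eq_eq_singleton]
      exact Real.volume_singleton
    filter_upwards [ae_restrict_mem measurableSet_Icc,
      h2.filter_mono (ae_mono Measure.restrict_le_self)] with t ht htne
    exact hflow t ⟨lt_of_le_of_ne ht.1 (Ne.symm htne), ht.2⟩
  have hD1 : L1 * φ r ≤ ∫ t in (0:ℝ)..(φ r), f t := by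
    have := intervalIntegral.integral_mono_ae_restrict hφrpos.le
      (intervalIntegrable_const (c := L1)) hDsplit1 hae
    simpa [mul_comm] using this
  have hD2 : (0:ℝ) ≤ ∫ t in (φ r)..c, f t :=
    intervalIntegral.integral_nonneg hφrc fun t _ => hf_nonneg t
  have hDeq : (∫ t in (0:ℝ)..(φ r), f t) + ∫ t in (φ r)..c, f t = D :=
    intervalIntegral.integral_add_adjacent_intervals hDsplit1 hDsplit2
  have hDlb : L1 * φ r ≤ D := by rw [← hDeq]; linarith
  have hDpos : 0 < L1 * φ r := by positivity
  -- upper bound on the numerator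
  set C : ℝ := L2 * (c2 * (2:ℝ) ^ d2) * V x r with hCdef
  have hptwise : ∀ t ∈ Icc a (b + c), u x t (2 * r) ≤ C * g t := by
    intro t ht
    have ht0 : 0 < t := lt_of_lt_of_le ha ht.1
    have h2 := (hu x t (2 * r) ht0 (by linarith)).2
    have hVφ : 0 < V x (φinv t) := hVpos x _ (hφinv_pos t ht0)
    have hV2r : V x (2 * r) ≤ c2 * (2:ℝ) ^ d2 * V x r := by
      have := (hVgrowth x r (2 * r) hr (by linarith)).2
      have h2r : (2 * r / r : ℝ) = 2 := by field_simp
      rw [h2r] at this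
      calc V x (2 * r) = V x (2 * r) / V x r * V x r := by field_simp
        _ ≤ c2 * (2:ℝ) ^ d2 * V x r :=
          mul_le_mul_of_nonneg_right this hVr.le
    have hL2 : (0:ℝ) < L2 := lt_of_lt_of_le hL1 hL12
    calc u x t (2 * r) ≤ L2 * min 1 (V x (2 * r) / V x (φinv t)) := h2
      _ ≤ L2 * (V x (2 * r) / V x (φinv t)) :=
        mul_le_mul_of_nonneg_left (min_le_right _ _) hL2.le
      _ ≤ L2 * (c2 * (2:ℝ) ^ d2 * V x r / V x (φinv t)) := by
        apply mul_le_mul_of_nonneg_left _ hL2.le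
        exact div_le_div_of_nonneg_right hV2r hVφ.le |>.trans_eq rfl
      _ = C * g t := by rw [hCdef, hg_def]; ring
  have hCgint : IntervalIntegrable (fun t => C * g t) volume a (b + c) :=
    (hgint.const_mul C)
  have hNub : N ≤ C * ∫ s in a..(b + c), g s := by
    rw [hN]
    calc (∫ t in a..(b + c), u x t (2 * r))
        ≤ ∫ t in a..(b + c), C * g t :=
          intervalIntegral.integral_mono_on habc hNint hCgint hptwise
      _ = C * ∫ s in a..(b + c), g s := intervalIntegral.integral_const_mul C g
  have hNnonneg : 0 ≤ N :=
    intervalIntegral.integral_nonneg habc fun t _ => hu_nonneg x t (2 * r)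
  -- combine
  have hstep : N / D ≤ N / (L1 * φ r) :=
    div_le_div_of_nonneg_left hNnonneg hDpos hDlb
  have hfinal : N / (L1 * φ r) ≤ K * (V x r / φ r) * ∫ s in a..(b + c), g s := by
    have h1 : N / (L1 * φ r) ≤ (C * ∫ s in a..(b + c), g s) / (L1 * φ r) :=
      div_le_div_of_nonneg_right hNub hDpos.le |>.trans_eq rfl
    refine h1.trans_eq ?_
    rw [hK, hCdef]
    simp only [div_eq_mul_inv, mul_inv]
    ring
  exact hHle.trans (hstep.trans hfinal)
end

section
/- Set K3 := 2^{d2}·c2·(L2/L1)·(c_{v,2}/c_{v,1})². Suppose g(t) < 1. Then for all real k satisfying 1 < k < 3/2 and real l satisfying 1 < l < 2 − 1/k, there exists T_{k,l} > 0 (depending only on k, l, g and the structural constants) such that for all t ≥ T_{k,l}, defining the sequence n_0 = t, n_{2m+1} = k·n_{2m}, n_{2m+2} = l·n_{2m+1} (m ≥ 0), one has for every x ∈ M and all integers i ≥ 0 and j ≥ i+1: H(x, (c3/k)^{1/d3}·φ⁻¹(n_{2j+1})·g(n_{2j+1}), n_{2j} − n_{2i+1}, n_{2j+1} − n_{2i})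 ≤ (2K3/d3)·(kl/(kl−1))·log((3/2)·(kl/(l−1)))·∫_{n_{2j−1}}^{n_{2j+1}} du/(u·|log g(u)|). -/
open Real Set MeasureTheory

lemma log_int' (C p q : ℝ) (hp : 0 < p) (hq : 0 < q) :
    ∫ s in p..q, C * (1/s) = C * (Real.log q - Real.log p) := by
  rw [intervalIntegral.integral_const_mul, integral_one_div
    (notMem_uIcc_of_lt hp hq), Real.log_div hq.ne' hp.ne']

lemma int_integrable_cdiv' (C p q : ℝ) (hp : 0 < p) (hpq : p ≤ q) :
    IntervalIntegrable (fun s => C * (1/s)) volume p q := by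
  apply ContinuousOn.intervalIntegrable
  apply continuousOn_const.mul
  apply continuousOn_const.div continuousOn_id
  intro x hx
  rw [uIcc_of_le hpq] at hx
  exact ne_of_gt (lt_of_lt_of_le hp hx.1)

lemma log_lb' (x : ℝ) (hx : 1 < x) : (x-1)/x ≤ Real.log x := by
  have hx0 : (0:ℝ) < x := by linarith
  have h := Real.log_le_sub_one_of_pos (show (0:ℝ) < 1/x by positivity)
  rw [Real.log_div one_ne_zero hx0.ne', Real.log_one] at h
  have he : (x-1)/x = 1 - 1/x := by field_simp
  linarith

set_option maxHeartbeats 2000000 in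
/-- (recurrent case) upper bound for the hitting probability over
the interval `(n_{2j} − n_{2i+1}, n_{2j+1} − n_{2i}]` (Lemma A.4 / `lem:comp-prob-3`). -/
theorem recurrent_case_cap_upper
    {M : Type*} [MetricSpace M]
    (V : M → ℝ → ℝ) (c1 c2 d1 d2 : ℝ)
    (hc1 : 0 < c1) (hc1' : c1 ≤ 1) (hc2 : 1 ≤ c2) (hd1 : 0 < d1) (hd12 : d1 ≤ d2)
    (hVpos : ∀ (x : M) (r : ℝ), 0 < r → 0 < V x r)
    (hVmono : ∀ x : M, MonotoneOn (V x) (Ioi (0:ℝ)))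
    (hVgrowth : ∀ (x : M) (r R : ℝ), 0 < r → r < R →
      c1 * (R / r) ^ d1 ≤ V x R / V x r ∧ V x R / V x r ≤ c2 * (R / r) ^ d2)
    (φ φinv : ℝ → ℝ) (c3 c4 d3 d4 : ℝ)
    (hc3 : 0 < c3) (hc3' : c3 ≤ 1) (hc4 : 1 ≤ c4) (hd3 : 0 < d3) (hd34 : d3 ≤ d4)
    (hφ0 : φ 0 = 0)
    (hφmono : StrictMonoOn φ (Ici (0:ℝ)))
    (hφcont : ContinuousOn φ (Ici (0:ℝ)))
    (hφsurj : ∀ y : ℝ, 0 ≤ y → ∃ x : ℝ, 0 ≤ x ∧ φ x = y)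
    (hφinv_nonneg : ∀ y : ℝ, 0 ≤ y → 0 ≤ φinv y)
    (hφinv_right : ∀ y : ℝ, 0 ≤ y → φ (φinv y) = y)
    (hφinv_left : ∀ x : ℝ, 0 ≤ x → φinv (φ x) = x)
    (hφgrowth : ∀ r R : ℝ, 0 < r → r < R →
      c3 * (R / r) ^ d3 ≤ φ R / φ r ∧ φ R / φ r ≤ c4 * (R / r) ^ d4)
    (cv1 cv2 : ℝ) (hcv1 : 0 < cv1) (hcv12 : cv1 ≤ cv2)
    (hVφ : ∀ (x : M) (r : ℝ), 0 < r → cv1 * φ r ≤ V x r ∧ V x r ≤ cv2 * φ r)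
    (u : M → ℝ → ℝ → ℝ) (L1 L2 : ℝ) (hL1 : 0 < L1) (hL12 : L1 ≤ L2)
    (hu_nonneg : ∀ (x : M) (t r : ℝ), 0 ≤ u x t r)
    (hu : ∀ (x : M) (t r : ℝ), 0 < t → 0 < r →
      L1 * min 1 (V x r / V x (φinv t)) ≤ u x t r ∧
      u x t r ≤ L2 * min 1 (V x r / V x (φinv t)))
    (H : M → ℝ → ℝ → ℝ → ℝ)
    (hH_nonneg : ∀ (x : M) (r a b : ℝ), 0 ≤ H x r a b)
    (hH_upper : ∀ (x : M) (r a b c : ℝ), 0 < r → 0 < a → a < b → 0 < c →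
      H x r a b ≤ (∫ t in a..(b + c), u x t (2 * r)) /
        (∫ t in (0:ℝ)..c, ⨅ y : {y : M // dist y x ≤ r}, u y.1 t r))
    (g : ℝ → ℝ) (hg_pos : ∀ t : ℝ, 0 < t → 0 < g t)
    (hg_anti : AntitoneOn g (Ioi (0:ℝ)))
    (hg_lim : Filter.Tendsto g Filter.atTop (nhds 0)) :
    ∀ k l : ℝ, 1 < k → k < 3/2 → 1 < l → l < 2 - 1/k →
      ∃ T : ℝ, 0 < T ∧ ∀ t : ℝ, T ≤ t → g t < 1 →
        ∀ n : ℕ → ℝ, n 0 = t →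
          (∀ m : ℕ, n (2*m+1) = k * n (2*m)) →
          (∀ m : ℕ, n (2*m+2) = l * n (2*m+1)) →
          ∀ (x : M) (i j : ℕ), i + 1 ≤ j →
            H x ((c3/k) ^ (1/d3) * (φinv (n (2*j+1)) * g (n (2*j+1))))
                (n (2*j) - n (2*i+1)) (n (2*j+1) - n (2*i)) ≤
              (2 * (((2:ℝ) ^ d2 * c2 * (L2 / L1)) * (cv2 / cv1) ^ 2) / d3) *
                (k * l / (k * l - 1)) * Real.log ((3/2) * (k * l / (l - 1))) *
                ∫ s in (n (2*j-1))..(n (2*j+1)), 1 / (s * |Real.log (g s)|) := by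
  intro k l hk1 hk2 hl1 hl2
  have hk0 : (0:ℝ) < k := by linarith
  have hl0 : (0:ℝ) < l := by linarith
  have hP1 : 1 < k * l := by nlinarith
  have hP0 : (0:ℝ) < k * l := by linarith
  have hcv2 : (0:ℝ) < cv2 := lt_of_lt_of_le hcv1 hcv12
  have hL2 : (0:ℝ) < L2 := lt_of_lt_of_le hL1 hL12
  have hd2 : (0:ℝ) < d2 := lt_of_lt_of_le hd1 hd12
  have h2d2 : (1:ℝ) ≤ (2:ℝ) ^ d2 := by
    have := Real.rpow_le_rpow_of_exponent_le one_le_two hd2.le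
    rwa [Real.rpow_zero] at this
  have h2d2pos : (0:ℝ) < (2:ℝ) ^ d2 := by positivity
  set D := c2 * (2:ℝ)^d2 * (cv2/cv1) with hD_def
  clear_value D
  have hcvr : (1:ℝ) ≤ cv2/cv1 := (one_le_div hcv1).mpr hcv12
  have hD1 : (1:ℝ) ≤ D := by
    rw [hD_def]
    have h12 : (1:ℝ) ≤ c2 * (2:ℝ)^d2 := by nlinarith
    have := mul_le_mul h12 hcvr zero_le_one (by linarith)
    simpa using this
  have hDpos : (0:ℝ) < D := by linarith
  set ε := min ((l-1)/(l*D)) (1/4) with hε_def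
  clear_value ε
  have hεpos : 0 < ε := by
    rw [hε_def]
    apply lt_min
    · apply div_pos (by linarith) (by positivity)
    · norm_num
  set εr := ε ^ (1/d3) with hεr_def
  clear_value εr
  have hεrpos : 0 < εr := by
    rw [hεr_def]; exact Real.rpow_pos_of_pos hεpos _
  have hev : ∀ᶠ s in Filter.atTop, g s < εr := by
    have := hg_lim (Iio_mem_nhds hεrpos)
    simpa [Set.mem_Iio] using this
  obtain ⟨T0, hT0⟩ := Filter.eventually_atTop.mp hev
  refine ⟨max T0 1, lt_of_lt_of_le one_pos (le_max_right _ _), ?_⟩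
  intro t ht hgt1 n hn0 hodd heven x i j hij
  have ht1 : (1:ℝ) ≤ t := le_trans (le_max_right _ _) ht
  have ht0 : (0:ℝ) < t := by linarith
  have htT0 : T0 ≤ t := le_trans (le_max_left _ _) ht
  -- sequence values
  have hne : ∀ m, n (2*m) = (k*l)^m * t := by
    intro m
    induction m with
    | zero => simpa using hn0
    | succ m ih =>
        have h1 : 2*(m+1) = 2*m+2 := by ring
        rw [h1, heven m, hodd m, ih, pow_succ]; ring
  have hno : ∀ m, n (2*m+1) = k * ((k*l)^m * t) := by
    intro m; rw [hodd m, hne m]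
  have hj1 : 1 ≤ j := by omega
  have hpowpos : ∀ m : ℕ, (0:ℝ) < (k*l)^m := fun m => pow_pos hP0 m
  have hpowge1 : ∀ m : ℕ, (1:ℝ) ≤ (k*l)^m := fun m => one_le_pow₀ hP1.le
  have hpow : (k*l)^(j-1) * (k*l) = (k*l)^j := by
    rw [← pow_succ]; congr 1; omega
  -- abbreviations
  set N := n (2*j+1) with hN_def
  clear_value N
  set p := n (2*j-1) with hp_def
  clear_value p
  have hNval : N = k * ((k*l)^j * t) := by rw [hN_def]; exact hno j
  have hpidx : 2*j-1 = 2*(j-1)+1 := by omega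
  have hpval : p = k * ((k*l)^(j-1) * t) := by rw [hp_def, hpidx]; exact hno (j-1)
  have hNpos : 0 < N := by rw [hNval]; positivity
  have hppos : 0 < p := by rw [hpval]; positivity
  have hseq : ∀ m : ℕ, t ≤ k * ((k*l)^m * t) := by
    intro m
    have h1 : 1 * t ≤ (k*l)^m * t := mul_le_mul_of_nonneg_right (hpowge1 m) ht0.le
    rw [one_mul] at h1
    have h2 : (k*l)^m * t ≤ k * ((k*l)^m * t) :=
      le_mul_of_one_le_left (by positivity) hk1.le
    linarith
  have htp : t ≤ p := by rw [hpval]; exact hseq (j-1)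
  have htN : t ≤ N := by rw [hNval]; exact hseq j
  have hNp : N = (k*l) * p := by rw [hNval, hpval, ← hpow]; ring
  have hpN : p ≤ N := by
    rw [hNp]
    exact le_mul_of_one_le_left hppos.le hP1.le
  -- g bounds
  have hgNpos : 0 < g N := hg_pos N hNpos
  have hgN1 : g N < 1 :=
    lt_of_le_of_lt (hg_anti (mem_Ioi.mpr ht0) (mem_Ioi.mpr hNpos) htN) hgt1
  have hgNεr : g N < εr := hT0 N (by linarith)
  have hgNd3 : g N ^ d3 ≤ ε := by
    have h1 : g N ^ d3 ≤ εr ^ d3 := Real.rpow_le_rpow hgNpos.le hgNεr.le hd3.le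
    have h2 : εr ^ d3 = ε := by
      rw [hεr_def, ← Real.rpow_mul hεpos.le, one_div_mul_cancel hd3.ne', Real.rpow_one]
    rwa [h2] at h1
  have hε14 : ε ≤ 1/4 := by rw [hε_def]; exact min_le_right _ _
  have hεl : ε ≤ (l-1)/(l*D) := by rw [hε_def]; exact min_le_left _ _
  -- φinv positivity
  have hφinvpos : ∀ s : ℝ, 0 < s → 0 < φinv s := by
    intro s hs
    rcases lt_or_eq_of_le (hφinv_nonneg s hs.le) with h | h
    · exact h
    · exfalso
      have h2 := hφinv_right s hs.le
      rw [← h, hφ0] at h2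
      linarith
  have hφinvN : 0 < φinv N := hφinvpos N hNpos
  -- radius
  set r := (c3/k) ^ (1/d3) * (φinv N * g N) with hr_def
  clear_value r
  have hρpos : 0 < (c3/k : ℝ) ^ (1/d3) := Real.rpow_pos_of_pos (by positivity) _
  have hρle1 : (c3/k : ℝ) ^ (1/d3) ≤ 1 :=
    Real.rpow_le_one (by positivity) (by rw [div_le_one hk0]; linarith) (by positivity)
  have hrpos : 0 < r := by rw [hr_def]; positivity
  have hrlt : r < φinv N := by
    have h1 : (c3/k) ^ (1/d3) * g N < 1 :=
      lt_of_le_of_lt (mul_le_of_le_one_left hgNpos.le hρle1) hgN1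
    calc r = ((c3/k) ^ (1/d3) * g N) * φinv N := by rw [hr_def]; ring
    _ < 1 * φinv N := mul_lt_mul_of_pos_right h1 hφinvN
    _ = φinv N := one_mul _
  have hφrpos : 0 < φ r := by
    have := hφmono (le_refl (0:ℝ)) (mem_Ici.mpr hrpos.le) hrpos
    rwa [hφ0] at this
  have hγpos : 0 < g N ^ d3 := Real.rpow_pos_of_pos hgNpos _
  -- upper bound on φ r
  have hφr_ub : φ r ≤ N * g N ^ d3 / k := by
    have hg1 := (hφgrowth r (φinv N) hrpos hrlt).1
    rw [hφinv_right N hNpos.le] at hg1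
    have hratio : (r / φinv N) ^ d3 = (c3/k) * g N ^ d3 := by
      have h1 : r / φinv N = (c3/k) ^ (1/d3) * g N := by
        rw [hr_def]; field_simp
      rw [h1, Real.mul_rpow (Real.rpow_nonneg (by positivity) _) hgNpos.le,
        ← Real.rpow_mul (by positivity : (0:ℝ) ≤ c3/k), one_div_mul_cancel hd3.ne',
        Real.rpow_one]
    have hinv : (φinv N / r) ^ d3 = ((c3/k) * g N ^ d3)⁻¹ := by
      rw [← hratio, ← Real.inv_rpow (by positivity), inv_div]
    rw [hinv] at hg1
    have hg2 : k / g N ^ d3 ≤ N / φ r := by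
      have he : c3 * ((c3/k) * g N ^ d3)⁻¹ = k / g N ^ d3 := by
        field_simp
      rwa [he] at hg1
    rw [div_le_div_iff₀ hγpos hφrpos] at hg2
    rw [le_div_iff₀ hk0]
    linarith
  -- interval endpoints
  set aa := n (2*j) - n (2*i+1) with haa_def
  clear_value aa
  set bb := N - n (2*i) with hbb_def
  clear_value bb
  have haval : aa = (k*l)^j*t - k*((k*l)^i*t) := by rw [haa_def, hne j, hno i]
  have hbval : bb = k*((k*l)^j*t) - (k*l)^i*t := by rw [hbb_def, hNval, hne i]
  have hile : (k*l)^i ≤ (k*l)^(j-1) := pow_le_pow_right₀ hP1.le (by omega)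
  have halb : k*(l-1)*((k*l)^(j-1)*t) ≤ aa := by
    rw [haval]
    have h1 : k*((k*l)^i*t) ≤ k*((k*l)^(j-1)*t) :=
      mul_le_mul_of_nonneg_left (mul_le_mul_of_nonneg_right hile ht0.le) hk0.le
    have h2 : (k*l)^j*t = (k*l)^(j-1)*(k*l)*t := by rw [hpow]
    have h3 : (k*l)^(j-1)*(k*l)*t - k*((k*l)^(j-1)*t) = k*(l-1)*((k*l)^(j-1)*t) := by ring
    linarith
  have haN : N*(l-1)/(k*l) ≤ aa := by
    have he : N*(l-1)/(k*l) = k*(l-1)*((k*l)^(j-1)*t) := by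
      rw [hNval, ← hpow]; field_simp
    rw [he]; exact halb
  have hXjt : 0 < (k*l)^(j-1)*t := mul_pos (hpowpos (j-1)) ht0
  have hapos : 0 < aa := by
    have : 0 < k*(l-1)*((k*l)^(j-1)*t) := by
      apply mul_pos (mul_pos hk0 (by linarith)) hXjt
    linarith
  have hab : aa < bb := by
    rw [haval, hbval]
    have h1 : 0 < (k-1)*((k*l)^j*t) := mul_pos (by linarith) (mul_pos (hpowpos j) ht0)
    have h2 : 0 < (k-1)*((k*l)^i*t) := mul_pos (by linarith) (mul_pos (hpowpos i) ht0)
    linarith [h1, h2]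
  have hbN : bb ≤ N := by
    rw [hbb_def]
    have h1 : 0 < n (2*i) := by rw [hne i]; exact mul_pos (hpowpos i) ht0
    linarith
  set cc := N/2 with hcc_def
  clear_value cc
  have hccpos : 0 < cc := by rw [hcc_def]; positivity
  -- the two comparison constants
  set A := D * φ r with hA_def
  clear_value A
  set B := (cv1/cv2) * φ r with hB_def
  clear_value B
  have hApos : 0 < A := by rw [hA_def]; exact mul_pos hDpos hφrpos
  have hBpos : 0 < B := by rw [hB_def]; exact mul_pos (by positivity) hφrpos
  have hAa : A ≤ aa := by
    have h1 : A ≤ D*(N*(g N^d3)/k) := by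
      rw [hA_def]; exact mul_le_mul_of_nonneg_left hφr_ub hDpos.le
    have key : g N^d3 * (l*D) ≤ l-1 := by
      have h2 : g N^d3 ≤ (l-1)/(l*D) := le_trans hgNd3 hεl
      rwa [le_div_iff₀ (by positivity)] at h2
    have h3 : D*(N*(g N^d3)/k) = (N/(k*l)) * (g N^d3 * (l*D)) := by
      field_simp
    have h4 : (N/(k*l)) * (g N^d3*(l*D)) ≤ (N/(k*l)) * (l-1) :=
      mul_le_mul_of_nonneg_left key (by positivity)
    have h5 : (N/(k*l))*(l-1) = N*(l-1)/(k*l) := by ring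
    linarith
  have hBφr : B ≤ φ r := by
    rw [hB_def]; exact mul_le_of_le_one_left hφrpos.le ((div_le_one hcv2).mpr hcv12)
  have hBub : B ≤ N * g N^d3 := by
    have h1 : N * g N^d3 / k ≤ N * g N^d3 := div_le_self (by positivity) hk1.le
    exact le_trans hBφr (le_trans hφr_ub h1)
  have hBc : B < cc := by
    have h6 : N*(g N^d3) ≤ N*(1/4) :=
      mul_le_mul_of_nonneg_left (le_trans hgNd3 hε14) hNpos.le
    rw [hcc_def]
    linarith
  -- nonnegativity of the target right-hand side
  have hC1gt1 : 1 < (3/2) * (k*l/(l-1)) := by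
    have h1 : l < k*l := lt_mul_of_one_lt_left hl0 hk1
    have h2 : 1 < k*l/(l-1) := by
      rw [lt_div_iff₀ (by linarith : (0:ℝ) < l-1)]
      linarith
    linarith
  have hlogC1 : 0 ≤ Real.log ((3/2)*(k*l/(l-1))) := Real.log_nonneg hC1gt1.le
  have hInn : 0 ≤ ∫ s in p..N, 1/(s*|Real.log (g s)|) := by
    apply intervalIntegral.integral_nonneg hpN
    intro s hs
    have hs0 : 0 < s := lt_of_lt_of_le hppos hs.1
    positivity
  have hCstnn : 0 ≤ (2*(((2:ℝ)^d2*c2*(L2/L1))*(cv2/cv1)^2)/d3)*(k*l/(k*l-1))*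
      Real.log ((3/2)*(k*l/(l-1))) := by
    apply mul_nonneg (mul_nonneg (by positivity) ?_) hlogC1
    exact div_nonneg hP0.le (by linarith)
  -- apply the hitting-probability upper bound
  have Hb := hH_upper x r aa bb cc hrpos hapos hab hccpos
  refine le_trans Hb ?_
  by_cases hNint : IntervalIntegrable (fun s => u x s (2*r)) volume aa (bb+cc)
  swap
  · rw [intervalIntegral.integral_undef hNint, zero_div]
    exact mul_nonneg hCstnn hInn
  by_cases hDint : IntervalIntegrable
      (fun s => ⨅ y : {y : M // dist y x ≤ r}, u y.1 s r) volume 0 cc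
  swap
  · rw [intervalIntegral.integral_undef hDint, div_zero]
    exact mul_nonneg hCstnn hInn
  -- numerator bound
  have hacc : aa ≤ bb + cc := by linarith
  have hnum_ptw : ∀ s ∈ Icc aa (bb+cc), u x s (2*r) ≤ (L2*A) * (1/s) := by
    intro s hs
    have hs0 : 0 < s := lt_of_lt_of_le hapos hs.1
    have hφis : 0 < φinv s := hφinvpos s hs0
    have hV2r : V x (2*r) ≤ (c2*(2:ℝ)^d2) * V x r := by
      have hg2 := (hVgrowth x r (2*r) hrpos (by linarith)).2
      have h22 : (2*r)/r = 2 := by field_simp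
      rw [h22] at hg2
      exact (div_le_iff₀ (hVpos x r hrpos)).mp hg2
    have hVxr : V x r ≤ cv2 * φ r := (hVφ x r hrpos).2
    have hVs : cv1 * s ≤ V x (φinv s) := by
      have h := (hVφ x (φinv s) hφis).1
      rwa [hφinv_right s hs0.le] at h
    have hVspos : 0 < V x (φinv s) := hVpos x (φinv s) hφis
    have hac2 : V x (2*r) ≤ (c2*(2:ℝ)^d2) * (cv2 * φ r) :=
      le_trans hV2r (mul_le_mul_of_nonneg_left hVxr (by positivity))
    have hdiv : V x (2*r) / V x (φinv s) ≤ ((c2*(2:ℝ)^d2)*(cv2*φ r))/(cv1*s) :=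
      div_le_div₀ (by positivity) hac2 (by positivity) hVs
    have heq : ((c2*(2:ℝ)^d2)*(cv2*φ r))/(cv1*s) = A*(1/s) := by
      rw [hA_def, hD_def]; field_simp
    calc u x s (2*r) ≤ L2 * min 1 (V x (2*r) / V x (φinv s)) :=
          (hu x s (2*r) hs0 (by linarith)).2
    _ ≤ L2 * (V x (2*r) / V x (φinv s)) :=
          mul_le_mul_of_nonneg_left (min_le_right _ _) hL2.le
    _ ≤ L2 * (A*(1/s)) := mul_le_mul_of_nonneg_left (heq ▸ hdiv) hL2.le
    _ = (L2*A)*(1/s) := by ring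
  have hNum : (∫ s in aa..(bb+cc), u x s (2*r)) ≤
      (L2*A)*(Real.log (bb+cc) - Real.log aa) := by
    have h1 := intervalIntegral.integral_mono_on hacc hNint
      (int_integrable_cdiv' (L2*A) aa (bb+cc) hapos hacc) hnum_ptw
    rwa [log_int' (L2*A) aa (bb+cc) hapos (by linarith)] at h1
  -- denominator bound
  haveI hne_sub : Nonempty {y : M // dist y x ≤ r} := ⟨⟨x, by simp [hrpos.le]⟩⟩
  set f := fun s => ⨅ y : {y : M // dist y x ≤ r}, u y.1 s r with hf_def
  have hfnn : ∀ s, 0 ≤ f s := fun s => Real.iInf_nonneg (fun y => hu_nonneg _ _ _)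
  have hf_ptw : ∀ s ∈ Icc B cc, (L1*B)*(1/s) ≤ f s := by
    intro s hs
    have hs0 : 0 < s := lt_of_lt_of_le hBpos hs.1
    have hφis : 0 < φinv s := hφinvpos s hs0
    apply le_ciInf
    intro y
    have hVyr : cv1 * φ r ≤ V y.1 r := (hVφ y.1 r hrpos).1
    have hVys : V y.1 (φinv s) ≤ cv2 * s := by
      have h := (hVφ y.1 (φinv s) hφis).2
      rwa [hφinv_right s hs0.le] at h
    have hVyspos : 0 < V y.1 (φinv s) := hVpos y.1 (φinv s) hφis
    have hdiv : (cv1*φ r)/(cv2*s) ≤ V y.1 r / V y.1 (φinv s) :=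
      div_le_div₀ (hVpos y.1 r hrpos).le hVyr hVyspos hVys
    have heq : (cv1*φ r)/(cv2*s) = B*(1/s) := by
      rw [hB_def]; field_simp
    have hBs : B*(1/s) ≤ 1 := by
      rw [mul_one_div, div_le_one hs0]; exact hs.1
    have hmin : B*(1/s) ≤ min 1 (V y.1 r / V y.1 (φinv s)) :=
      le_min hBs (heq ▸ hdiv)
    calc (L1*B)*(1/s) = L1*(B*(1/s)) := by ring
    _ ≤ L1 * min 1 (V y.1 r / V y.1 (φinv s)) := mul_le_mul_of_nonneg_left hmin hL1.le
    _ ≤ u y.1 s r := (hu y.1 s r hs0 hrpos).1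
  have hBmem : B ∈ uIcc (0:ℝ) cc := by
    rw [uIcc_of_le hccpos.le]
    exact ⟨hBpos.le, hBc.le⟩
  have hint1 : IntervalIntegrable f volume 0 B :=
    hDint.mono_set (uIcc_subset_uIcc left_mem_uIcc hBmem)
  have hint2 : IntervalIntegrable f volume B cc :=
    hDint.mono_set (uIcc_subset_uIcc hBmem right_mem_uIcc)
  have hsplit := intervalIntegral.integral_add_adjacent_intervals hint1 hint2
  have h0B : 0 ≤ ∫ s in (0:ℝ)..B, f s :=
    intervalIntegral.integral_nonneg hBpos.le (fun s _ => hfnn s)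
  have hlow : (L1*B)*(Real.log cc - Real.log B) ≤ ∫ s in B..cc, f s := by
    have h1 := intervalIntegral.integral_mono_on hBc.le
      (int_integrable_cdiv' (L1*B) B cc hBpos hBc.le) hint2 hf_ptw
    rwa [log_int' (L1*B) B cc hBpos hccpos] at h1
  have hDen : (L1*B)*(Real.log cc - Real.log B) ≤ ∫ s in (0:ℝ)..cc, f s := by
    rw [← hsplit]; linarith
  have hYpos : 0 < Real.log cc - Real.log B := sub_pos.mpr (Real.log_lt_log hBpos hBc)
  have hDenpos : 0 < (L1*B)*(Real.log cc - Real.log B) := by positivity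
  have hXnn : 0 ≤ Real.log (bb+cc) - Real.log aa := by
    have h := Real.log_le_log hapos hacc
    linarith
  have hNumnn : 0 ≤ (L2*A)*(Real.log (bb+cc) - Real.log aa) := by positivity
  have hfrac : (∫ s in aa..(bb+cc), u x s (2*r)) / (∫ s in (0:ℝ)..cc, f s) ≤
      ((L2*A)*(Real.log (bb+cc) - Real.log aa)) / ((L1*B)*(Real.log cc - Real.log B)) :=
    div_le_div₀ hNumnn hNum hDenpos hDen
  refine le_trans hfrac ?_
  -- final arithmetic
  set Λ := -Real.log (g N) with hΛ_def
  clear_value Λ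
  have hΛpos : 0 < Λ := by
    have h := Real.log_neg hgNpos hgN1
    rw [hΛ_def]; linarith
  -- upper bound for log((bb+cc)/aa)
  have hNlk_pos : 0 < N*(l-1)/(k*l) := div_pos (mul_pos hNpos (by linarith)) hP0
  have hX : Real.log (bb+cc) - Real.log aa ≤ Real.log ((3/2)*(k*l/(l-1))) := by
    have hbccub : bb + cc ≤ (3/2)*N := by rw [hcc_def] at *; linarith
    have h1 : Real.log (bb+cc) ≤ Real.log ((3/2)*N) :=
      Real.log_le_log (by linarith) hbccub
    have h2 : Real.log (N*(l-1)/(k*l)) ≤ Real.log aa := Real.log_le_log hNlk_pos haN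
    have h4 := Real.log_div (show ((3/2)*N : ℝ) ≠ 0 by positivity) hNlk_pos.ne'
    have h3 : ((3/2)*N)/(N*(l-1)/(k*l)) = (3/2)*(k*l/(l-1)) := by
      field_simp [hNpos.ne', sub_ne_zero.mpr hl1.ne']
    rw [h3] at h4
    linarith
  -- lower bound for log(cc/B)
  have hY : d3*Λ/2 ≤ Real.log cc - Real.log B := by
    have hcB : (g N^d3)⁻¹/2 ≤ cc/B := by
      have h5 : cc/(N*(g N^d3)) ≤ cc/B :=
        div_le_div_of_nonneg_left hccpos.le hBpos hBub
      have h6 : cc/(N*(g N^d3)) = (g N^d3)⁻¹/2 := by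
        rw [hcc_def]; field_simp
      linarith
    have h7 : Real.log ((g N^d3)⁻¹/2) ≤ Real.log (cc/B) :=
      Real.log_le_log (by positivity) hcB
    have h8 : Real.log (cc/B) = Real.log cc - Real.log B :=
      Real.log_div hccpos.ne' hBpos.ne'
    have h9 : Real.log ((g N^d3)⁻¹/2) = d3*Λ - Real.log 2 := by
      rw [Real.log_div (by positivity) two_ne_zero, Real.log_inv, Real.log_rpow hgNpos,
        hΛ_def]
      ring
    have h10 : 2*Real.log 2 ≤ d3*Λ := by
      have h11 : Real.log (g N^d3) ≤ Real.log ((1:ℝ)/4) :=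
        Real.log_le_log hγpos (le_trans hgNd3 hε14)
      rw [Real.log_rpow hgNpos] at h11
      have h12 : Real.log ((1:ℝ)/4) = -(2*Real.log 2) := by
        rw [Real.log_div one_ne_zero (by norm_num), Real.log_one,
          show (4:ℝ) = 2^2 by norm_num, Real.log_pow]
        push_cast; ring
      rw [h12] at h11
      have h13 : d3*Λ = -(d3*Real.log (g N)) := by rw [hΛ_def]; ring
      linarith
    rw [h9, h8] at h7
    linarith
  -- lower bound for the right-hand integral
  have hq : (k*l-1)/(k*l) ≤ Real.log (k*l) := log_lb' (k*l) hP1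
  have huIoc : Set.uIoc p N = Ioc p N := uIoc_of_le hpN
  have hgae : AEMeasurable g (volume.restrict (Set.uIoc p N)) := by
    rw [huIoc]
    exact aemeasurable_restrict_of_antitoneOn measurableSet_Ioc
      (hg_anti.mono (fun s hs => lt_trans hppos hs.1))
  have hm1 : AEMeasurable (fun s => s*|Real.log (g s)|) (volume.restrict (Set.uIoc p N)) :=
    aemeasurable_id.mul (measurable_abs.comp_aemeasurable (Real.measurable_log.comp_aemeasurable hgae))
  have hGsm : AEStronglyMeasurable (fun s => 1/(s*|Real.log (g s)|))
      (volume.restrict (Set.uIoc p N)) := by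
    simp only [one_div]
    exact hm1.inv.aestronglyMeasurable
  have hgp1 : g p < 1 :=
    lt_of_le_of_lt (hg_anti (mem_Ioi.mpr ht0) (mem_Ioi.mpr hppos) htp) hgt1
  have hgppos : 0 < g p := hg_pos p hppos
  have hΛp : 0 < -Real.log (g p) := by
    have := Real.log_neg hgppos hgp1; linarith
  have hbound : ∀ s ∈ Set.uIoc p N,
      ‖1/(s*|Real.log (g s)|)‖ ≤ ‖1/(p*(-Real.log (g p)))‖ := by
    intro s hs
    rw [huIoc] at hs
    have hs0 : p < s := hs.1
    have hsp : 0 < s := lt_trans hppos hs0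
    have hgsp : g s ≤ g p := hg_anti (mem_Ioi.mpr hppos) (mem_Ioi.mpr hsp) hs0.le
    have hgs1 : g s < 1 := lt_of_le_of_lt hgsp hgp1
    have hgspos : 0 < g s := hg_pos s hsp
    have hlgs := Real.log_neg hgspos hgs1
    have habs : |Real.log (g s)| = -Real.log (g s) := abs_of_neg hlgs
    have hmono : -Real.log (g p) ≤ -Real.log (g s) := by
      have := Real.log_le_log hgspos hgsp
      linarith
    have hprod : p*(-Real.log (g p)) ≤ s*|Real.log (g s)| := by
      rw [habs]
      exact mul_le_mul hs0.le hmono hΛp.le hsp.le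
    have hn1 : (0:ℝ) ≤ 1/(s*|Real.log (g s)|) :=
      one_div_nonneg.mpr (mul_nonneg hsp.le (abs_nonneg _))
    have hn2 : (0:ℝ) ≤ 1/(p*(-Real.log (g p))) :=
      one_div_nonneg.mpr (mul_nonneg hppos.le hΛp.le)
    rw [Real.norm_eq_abs, Real.norm_eq_abs, abs_of_nonneg hn1, abs_of_nonneg hn2]
    exact one_div_le_one_div_of_le (mul_pos hppos hΛp) hprod
  have hGint : IntervalIntegrable (fun s => 1/(s*|Real.log (g s)|)) volume p N :=
    (intervalIntegrable_const (c := 1/(p*(-Real.log (g p))))).mono_fun hGsm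
      (ae_restrict_of_forall_mem measurableSet_uIoc hbound)
  have hptw2 : ∀ s ∈ Icc p N, (1/Λ)*(1/s) ≤ 1/(s*|Real.log (g s)|) := by
    intro s hs
    have hs0 : 0 < s := lt_of_lt_of_le hppos hs.1
    have hgsp : g s ≤ g p := hg_anti (mem_Ioi.mpr hppos) (mem_Ioi.mpr hs0) hs.1
    have hgs1 : g s < 1 := lt_of_le_of_lt hgsp hgp1
    have hgspos : 0 < g s := hg_pos s hs0
    have hgNs : g N ≤ g s := hg_anti (mem_Ioi.mpr hs0) (mem_Ioi.mpr hNpos) hs.2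
    have habs : |Real.log (g s)| = -Real.log (g s) := abs_of_neg (Real.log_neg hgspos hgs1)
    have habspos : 0 < |Real.log (g s)| := by
      rw [habs]; have := Real.log_neg hgspos hgs1; linarith
    have hmono2 : |Real.log (g s)| ≤ Λ := by
      rw [habs, hΛ_def]
      have := Real.log_le_log hgNpos hgNs
      linarith
    have he : (1/Λ)*(1/s) = 1/(s*Λ) := by ring
    rw [he]
    apply one_div_le_one_div_of_le (mul_pos hs0 habspos)
    exact mul_le_mul_of_nonneg_left hmono2 hs0.le
  have hIlb : Real.log (k*l)/Λ ≤ ∫ s in p..N, 1/(s*|Real.log (g s)|) := by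
    have h1 := intervalIntegral.integral_mono_on hpN
      (int_integrable_cdiv' (1/Λ) p N hppos hpN) hGint hptw2
    rw [log_int' (1/Λ) p N hppos hNpos] at h1
    have h2 : Real.log N - Real.log p = Real.log (k*l) := by
      rw [← Real.log_div hNpos.ne' hppos.ne']
      congr 1
      rw [hNp]
      field_simp
    rw [h2] at h1
    have h3 : (1/Λ)*Real.log (k*l) = Real.log (k*l)/Λ := by ring
    linarith
  have hqq : 1 ≤ (k*l/(k*l-1))*Real.log (k*l) := by
    have h14 : (k*l/(k*l-1))*((k*l-1)/(k*l)) = 1 := by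
      field_simp [hP0.ne', sub_ne_zero.mpr hP1.ne']
    calc (1:ℝ) = (k*l/(k*l-1))*((k*l-1)/(k*l)) := h14.symm
    _ ≤ (k*l/(k*l-1))*Real.log (k*l) :=
        mul_le_mul_of_nonneg_left hq (div_nonneg hP0.le (by linarith))
  have hK3nn : 0 ≤ ((2:ℝ)^d2*c2*(L2/L1))*(cv2/cv1)^2 := by positivity
  calc ((L2*A)*(Real.log (bb+cc) - Real.log aa)) / ((L1*B)*(Real.log cc - Real.log B))
      = (((2:ℝ)^d2*c2*(L2/L1))*(cv2/cv1)^2) *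
        ((Real.log (bb+cc) - Real.log aa)/(Real.log cc - Real.log B)) := by
        have eAB : (L2*A)/(L1*B) = ((2:ℝ)^d2*c2*(L2/L1))*(cv2/cv1)^2 := by
          rw [hA_def, hB_def, hD_def]
          field_simp
        rw [← eAB, div_mul_div_comm]
  _ ≤ (((2:ℝ)^d2*c2*(L2/L1))*(cv2/cv1)^2) *
        (Real.log ((3/2)*(k*l/(l-1)))/(d3*Λ/2)) :=
      mul_le_mul_of_nonneg_left
        (div_le_div₀ hlogC1 hX (div_pos (mul_pos hd3 hΛpos) two_pos) hY) hK3nn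
  _ ≤ ((2*(((2:ℝ)^d2*c2*(L2/L1))*(cv2/cv1)^2)/d3)*(k*l/(k*l-1))*
        Real.log ((3/2)*(k*l/(l-1)))) * (Real.log (k*l)/Λ) := by
      have hC0 : 0 ≤ (2*(((2:ℝ)^d2*c2*(L2/L1))*(cv2/cv1)^2)/d3)*
          Real.log ((3/2)*(k*l/(l-1)))*(1/Λ) := by positivity
      have e1 : (((2:ℝ)^d2*c2*(L2/L1))*(cv2/cv1)^2) *
          (Real.log ((3/2)*(k*l/(l-1)))/(d3*Λ/2)) =
          (2*(((2:ℝ)^d2*c2*(L2/L1))*(cv2/cv1)^2)/d3)*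
          Real.log ((3/2)*(k*l/(l-1)))*(1/Λ) := by
        field_simp
      have e2 : ((2*(((2:ℝ)^d2*c2*(L2/L1))*(cv2/cv1)^2)/d3)*(k*l/(k*l-1))*
          Real.log ((3/2)*(k*l/(l-1)))) * (Real.log (k*l)/Λ) =
          ((2*(((2:ℝ)^d2*c2*(L2/L1))*(cv2/cv1)^2)/d3)*
          Real.log ((3/2)*(k*l/(l-1)))*(1/Λ)) * ((k*l/(k*l-1))*Real.log (k*l)) := by
        ring
      rw [e1, e2]
      exact le_mul_of_one_le_right hC0 hqq
  _ ≤ ((2*(((2:ℝ)^d2*c2*(L2/L1))*(cv2/cv1)^2)/d3)*(k*l/(k*l-1))*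
        Real.log ((3/2)*(k*l/(l-1)))) * ∫ s in p..N, 1/(s*|Real.log (g s)|) :=
      mul_le_mul_of_nonneg_left hIlb hCstnn
end

section
/- Set K1 := 2^{d2}·c2·L2/L1 and, for c > 1 and t > 0, R_{c,t} := inf{g(u)/g(v) : 1 ≤ u/v ≤ c, v ≥ t}. For each c ∈ (1,2) there exists T_c > 0 (depending only on c, g and the structural constants) such that for all t ≥ T_c with R_{c,t} > 0, setting n_k := t·c^k for integers k ≥ 0, one has for every x ∈ M and every k ≥ 0: Q(x, n_k, n_{k+1}) ≤ (K1·c2/c3^{d2/d3})·(c^{1+d2/d3}/R_{c,t}^{d2})·∫_{n_k}^{n_{k+1}} [V(x, φ⁻¹(u)·g(u)) / (φ(φ⁻¹(u)·g(u))·V(x,φ⁻¹(u)))] du. -/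
open Real Set MeasureTheory

set_option maxHeartbeats 1000000 in
/-- (transient case) upper bound for the bottom crossing probability
over one dyadic-type block `(n_k, n_{k+1}]` (Lemma 5.1 / `lem:hit-prob-1`). -/
theorem transient_block_upper
    {M : Type*} [MetricSpace M]
    (V : M → ℝ → ℝ) (c1 c2 d1 d2 : ℝ)
    (hc1 : 0 < c1) (hc1' : c1 ≤ 1) (hc2 : 1 ≤ c2) (hd1 : 0 < d1) (hd12 : d1 ≤ d2)
    (hVpos : ∀ (x : M) (r : ℝ), 0 < r → 0 < V x r)
    (hVmono : ∀ x : M, MonotoneOn (V x) (Ioi (0:ℝ)))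
    (hVgrowth : ∀ (x : M) (r R : ℝ), 0 < r → r < R →
      c1 * (R / r) ^ d1 ≤ V x R / V x r ∧ V x R / V x r ≤ c2 * (R / r) ^ d2)
    (φ φinv : ℝ → ℝ) (c3 c4 d3 d4 : ℝ)
    (hc3 : 0 < c3) (hc3' : c3 ≤ 1) (hc4 : 1 ≤ c4) (hd3 : 0 < d3) (hd34 : d3 ≤ d4)
    (hφ0 : φ 0 = 0)
    (hφmono : StrictMonoOn φ (Ici (0:ℝ)))
    (hφcont : ContinuousOn φ (Ici (0:ℝ)))
    (hφsurj : ∀ y : ℝ, 0 ≤ y → ∃ x : ℝ, 0 ≤ x ∧ φ x = y)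
    (hφinv_nonneg : ∀ y : ℝ, 0 ≤ y → 0 ≤ φinv y)
    (hφinv_right : ∀ y : ℝ, 0 ≤ y → φ (φinv y) = y)
    (hφinv_left : ∀ x : ℝ, 0 ≤ x → φinv (φ x) = x)
    (hφgrowth : ∀ r R : ℝ, 0 < r → r < R →
      c3 * (R / r) ^ d3 ≤ φ R / φ r ∧ φ R / φ r ≤ c4 * (R / r) ^ d4)
    (u : M → ℝ → ℝ → ℝ) (L1 L2 : ℝ) (hL1 : 0 < L1) (hL12 : L1 ≤ L2)
    (hu_nonneg : ∀ (x : M) (t r : ℝ), 0 ≤ u x t r)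
    (hu : ∀ (x : M) (t r : ℝ), 0 < t → 0 < r →
      L1 * min 1 (V x r / V x (φinv t)) ≤ u x t r ∧
      u x t r ≤ L2 * min 1 (V x r / V x (φinv t)))
    (H : M → ℝ → ℝ → ℝ → ℝ)
    (hH_nonneg : ∀ (x : M) (r a b : ℝ), 0 ≤ H x r a b)
    (hH_upper : ∀ (x : M) (r a b c : ℝ), 0 < r → 0 < a → a < b → 0 < c →
      H x r a b ≤ (∫ t in a..(b + c), u x t (2 * r)) /
        (∫ t in (0:ℝ)..c, ⨅ y : {y : M // dist y x ≤ r}, u y.1 t r))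
    (g : ℝ → ℝ) (hg_pos : ∀ t : ℝ, 0 < t → 0 < g t)
    (hg_anti : AntitoneOn g (Ioi (0:ℝ)))
    (hg_lim : Filter.Tendsto g Filter.atTop (nhds 0))
    (Q : M → ℝ → ℝ → ℝ)
    (hQ_nonneg : ∀ (x : M) (a b : ℝ), 0 ≤ Q x a b)
    (hQ : ∀ (x : M) (a b ρ : ℝ), 0 < a → a < b → 0 < ρ →
      (∀ s : ℝ, a < s → s ≤ b → φinv s * g s ≤ ρ) → Q x a b ≤ H x ρ a b) :
    ∀ c : ℝ, 1 < c → c < 2 →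
      ∃ T : ℝ, 0 < T ∧ ∀ t : ℝ, T ≤ t →
        ∀ Rct : ℝ,
          Rct = sInf {w : ℝ | ∃ s v : ℝ, t ≤ v ∧ 1 ≤ s / v ∧ s / v ≤ c ∧ w = g s / g v} →
          0 < Rct →
          ∀ (x : M) (k : ℕ),
            Q x (t * c ^ k) (t * c ^ (k + 1)) ≤
              (((2:ℝ) ^ d2 * c2 * L2 / L1) * c2 / c3 ^ (d2 / d3)) *
                (c ^ (1 + d2 / d3) / Rct ^ d2) *
                ∫ s in (t * c ^ k)..(t * c ^ (k + 1)),
                  V x (φinv s * g s) / (φ (φinv s * g s) * V x (φinv s)) := by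
  intro c hc hcc2
  have hc0 : (0:ℝ) < c := lt_trans one_pos hc
  have hd3ne : d3 ≠ 0 := ne_of_gt hd3
  have hd2pos : (0:ℝ) < d2 := lt_of_lt_of_le hd1 hd12
  have hc2pos : (0:ℝ) < c2 := lt_of_lt_of_le one_pos hc2
  have hL2 : (0:ℝ) < L2 := lt_of_lt_of_le hL1 hL12
  have hc1sq : (0:ℝ) < (c - 1)^2 := pow_pos (by linarith) 2
  have hbase_pos : 0 < c3 * (c-1)^2 / c := by positivity
  set ε : ℝ := min (1/2) ((c3 * (c-1)^2 / c) ^ (1/d3)) with hεdef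
  have hεpos : 0 < ε := lt_min (by norm_num) (Real.rpow_pos_of_pos hbase_pos _)
  obtain ⟨T0, hT0⟩ := Filter.eventually_atTop.mp (hg_lim.eventually_lt_const hεpos)
  refine ⟨max T0 1, lt_of_lt_of_le one_pos (le_max_right _ _), ?_⟩
  intro t ht Rct hRct hRpos x k
  -- basic positivity facts
  have ht1 : (1:ℝ) ≤ t := le_trans (le_max_right T0 1) ht
  have ht0 : (0:ℝ) < t := lt_of_lt_of_le one_pos ht1
  set a : ℝ := t * c ^ k with ha_def
  set b : ℝ := t * c ^ (k+1) with hb_def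
  have hck1 : (1:ℝ) ≤ c ^ k := one_le_pow₀ hc.le
  have hck0 : (0:ℝ) < c ^ k := lt_of_lt_of_le one_pos hck1
  have ha0 : 0 < a := mul_pos ht0 hck0
  have hta : t ≤ a := by
    rw [ha_def]; exact le_mul_of_one_le_right ht0.le hck1
  have hga_ε : g a < ε := hT0 a (le_trans (le_trans (le_max_left T0 1) ht) hta)
  have hb_eq : b = a * c := by rw [ha_def, hb_def, pow_succ]; ring
  have hab : a < b := by rw [hb_eq]; exact lt_mul_of_one_lt_right ha0 hc
  have hb0 : 0 < b := lt_trans ha0 hab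
  have hba_div : b / a = c := by rw [hb_eq]; field_simp
  have hga0 : 0 < g a := hg_pos a ha0
  have hgb0 : 0 < g b := hg_pos b hb0
  have hgba : g b ≤ g a := hg_anti (mem_Ioi.mpr ha0) (mem_Ioi.mpr hb0) hab.le
  have hga1 : g a < 1 := lt_of_lt_of_le hga_ε (le_trans (min_le_left _ _) (by norm_num))
  -- φ and φinv facts
  have hφmonoOn : MonotoneOn φ (Ici (0:ℝ)) := hφmono.monotoneOn
  have hφpos : ∀ r : ℝ, 0 < r → 0 < φ r := by
    intro r hr
    have := hφmono (mem_Ici.mpr (le_refl (0:ℝ))) (mem_Ici.mpr hr.le) hr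
    rwa [hφ0] at this
  have hφinvmono : ∀ p q : ℝ, 0 ≤ p → p ≤ q → φinv p ≤ φinv q := by
    intro p q hp hpq
    by_contra hlt
    push_neg at hlt
    have := hφmono (mem_Ici.mpr (hφinv_nonneg q (hp.trans hpq))) (mem_Ici.mpr (hφinv_nonneg p hp)) hlt
    rw [hφinv_right p hp, hφinv_right q (hp.trans hpq)] at this
    linarith
  have hφinvpos : ∀ s : ℝ, 0 < s → 0 < φinv s := by
    intro s hs
    rcases (hφinv_nonneg s hs.le).lt_or_eq with h | h
    · exact h
    · exfalso
      have h2 := hφinv_right s hs.le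
      rw [← h, hφ0] at h2
      linarith
  have hφinva0 : 0 < φinv a := hφinvpos a ha0
  have hφinvb0 : 0 < φinv b := hφinvpos b hb0
  have hφinvab : φinv a < φinv b := by
    rcases lt_or_ge (φinv a) (φinv b) with h | h
    · exact h
    · exfalso
      have := hφmonoOn (mem_Ici.mpr hφinvb0.le) (mem_Ici.mpr hφinva0.le) h
      rw [hφinv_right a ha0.le, hφinv_right b hb0.le] at this
      linarith
  -- the radii
  set ρ : ℝ := φinv b * g a with hρdef
  set ρ' : ℝ := φinv a * g b with hρ'def
  have hρ0 : 0 < ρ := mul_pos hφinvb0 hga0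
  have hρ'0 : 0 < ρ' := mul_pos hφinva0 hgb0
  have hρ'ρ : ρ' < ρ := by
    have h1 : φinv a * g b < φinv b * g b := mul_lt_mul_of_pos_right hφinvab hgb0
    have h2 : φinv b * g b ≤ φinv b * g a := mul_le_mul_of_nonneg_left hgba hφinvb0.le
    rw [hρ'def, hρdef]; linarith
  have hArg : ∀ s, a ≤ s → s ≤ b → ρ' ≤ φinv s * g s ∧ φinv s * g s ≤ ρ := by
    intro s hs1 hs2
    have hs0 : 0 < s := lt_of_lt_of_le ha0 hs1
    have h1 : φinv a ≤ φinv s := hφinvmono a s ha0.le hs1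
    have h2 : φinv s ≤ φinv b := hφinvmono s b hs0.le hs2
    have h3 : g b ≤ g s := hg_anti (mem_Ioi.mpr hs0) (mem_Ioi.mpr hb0) hs2
    have h4 : g s ≤ g a := hg_anti (mem_Ioi.mpr ha0) (mem_Ioi.mpr hs0) hs1
    have hgs0 : 0 < g s := hg_pos s hs0
    have hφs0 : 0 ≤ φinv s := (hφinvpos s hs0).le
    constructor
    · calc ρ' = φinv a * g b := rfl
        _ ≤ φinv s * g s := mul_le_mul h1 h3 hgb0.le hφs0
    · calc φinv s * g s ≤ φinv b * g a := mul_le_mul h2 h4 hgs0.le hφinvb0.le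
        _ = ρ := rfl
  set c' : ℝ := φ ρ with hc'def
  have hc'0 : 0 < c' := hφpos ρ hρ0
  have hρltφinvb : ρ < φinv b := by
    rw [hρdef]; exact mul_lt_of_lt_one_right hφinvb0 hga1
  -- c' is small:  c' ≤ (c-1)(b-a)
  have hgad3 : g a ^ d3 ≤ c3 * (c-1)^2 / c := by
    have h1 : g a ≤ (c3*(c-1)^2/c) ^ (1/d3) := le_trans hga_ε.le (min_le_right _ _)
    have h2 : g a ^ d3 ≤ ((c3*(c-1)^2/c)^(1/d3))^d3 := Real.rpow_le_rpow hga0.le h1 hd3.le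
    rwa [← Real.rpow_mul hbase_pos.le, one_div, inv_mul_cancel₀ hd3ne, Real.rpow_one] at h2
  have hgad3pos : 0 < g a ^ d3 := Real.rpow_pos_of_pos hga0 d3
  have hφρ_le : c' ≤ b * g a ^ d3 / c3 := by
    have hgrow := (hφgrowth ρ (φinv b) hρ0 hρltφinvb).1
    rw [hφinv_right b hb0.le] at hgrow
    have hratio : φinv b / ρ = (g a)⁻¹ := by
      rw [hρdef]; field_simp
    rw [hratio, Real.inv_rpow hga0.le, ← div_eq_mul_inv, div_le_div_iff₀ hgad3pos hc'0] at hgrow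
    rw [le_div_iff₀ hc3]
    linarith only [hgrow]
  have hc'small : c' ≤ (c - 1) * (b - a) := by
    have h1 : b * (g a ^ d3) / c3 ≤ b * (c3 * (c-1)^2 / c) / c3 := by
      gcongr
    have h2 : b * (c3 * (c-1)^2 / c) / c3 = (c-1) * (b - a) := by
      have ha_eq : a = b / c := by rw [hb_eq]; field_simp
      rw [ha_eq]; field_simp
    linarith
  -- Rct bound
  have hRct_le : Rct ≤ g b / g a := by
    rw [hRct]
    apply csInf_le
    · refine ⟨0, fun w hw => ?_⟩
      obtain ⟨s, v, hv, h1, h2, rfl⟩ := hw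
      have hv0 : 0 < v := lt_of_lt_of_le ht0 hv
      have hs0 : 0 < s := lt_of_lt_of_le hv0 ((one_le_div hv0).mp h1)
      exact (div_pos (hg_pos s hs0) (hg_pos v hv0)).le
    · exact ⟨b, a, hta, by rw [hba_div]; exact hc.le, by rw [hba_div], rfl⟩
  have hφfrac : φinv b / φinv a ≤ (c/c3) ^ (1/d3) := by
    have hgrow := (hφgrowth (φinv a) (φinv b) hφinva0 hφinvab).1
    rw [hφinv_right a ha0.le, hφinv_right b hb0.le, hba_div] at hgrow
    have h1 : (φinv b/φinv a) ^ d3 ≤ c / c3 := by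
      rw [le_div_iff₀ hc3]; linarith only [hgrow]
    have h2 : ((φinv b/φinv a) ^ d3) ^ (1/d3) ≤ (c/c3) ^ (1/d3) :=
      Real.rpow_le_rpow (Real.rpow_nonneg (div_nonneg hφinvb0.le hφinva0.le) _) h1 (by positivity)
    rwa [← Real.rpow_mul (div_nonneg hφinvb0.le hφinva0.le), mul_one_div, div_self hd3ne,
      Real.rpow_one] at h2
  have hRinv : g a / g b ≤ Rct⁻¹ := by
    have h2 : (g b / g a)⁻¹ ≤ Rct⁻¹ := inv_anti₀ hRpos hRct_le
    rwa [inv_div] at h2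
  have hρfrac : ρ / ρ' ≤ (c/c3)^(1/d3) * Rct⁻¹ := by
    have heq : ρ / ρ' = (φinv b / φinv a) * (g a / g b) := by
      rw [hρdef, hρ'def]; field_simp
    rw [heq]
    exact mul_le_mul hφfrac hRinv (div_nonneg hga0.le hgb0.le)
      (Real.rpow_nonneg (by positivity) _)
  have hX : (ρ/ρ')^d2 ≤ c^(d2/d3) / (c3^(d2/d3) * Rct^d2) := by
    have h1 : (ρ/ρ')^d2 ≤ ((c/c3)^(1/d3) * Rct⁻¹)^d2 :=
      Real.rpow_le_rpow (by positivity) hρfrac hd2pos.le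
    have h2 : ((c/c3)^(1/d3) * Rct⁻¹)^d2 = c^(d2/d3) / (c3^(d2/d3) * Rct^d2) := by
      rw [Real.mul_rpow (by positivity) (by positivity), ← Real.rpow_mul (by positivity),
        Real.inv_rpow hRpos.le, Real.div_rpow hc0.le hc3.le]
      rw [show (1/d3) * d2 = d2/d3 by ring, ← div_eq_mul_inv, div_div]
    linarith
  have hXnonneg : 0 ≤ (ρ/ρ')^d2 := Real.rpow_nonneg (by positivity) _
  -- the target integrand
  set Tg : ℝ → ℝ := fun s => V x (φinv s * g s) / (φ (φinv s * g s) * V x (φinv s)) with hTgdef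
  have hTg_nonneg : ∀ s ∈ Icc a b, 0 ≤ Tg s := by
    intro s hs
    have h := hArg s hs.1 hs.2
    have hA0 : 0 < φinv s * g s := lt_of_lt_of_le hρ'0 h.1
    have hs0 : 0 < s := lt_of_lt_of_le ha0 hs.1
    exact div_nonneg (hVpos x _ hA0).le
      (mul_nonneg (hφpos _ hA0).le (hVpos x _ (hφinvpos s hs0)).le)
  have hITg_nonneg : 0 ≤ ∫ s in a..b, Tg s := intervalIntegral.integral_nonneg hab.le hTg_nonneg
  have hCst_pos : 0 < (((2:ℝ) ^ d2 * c2 * L2 / L1) * c2 / c3 ^ (d2 / d3)) *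
      (c ^ (1 + d2 / d3) / Rct ^ d2) := by
    have h1 : (0:ℝ) < (2:ℝ)^d2 := Real.rpow_pos_of_pos two_pos _
    have h2 : (0:ℝ) < c3 ^ (d2/d3) := Real.rpow_pos_of_pos hc3 _
    have h3 : (0:ℝ) < c ^ (1 + d2/d3) := Real.rpow_pos_of_pos hc0 _
    have h4 : (0:ℝ) < Rct ^ d2 := Real.rpow_pos_of_pos hRpos _
    exact mul_pos (div_pos (mul_pos (div_pos (mul_pos (mul_pos h1 hc2pos) hL2) hL1) hc2pos) h2)
      (div_pos h3 h4)
  -- reduce to the hitting-probability bound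
  have hstep1 : Q x a b ≤ H x ρ a b :=
    hQ x a b ρ ha0 hab hρ0 (fun s hs1 hs2 => (hArg s hs1.le hs2).2)
  have hstep2 : H x ρ a b ≤ (∫ τ in a..(b + c'), u x τ (2*ρ)) /
      (∫ τ in (0:ℝ)..c', ⨅ y : {y : M // dist y x ≤ ρ}, u y.1 τ ρ) :=
    hH_upper x ρ a b c' hρ0 ha0 hab hc'0
  refine le_trans (le_trans hstep1 hstep2) ?_
  -- integrability of the target integrand, via clamped (hence measurable) versions
  have hclamp_eq : ∀ r lo hi : ℝ, lo ≤ r → r ≤ hi → min (max r lo) hi = r := by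
    intro r lo hi h1 h2
    rw [max_eq_left h1, min_eq_left h2]
  have hclamp_mem : ∀ s : ℝ, min (max s a) b ∈ Icc a b :=
    fun s => ⟨le_min (le_max_right s a) hab.le, min_le_right _ _⟩
  have hclamp_mono : Monotone (fun s : ℝ => min (max s a) b) :=
    fun p q h => min_le_min (max_le_max h le_rfl) le_rfl
  set m1 : ℝ → ℝ := fun s => φinv (min (max s a) b) with hm1def
  set m2 : ℝ → ℝ := fun s => g (min (max s a) b) with hm2def
  have hm1mono : Monotone m1 := fun p q h =>
    hφinvmono _ _ (le_trans ha0.le (hclamp_mem p).1) (hclamp_mono h)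
  have hm2anti : Antitone m2 := fun p q h =>
    hg_anti (mem_Ioi.mpr (lt_of_lt_of_le ha0 (hclamp_mem p).1))
      (mem_Ioi.mpr (lt_of_lt_of_le ha0 (hclamp_mem q).1)) (hclamp_mono h)
  have hm1mem : ∀ s, m1 s ∈ Icc (φinv a) (φinv b) := fun s =>
    ⟨hφinvmono _ _ ha0.le (hclamp_mem s).1,
     hφinvmono _ _ (le_trans ha0.le (hclamp_mem s).1) (hclamp_mem s).2⟩
  have hm2mem : ∀ s, m2 s ∈ Icc (g b) (g a) := fun s =>
    ⟨hg_anti (mem_Ioi.mpr (lt_of_lt_of_le ha0 (hclamp_mem s).1)) (mem_Ioi.mpr hb0)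
        (hclamp_mem s).2,
     hg_anti (mem_Ioi.mpr ha0) (mem_Ioi.mpr (lt_of_lt_of_le ha0 (hclamp_mem s).1))
        (hclamp_mem s).1⟩
  have hm1pos : ∀ s, 0 < m1 s := fun s => lt_of_lt_of_le hφinva0 (hm1mem s).1
  have hm2pos : ∀ s, 0 < m2 s := fun s => lt_of_lt_of_le hgb0 (hm2mem s).1
  set q0 : ℝ → ℝ := fun s => m1 s * m2 s with hq0def
  have hq0meas : Measurable q0 := hm1mono.measurable.mul hm2anti.measurable
  have hq0mem : ∀ s, q0 s ∈ Icc ρ' ρ := fun s =>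
    ⟨mul_le_mul (hm1mem s).1 (hm2mem s).1 hgb0.le (hm1pos s).le,
     mul_le_mul (hm1mem s).2 (hm2mem s).2 (hm2pos s).le hφinvb0.le⟩
  have hq0pos : ∀ s, 0 < q0 s := fun s => lt_of_lt_of_le hρ'0 (hq0mem s).1
  set Vc : ℝ → ℝ := fun r => V x (min (max r ρ') ρ) with hVcdef
  have hVcmono : Monotone Vc := by
    intro p q h
    have hp : 0 < min (max p ρ') ρ := lt_of_lt_of_le hρ'0 (le_min (le_max_right p ρ') hρ'ρ.le)
    have hq : 0 < min (max q ρ') ρ := lt_of_lt_of_le hρ'0 (le_min (le_max_right q ρ') hρ'ρ.le)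
    exact hVmono x (mem_Ioi.mpr hp) (mem_Ioi.mpr hq)
      (min_le_min (max_le_max h le_rfl) le_rfl)
  set Wc : ℝ → ℝ := fun r => V x (min (max r (φinv a)) (φinv b)) with hWcdef
  have hWcmono : Monotone Wc := by
    intro p q h
    have hp : 0 < min (max p (φinv a)) (φinv b) :=
      lt_of_lt_of_le hφinva0 (le_min (le_max_right p _) hφinvab.le)
    have hq : 0 < min (max q (φinv a)) (φinv b) :=
      lt_of_lt_of_le hφinva0 (le_min (le_max_right q _) hφinvab.le)
    exact hVmono x (mem_Ioi.mpr hp) (mem_Ioi.mpr hq)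
      (min_le_min (max_le_max h le_rfl) le_rfl)
  set φc : ℝ → ℝ := fun r => φ (min (max r ρ') ρ) with hφcdef
  have hφccont : Continuous φc := by
    apply hφcont.comp_continuous
    · exact (continuous_id.max continuous_const).min continuous_const
    · intro r
      exact mem_Ici.mpr (le_trans hρ'0.le (le_min (le_max_right r ρ') hρ'ρ.le))
  set F : ℝ → ℝ := fun s => Vc (q0 s) / (φc (q0 s) * Wc (m1 s)) with hFdef
  have hFmeas : Measurable F :=
    (hVcmono.measurable.comp hq0meas).div
      ((hφccont.measurable.comp hq0meas).mul (hWcmono.measurable.comp hm1mono.measurable))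
  have hFeq : ∀ s, F s = V x (q0 s) / (φ (q0 s) * V x (m1 s)) := by
    intro s
    rw [hFdef]
    simp only
    rw [hVcdef, hφcdef, hWcdef]
    simp only
    rw [hclamp_eq _ _ _ (hq0mem s).1 (hq0mem s).2, hclamp_eq _ _ _ (hm1mem s).1 (hm1mem s).2]
  have hFbd : ∀ s, ‖F s‖ ≤ V x ρ / (φ ρ' * V x (φinv a)) := by
    intro s
    rw [hFeq s]
    have hnum_pos : 0 < V x (q0 s) := hVpos x _ (hq0pos s)
    have hφq0 : 0 < φ (q0 s) := hφpos _ (hq0pos s)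
    have hVm1 : 0 < V x (m1 s) := hVpos x _ (hm1pos s)
    rw [Real.norm_eq_abs, abs_of_nonneg (div_nonneg hnum_pos.le (mul_nonneg hφq0.le hVm1.le))]
    apply div_le_div₀ (hVpos x ρ hρ0).le
    · exact hVmono x (mem_Ioi.mpr (hq0pos s)) (mem_Ioi.mpr hρ0) (hq0mem s).2
    · exact mul_pos (hφpos ρ' hρ'0) (hVpos x _ hφinva0)
    · apply mul_le_mul
      · exact hφmonoOn (mem_Ici.mpr hρ'0.le) (mem_Ici.mpr (hq0pos s).le) (hq0mem s).1
      · exact hVmono x (mem_Ioi.mpr hφinva0) (mem_Ioi.mpr (hm1pos s)) (hm1mem s).1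
      · exact (hVpos x _ hφinva0).le
      · exact hφq0.le
  have hTgInt : IntervalIntegrable Tg volume a b := by
    rw [intervalIntegrable_iff_integrableOn_Icc_of_le hab.le]
    have hFint : IntegrableOn F (Icc a b) volume := by
      apply Measure.integrableOn_of_bounded (M := V x ρ / (φ ρ' * V x (φinv a)))
      · rw [Real.volume_Icc]; exact ENNReal.ofReal_ne_top
      · exact hFmeas.aestronglyMeasurable
      · exact ae_of_all _ (fun s => hFbd s)
    apply hFint.congr_fun _ measurableSet_Icc
    intro s hs
    have hcl : min (max s a) b = s := hclamp_eq _ _ _ hs.1 hs.2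
    rw [hFeq s, hTgdef]
    simp only [hq0def, hm1def, hm2def]
    rw [hcl]
  -- nonemptiness for the infimum
  haveI hNE : Nonempty {y : M // dist y x ≤ ρ} := ⟨⟨x, by rw [dist_self]; exact hρ0.le⟩⟩
  -- case analysis on integrability of the numerator and denominator
  by_cases hNint : IntervalIntegrable (fun τ => u x τ (2*ρ)) volume a (b + c')
  swap
  · rw [intervalIntegral.integral_undef hNint, zero_div]
    exact mul_nonneg hCst_pos.le hITg_nonneg
  by_cases hDint : IntervalIntegrable
      (fun τ => ⨅ y : {y : M // dist y x ≤ ρ}, u y.1 τ ρ) volume 0 c'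
  swap
  · rw [intervalIntegral.integral_undef hDint, div_zero]
    exact mul_nonneg hCst_pos.le hITg_nonneg
  -- lower bound for the denominator
  have hDlow : L1 * c' ≤ ∫ τ in (0:ℝ)..c', ⨅ y : {y : M // dist y x ≤ ρ}, u y.1 τ ρ := by
    have hpt : ∀ τ ∈ Ioc (0:ℝ) c', L1 ≤ ⨅ y : {y : M // dist y x ≤ ρ}, u y.1 τ ρ := by
      intro τ hτ
      apply le_ciInf
      intro y
      have hτ0 : 0 < τ := hτ.1
      have hφτρ : φinv τ ≤ ρ := by
        have h1 := hφinvmono τ c' hτ0.le hτ.2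
        rwa [hc'def, hφinv_left ρ hρ0.le] at h1
      have hφτ0 : 0 < φinv τ := hφinvpos τ hτ0
      have hmin : (1:ℝ) ≤ V y.1 ρ / V y.1 (φinv τ) := by
        rw [le_div_iff₀ (hVpos y.1 _ hφτ0), one_mul]
        exact hVmono y.1 (mem_Ioi.mpr hφτ0) (mem_Ioi.mpr hρ0) hφτρ
      have h2 := (hu y.1 τ ρ hτ0 hρ0).1
      rw [min_eq_left hmin, mul_one] at h2
      exact h2
    have hle : (∫ τ in (0:ℝ)..c', (L1:ℝ)) ≤
        ∫ τ in (0:ℝ)..c', ⨅ y : {y : M // dist y x ≤ ρ}, u y.1 τ ρ := by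
      apply intervalIntegral.integral_mono_ae_restrict hc'0.le intervalIntegrable_const hDint
      have h0 : ∀ᵐ (τ:ℝ) ∂(volume.restrict (Icc (0:ℝ) c')), τ ∈ Icc (0:ℝ) c' →
          L1 ≤ ⨅ y : {y : M // dist y x ≤ ρ}, u y.1 τ ρ := by
        rw [MeasureTheory.ae_restrict_iff' measurableSet_Icc]
        have hne : ∀ᵐ (τ:ℝ), τ ≠ 0 := by
          rw [MeasureTheory.ae_iff]
          have : {τ : ℝ | ¬ τ ≠ 0} = {0} := by ext τ; simp
          rw [this]
          exact Real.volume_singleton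
        filter_upwards [hne] with τ hτne
        intro _ hτmem
        exact hpt τ ⟨lt_of_le_of_ne hτmem.1 (Ne.symm hτne), hτmem.2⟩
      have h1 := (MeasureTheory.ae_restrict_iff' measurableSet_Icc).mpr
        ((MeasureTheory.ae_restrict_iff' measurableSet_Icc).mp h0)
      filter_upwards [h0, MeasureTheory.ae_restrict_mem measurableSet_Icc] with τ h2 h3
      exact h2 h3
    calc L1 * c' = ∫ τ in (0:ℝ)..c', (L1:ℝ) := by
          rw [intervalIntegral.integral_const, smul_eq_mul]; ring
    _ ≤ _ := hle
  have hDpos : 0 < L1 * c' := mul_pos hL1 hc'0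
  -- numerator estimates
  have habc : a ≤ b + c' := by linarith
  have hN0 : 0 ≤ ∫ τ in a..(b + c'), u x τ (2*ρ) :=
    intervalIntegral.integral_nonneg habc (fun τ _ => hu_nonneg x τ (2*ρ))
  set J : ℝ → ℝ := fun τ => (V x (φinv τ))⁻¹ with hJdef
  have hJanti : ∀ p q : ℝ, 0 < p → p ≤ q → J q ≤ J p := by
    intro p q hp hpq
    have hq : 0 < q := lt_of_lt_of_le hp hpq
    apply inv_anti₀ (hVpos x _ (hφinvpos p hp))
    exact hVmono x (mem_Ioi.mpr (hφinvpos p hp)) (mem_Ioi.mpr (hφinvpos q hq))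
      (hφinvmono p q hp.le hpq)
  have hJnonneg : ∀ τ : ℝ, 0 < τ → 0 ≤ J τ := fun τ hτ =>
    inv_nonneg.mpr (hVpos x _ (hφinvpos τ hτ)).le
  have hJint_ab : IntervalIntegrable J volume a b := by
    apply AntitoneOn.intervalIntegrable
    rw [uIcc_of_le hab.le]
    intro p hp q hq hpq
    exact hJanti p q (lt_of_lt_of_le ha0 hp.1) hpq
  have hJint_bc : IntervalIntegrable J volume b (b + c') := by
    apply AntitoneOn.intervalIntegrable
    rw [uIcc_of_le (by linarith)]
    intro p hp q hq hpq
    exact hJanti p q (lt_of_lt_of_le hb0 hp.1) hpq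
  have hJint_abc : IntervalIntegrable J volume a (b + c') := hJint_ab.trans hJint_bc
  have h2ρ0 : 0 < 2 * ρ := by linarith
  have hNle1 : (∫ τ in a..(b + c'), u x τ (2*ρ)) ≤
      ∫ τ in a..(b + c'), (L2 * V x (2*ρ)) * J τ := by
    apply intervalIntegral.integral_mono_on habc hNint (hJint_abc.const_mul _)
    intro τ hτ
    have hτ0 : 0 < τ := lt_of_lt_of_le ha0 hτ.1
    have h2 := (hu x τ (2*ρ) hτ0 h2ρ0).2
    have h3 : min 1 (V x (2*ρ) / V x (φinv τ)) ≤ V x (2*ρ) / V x (φinv τ) := min_le_right _ _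
    calc u x τ (2*ρ) ≤ L2 * min 1 (V x (2*ρ) / V x (φinv τ)) := h2
    _ ≤ L2 * (V x (2*ρ) / V x (φinv τ)) := mul_le_mul_of_nonneg_left h3 hL2.le
    _ = (L2 * V x (2*ρ)) * J τ := by rw [hJdef]; simp only; rw [div_eq_mul_inv]; ring
  have hNle2 : (∫ τ in a..(b + c'), (L2 * V x (2*ρ)) * J τ) =
      (L2 * V x (2*ρ)) * ∫ τ in a..(b + c'), J τ :=
    intervalIntegral.integral_const_mul _ _
  have hsplit : (∫ τ in a..(b + c'), J τ) = (∫ τ in a..b, J τ) + ∫ τ in b..(b + c'), J τ :=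
    (intervalIntegral.integral_add_adjacent_intervals hJint_ab hJint_bc).symm
  have hJb0 : 0 ≤ J b := hJnonneg b hb0
  have htail : (∫ τ in b..(b + c'), J τ) ≤ c' * J b := by
    have h1 := intervalIntegral.integral_mono_on (by linarith : b ≤ b + c') hJint_bc
      intervalIntegrable_const (fun τ hτ => hJanti b τ hb0 hτ.1)
    rwa [intervalIntegral.integral_const, smul_eq_mul, show b + c' - b = c' by ring] at h1
  have hhead : (b - a) * J b ≤ ∫ τ in a..b, J τ := by
    have h1 := intervalIntegral.integral_mono_on hab.le intervalIntegrable_const hJint_ab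
      (fun τ hτ => hJanti τ b (lt_of_lt_of_le ha0 hτ.1) hτ.2)
    rwa [intervalIntegral.integral_const, smul_eq_mul] at h1
  have hIabJ0 : 0 ≤ ∫ τ in a..b, J τ :=
    intervalIntegral.integral_nonneg hab.le (fun τ hτ => hJnonneg τ (lt_of_lt_of_le ha0 hτ.1))
  have htot : (∫ τ in a..(b + c'), J τ) ≤ c * ∫ τ in a..b, J τ := by
    have h2 : c' * J b ≤ (c-1) * ((b-a) * J b) := by
      have := mul_le_mul_of_nonneg_right hc'small hJb0
      linarith only [this]
    have h3 : (c-1) * ((b-a) * J b) ≤ (c-1) * ∫ τ in a..b, J τ :=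
      mul_le_mul_of_nonneg_left hhead (by linarith)
    calc (∫ τ in a..(b + c'), J τ) = (∫ τ in a..b, J τ) + ∫ τ in b..(b + c'), J τ := hsplit
    _ ≤ (∫ τ in a..b, J τ) + (c-1) * ∫ τ in a..b, J τ := by linarith
    _ = c * ∫ τ in a..b, J τ := by ring
  have hVρpos : 0 < V x ρ := hVpos x ρ hρ0
  have hV2ρ : V x (2*ρ) ≤ (2:ℝ)^d2 * c2 * V x ρ := by
    have h := (hVgrowth x ρ (2*ρ) hρ0 (by linarith)).2
    have h2 : (2*ρ/ρ) = 2 := by field_simp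
    rw [h2, div_le_iff₀ hVρpos] at h
    linarith only [h]
  have hV2ρpos : 0 < V x (2*ρ) := hVpos x _ h2ρ0
  have hNfinal : (∫ τ in a..(b + c'), u x τ (2*ρ)) ≤
      (L2 * ((2:ℝ)^d2 * c2 * V x ρ)) * (c * ∫ τ in a..b, J τ) := by
    have h1 : (∫ τ in a..(b + c'), u x τ (2*ρ)) ≤ (L2 * V x (2*ρ)) * ∫ τ in a..(b + c'), J τ :=
      hNle1.trans_eq hNle2
    have h2 : (L2 * V x (2*ρ)) * (∫ τ in a..(b + c'), J τ) ≤
        (L2 * V x (2*ρ)) * (c * ∫ τ in a..b, J τ) :=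
      mul_le_mul_of_nonneg_left htot (by positivity)
    have h3 : (L2 * V x (2*ρ)) * (c * ∫ τ in a..b, J τ) ≤
        (L2 * ((2:ℝ)^d2 * c2 * V x ρ)) * (c * ∫ τ in a..b, J τ) := by
      apply mul_le_mul_of_nonneg_right _ (by positivity)
      exact mul_le_mul_of_nonneg_left hV2ρ hL2.le
    linarith
  have hBnd0 : 0 ≤ (L2 * ((2:ℝ)^d2 * c2 * V x ρ)) * (c * ∫ τ in a..b, J τ) := by
    have h1 : (0:ℝ) < (2:ℝ)^d2 := Real.rpow_pos_of_pos two_pos _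
    positivity
  have hdiv : (∫ τ in a..(b + c'), u x τ (2*ρ)) /
      (∫ τ in (0:ℝ)..c', ⨅ y : {y : M // dist y x ≤ ρ}, u y.1 τ ρ) ≤
      ((L2 * ((2:ℝ)^d2 * c2 * V x ρ)) * (c * ∫ τ in a..b, J τ)) / (L1 * c') :=
    div_le_div₀ hBnd0 hNfinal hDpos hDlow
  -- key pointwise comparison with the target integrand
  have hZ : (V x ρ / c') * (∫ τ in a..b, J τ) ≤ (c2 * (ρ/ρ')^d2) * ∫ s in a..b, Tg s := by
    have heq : (V x ρ / c') * (∫ τ in a..b, J τ) = ∫ s in a..b, (V x ρ / c') * J s :=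
      (intervalIntegral.integral_const_mul _ _).symm
    rw [heq]
    have heq2 : (c2 * (ρ/ρ')^d2) * (∫ s in a..b, Tg s) =
        ∫ s in a..b, (c2 * (ρ/ρ')^d2) * Tg s :=
      (intervalIntegral.integral_const_mul _ _).symm
    rw [heq2]
    apply intervalIntegral.integral_mono_on hab.le (hJint_ab.const_mul _) (hTgInt.const_mul _)
    intro s hs
    have hA := hArg s hs.1 hs.2
    have hs0 : 0 < s := lt_of_lt_of_le ha0 hs.1
    set A : ℝ := φinv s * g s with hAdef
    have hA0 : 0 < A := lt_of_lt_of_le hρ'0 hA.1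
    have hφA : 0 < φ A := hφpos A hA0
    have hφAρ : φ A ≤ c' := by
      rw [hc'def]
      exact hφmonoOn (mem_Ici.mpr hA0.le) (mem_Ici.mpr hρ0.le) hA.2
    have hVA : V x ρ ≤ c2 * (ρ/ρ')^d2 * V x A := by
      have h1 := (hVgrowth x ρ' ρ hρ'0 hρ'ρ).2
      have hVρ'pos : 0 < V x ρ' := hVpos x ρ' hρ'0
      rw [div_le_iff₀ hVρ'pos] at h1
      have h2 : V x ρ' ≤ V x A := hVmono x (mem_Ioi.mpr hρ'0) (mem_Ioi.mpr hA0) hA.1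
      have h3 := mul_le_mul_of_nonneg_left h2 (mul_nonneg hc2pos.le hXnonneg)
      have h4 : c2 * (ρ/ρ')^d2 * V x ρ' ≤ c2 * (ρ/ρ')^d2 * V x A := by linarith only [h3]
      linarith only [h1, h4]
    have hTgs : Tg s = (V x A / φ A) * (V x (φinv s))⁻¹ := by
      rw [hTgdef]
      simp only
      rw [← hAdef, ← div_div, div_eq_mul_inv]
    rw [hTgs, hJdef]
    simp only
    rw [show (c2 * (ρ/ρ')^d2) * ((V x A / φ A) * (V x (φinv s))⁻¹) =
      ((c2 * (ρ/ρ')^d2 * V x A) / φ A) * (V x (φinv s))⁻¹ by rw [mul_div_assoc]; ring]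
    apply mul_le_mul_of_nonneg_right _ (inv_nonneg.mpr (hVpos x _ (hφinvpos s hs0)).le)
    exact div_le_div₀ (mul_nonneg (mul_nonneg hc2pos.le hXnonneg) (hVpos x _ hA0).le) hVA hφA hφAρ
  -- put everything together
  have hKc : 0 ≤ ((2:ℝ)^d2 * c2 * L2 / L1) * c := by
    have h1 : (0:ℝ) < (2:ℝ)^d2 := Real.rpow_pos_of_pos two_pos _
    positivity
  have hfinal1 : ((L2 * ((2:ℝ)^d2 * c2 * V x ρ)) * (c * ∫ τ in a..b, J τ)) / (L1 * c') =
      (((2:ℝ)^d2 * c2 * L2 / L1) * c) * ((V x ρ / c') * ∫ τ in a..b, J τ) := by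
    field_simp
  have hfinal2 : (((2:ℝ)^d2 * c2 * L2 / L1) * c) * ((V x ρ / c') * ∫ τ in a..b, J τ) ≤
      (((2:ℝ)^d2 * c2 * L2 / L1) * c) * ((c2 * (ρ/ρ')^d2) * ∫ s in a..b, Tg s) :=
    mul_le_mul_of_nonneg_left hZ hKc
  have hfinal3 : (((2:ℝ)^d2 * c2 * L2 / L1) * c) * ((c2 * (ρ/ρ')^d2) * ∫ s in a..b, Tg s) ≤
      (((2:ℝ)^d2 * c2 * L2 / L1) * c) *
        ((c2 * (c^(d2/d3) / (c3^(d2/d3) * Rct^d2))) * ∫ s in a..b, Tg s) := by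
    apply mul_le_mul_of_nonneg_left _ hKc
    apply mul_le_mul_of_nonneg_right _ hITg_nonneg
    exact mul_le_mul_of_nonneg_left hX hc2pos.le
  have hfinal4 : (((2:ℝ)^d2 * c2 * L2 / L1) * c) *
      ((c2 * (c^(d2/d3) / (c3^(d2/d3) * Rct^d2))) * ∫ s in a..b, Tg s) =
      (((2:ℝ) ^ d2 * c2 * L2 / L1) * c2 / c3 ^ (d2 / d3)) *
        (c ^ (1 + d2 / d3) / Rct ^ d2) * ∫ s in a..b, Tg s := by
    have hcc : c ^ (1 + d2/d3) = c * c^(d2/d3) := by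
      rw [Real.rpow_add hc0, Real.rpow_one]
    have h2 : (0:ℝ) < c3 ^ (d2/d3) := Real.rpow_pos_of_pos hc3 _
    have h4 : (0:ℝ) < Rct ^ d2 := Real.rpow_pos_of_pos hRpos _
    rw [hcc]
    field_simp
  calc (∫ τ in a..(b + c'), u x τ (2*ρ)) /
      (∫ τ in (0:ℝ)..c', ⨅ y : {y : M // dist y x ≤ ρ}, u y.1 τ ρ) ≤
      ((L2 * ((2:ℝ)^d2 * c2 * V x ρ)) * (c * ∫ τ in a..b, J τ)) / (L1 * c') := hdiv
  _ = (((2:ℝ)^d2 * c2 * L2 / L1) * c) * ((V x ρ / c') * ∫ τ in a..b, J τ) := hfinal1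
  _ ≤ (((2:ℝ)^d2 * c2 * L2 / L1) * c) * ((c2 * (ρ/ρ')^d2) * ∫ s in a..b, Tg s) := hfinal2
  _ ≤ (((2:ℝ)^d2 * c2 * L2 / L1) * c) *
        ((c2 * (c^(d2/d3) / (c3^(d2/d3) * Rct^d2))) * ∫ s in a..b, Tg s) := hfinal3
  _ = (((2:ℝ) ^ d2 * c2 * L2 / L1) * c2 / c3 ^ (d2 / d3)) *
        (c ^ (1 + d2 / d3) / Rct ^ d2) * ∫ s in a..b, Tg s := hfinal4
end

section
/- Set K1 := 2^{d2}·c2·L2/L1, H2 := 3·K1·c2/c3^{d2/d3} and κ_t := min{1, g(t)^{d3}/c3}. Suppose 1 < k < 3/2, 1 < l < 2 − 1/k and κ_t < k(l−1)/2, and define the sequence n_0 = t, n_{2m+1} = k·n_{2m}, n_{2m+2} = l·n_{2m+1} (m ≥ 0). Then for every x ∈ M and all integers i ≥ 0 and j ≥ i+1, writing ρ_j := (c3/k)^{1/d3}·φ⁻¹(n_{2j+1})·g(n_{2j+1}): H(x, ρ_j, n_{2j} − n_{2i+1}, n_{2j+1} − n_{2i}) ≤ H2·(kl/(l−1))^{d2/d3}·(V(x,ρ_j)/φ(ρ_j))·∫_{n_{2j−1}}^{n_{2j+1}}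 du/V(x,φ⁻¹(u)). -/
open Real Set MeasureTheory

set_option maxHeartbeats 1000000

/-- (transient case) upper bound for the shifted hitting probability
`F_j` (Lemma 5.5 / `lem:comp-prob-2`). -/
theorem transient_shifted_hitting_upper
    {M : Type*} [MetricSpace M]
    (V : M → ℝ → ℝ) (c1 c2 d1 d2 : ℝ)
    (hc1 : 0 < c1) (hc1' : c1 ≤ 1) (hc2 : 1 ≤ c2) (hd1 : 0 < d1) (hd12 : d1 ≤ d2)
    (hVpos : ∀ (x : M) (r : ℝ), 0 < r → 0 < V x r)
    (hVmono : ∀ x : M, MonotoneOn (V x) (Ioi (0:ℝ)))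
    (hVgrowth : ∀ (x : M) (r R : ℝ), 0 < r → r < R →
      c1 * (R / r) ^ d1 ≤ V x R / V x r ∧ V x R / V x r ≤ c2 * (R / r) ^ d2)
    (φ φinv : ℝ → ℝ) (c3 c4 d3 d4 : ℝ)
    (hc3 : 0 < c3) (hc3' : c3 ≤ 1) (hc4 : 1 ≤ c4) (hd3 : 0 < d3) (hd34 : d3 ≤ d4)
    (hφ0 : φ 0 = 0)
    (hφmono : StrictMonoOn φ (Ici (0:ℝ)))
    (hφcont : ContinuousOn φ (Ici (0:ℝ)))
    (hφsurj : ∀ y : ℝ, 0 ≤ y → ∃ x : ℝ, 0 ≤ x ∧ φ x = y)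
    (hφinv_nonneg : ∀ y : ℝ, 0 ≤ y → 0 ≤ φinv y)
    (hφinv_right : ∀ y : ℝ, 0 ≤ y → φ (φinv y) = y)
    (hφinv_left : ∀ x : ℝ, 0 ≤ x → φinv (φ x) = x)
    (hφgrowth : ∀ r R : ℝ, 0 < r → r < R →
      c3 * (R / r) ^ d3 ≤ φ R / φ r ∧ φ R / φ r ≤ c4 * (R / r) ^ d4)
    (u : M → ℝ → ℝ → ℝ) (L1 L2 : ℝ) (hL1 : 0 < L1) (hL12 : L1 ≤ L2)
    (hu_nonneg : ∀ (x : M) (t r : ℝ), 0 ≤ u x t r)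
    (hu : ∀ (x : M) (t r : ℝ), 0 < t → 0 < r →
      L1 * min 1 (V x r / V x (φinv t)) ≤ u x t r ∧
      u x t r ≤ L2 * min 1 (V x r / V x (φinv t)))
    (H : M → ℝ → ℝ → ℝ → ℝ)
    (hH_nonneg : ∀ (x : M) (r a b : ℝ), 0 ≤ H x r a b)
    (hH_upper : ∀ (x : M) (r a b c : ℝ), 0 < r → 0 < a → a < b → 0 < c →
      H x r a b ≤ (∫ t in a..(b + c), u x t (2 * r)) /
        (∫ t in (0:ℝ)..c, ⨅ y : {y : M // dist y x ≤ r}, u y.1 t r))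
    (g : ℝ → ℝ) (hg_pos : ∀ t : ℝ, 0 < t → 0 < g t)
    (hg_anti : AntitoneOn g (Ioi (0:ℝ)))
    (hg_lim : Filter.Tendsto g Filter.atTop (nhds 0))
    (t k l : ℝ) (ht : 0 < t)
    (hk : 1 < k) (hk' : k < 3/2) (hl : 1 < l) (hl' : l < 2 - 1/k)
    (hκ : min 1 (g t ^ d3 / c3) < k * (l - 1) / 2)
    (n : ℕ → ℝ) (hn0 : n 0 = t)
    (hodd : ∀ m : ℕ, n (2*m+1) = k * n (2*m))
    (heven : ∀ m : ℕ, n (2*m+2) = l * n (2*m+1)) :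
    ∀ (x : M) (i j : ℕ), i + 1 ≤ j →
      H x ((c3/k) ^ (1/d3) * (φinv (n (2*j+1)) * g (n (2*j+1))))
          (n (2*j) - n (2*i+1)) (n (2*j+1) - n (2*i)) ≤
        (3 * ((2:ℝ) ^ d2 * c2 * L2 / L1) * c2 / c3 ^ (d2/d3)) *
          (k * l / (l - 1)) ^ (d2/d3) *
          (V x ((c3/k) ^ (1/d3) * (φinv (n (2*j+1)) * g (n (2*j+1)))) /
            φ ((c3/k) ^ (1/d3) * (φinv (n (2*j+1)) * g (n (2*j+1))))) *
          ∫ s in (n (2*j-1))..(n (2*j+1)), 1 / V x (φinv s) := by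
  intro x i j hij
  -- basic scalar facts
  have hk0 : (0:ℝ) < k := by linarith
  have hl0 : (0:ℝ) < l := by linarith
  have hl10 : (0:ℝ) < l - 1 := by linarith
  have hkl0 : (0:ℝ) < k * l := mul_pos hk0 hl0
  have hkl1 : (1:ℝ) < k * l := by nlinarith only [hk, hl]
  have hk1k : k * (1/k) = 1 := by field_simp
  have h1k : 2/3 < 1/k := by rw [lt_div_iff₀ hk0]; linarith
  have hl43 : l < 4/3 := by linarith
  have hkl2' : k*l < 2*k - 1 := by
    linarith only [mul_pos hk0 (show (0:ℝ) < 2 - 1/k - l by linarith), hk1k]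
  have hkl2 : k*l < 2 := by linarith
  have hkll : k * (l-1) / 2 < 1/4 := by linarith only [hkl2', hk']
  have hd2 : (0:ℝ) < d2 := lt_of_lt_of_le hd1 hd12
  have hdd : (0:ℝ) ≤ d2/d3 := div_nonneg hd2.le hd3.le
  have hL20 : (0:ℝ) < L2 := lt_of_lt_of_le hL1 hL12
  have hc20 : (0:ℝ) < c2 := lt_of_lt_of_le one_pos hc2
  -- the κ condition gives a bound on g t ^ d3
  have hgt3 : g t ^ d3 < k * (l-1)/2 * c3 := by
    rcases le_total (g t ^ d3 / c3) 1 with h | h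
    · rw [min_eq_right h] at hκ
      rw [div_lt_iff₀ hc3] at hκ
      linarith
    · rw [min_eq_left h] at hκ; linarith
  have hgt0 : 0 < g t := hg_pos t ht
  -- explicit formulas for the sequence
  have hform : ∀ m : ℕ, n (2*m) = (k*l)^m * t ∧ n (2*m+1) = k * ((k*l)^m * t) := by
    intro m
    induction m with
    | zero =>
      constructor
      · simpa using hn0
      · have h1 := hodd 0
        norm_num at h1 ⊢
        rw [h1, hn0]
    | succ m ih =>
      have h1 : n (2*(m+1)) = l * n (2*m+1) := by
        rw [show 2*(m+1) = 2*m+2 by ring]; exact heven m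
      have h2 : n (2*(m+1)+1) = k * n (2*(m+1)) := hodd (m+1)
      constructor
      · rw [h1, ih.2, pow_succ]; ring
      · rw [h2, h1, ih.2, pow_succ]; ring
  obtain ⟨q, rfl⟩ : ∃ q, j = q + 1 := ⟨j - 1, by omega⟩
  have hiq : i ≤ q := by omega
  set P : ℝ := (k*l)^q * t with hPdef
  have hP0 : 0 < P := mul_pos (pow_pos hkl0 q) ht
  set Ni : ℝ := (k*l)^i * t with hNidef
  have hNi0 : 0 < Ni := mul_pos (pow_pos hkl0 i) ht
  have hNiP : Ni ≤ P := by
    rw [hNidef, hPdef]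
    exact mul_le_mul_of_nonneg_right (pow_le_pow_right₀ (le_of_lt hkl1) hiq) ht.le
  have hn2j : n (2*(q+1)) = k*l*P := by rw [(hform (q+1)).1, hPdef, pow_succ]; ring
  have hn2j1 : n (2*(q+1)+1) = k*(k*l*P) := by rw [(hform (q+1)).2, hPdef, pow_succ]; ring
  have hn2jm1 : n (2*(q+1)-1) = k*P := by
    rw [show 2*(q+1)-1 = 2*q+1 by omega, (hform q).2, hPdef]
  have hn2i : n (2*i) = Ni := by rw [(hform i).1, hNidef]
  have hn2i1 : n (2*i+1) = k*Ni := by rw [(hform i).2, hNidef]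
  rw [hn2j, hn2j1, hn2jm1, hn2i, hn2i1]
  set N1 : ℝ := k*(k*l*P) with hN1def
  have hN10 : 0 < N1 := by rw [hN1def]; exact mul_pos hk0 (mul_pos hkl0 hP0)
  have hPt : t ≤ P := by
    rw [hPdef]
    linarith only [mul_le_mul_of_nonneg_right (one_le_pow₀ (le_of_lt hkl1) (n := q)) ht.le]
  have hk2l1 : (1:ℝ) < k*(k*l) := by nlinarith only [hk, hkl1]
  have htN1 : t ≤ N1 := by
    rw [hN1def]
    nlinarith only [hPt, hk2l1, hP0]
  have hg1 : 0 < g N1 := hg_pos _ (lt_of_lt_of_le ht htN1)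
  have hgN : g N1 ≤ g t := hg_anti (mem_Ioi.2 ht) (mem_Ioi.2 (lt_of_lt_of_le ht htN1)) htN1
  -- φinv facts
  have hφinv_mono : ∀ s s' : ℝ, 0 ≤ s → s ≤ s' → φinv s ≤ φinv s' := by
    intro s s' hs hss'
    by_contra hcon
    push_neg at hcon
    have h2 := hφmono (mem_Ici.2 (hφinv_nonneg s' (by linarith))) (mem_Ici.2 (hφinv_nonneg s hs)) hcon
    rw [hφinv_right s hs, hφinv_right s' (by linarith)] at h2
    linarith
  have hφinv_pos : ∀ s : ℝ, 0 < s → 0 < φinv s := by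
    intro s hs
    rcases (hφinv_nonneg s hs.le).lt_or_eq with h | h
    · exact h
    · exfalso
      have h2 := hφinv_right s hs.le
      rw [← h, hφ0] at h2
      linarith
  have hφpos : ∀ r : ℝ, 0 < r → 0 < φ r := by
    intro r hr
    have := hφmono (mem_Ici.2 le_rfl) (mem_Ici.2 hr.le) hr
    rwa [hφ0] at this
  -- the radius ρ
  set ρ : ℝ := (c3/k)^(1/d3) * (φinv N1 * g N1) with hρdef
  have hφinvN1 : 0 < φinv N1 := hφinv_pos N1 hN10
  have hρ0 : 0 < ρ := by
    rw [hρdef]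
    exact mul_pos (Real.rpow_pos_of_pos (div_pos hc3 hk0) _) (mul_pos hφinvN1 hg1)
  set ε : ℝ := (c3/k)^(1/d3) * g N1 with hεdef
  have hε0 : 0 < ε := by
    rw [hεdef]; exact mul_pos (Real.rpow_pos_of_pos (div_pos hc3 hk0) _) hg1
  have hρε : ρ = ε * φinv N1 := by rw [hρdef, hεdef]; ring
  have hεd3 : ε ^ d3 = (c3/k) * g N1 ^ d3 := by
    rw [hεdef, Real.mul_rpow (Real.rpow_nonneg (div_nonneg hc3.le hk0.le) _) hg1.le,
        ← Real.rpow_mul (div_nonneg hc3.le hk0.le), one_div_mul_cancel (ne_of_gt hd3),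
        Real.rpow_one]
  have hgtd3 : g N1 ^ d3 ≤ g t ^ d3 := Real.rpow_le_rpow hg1.le hgN hd3.le
  have hc31 : c3 * c3 ≤ 1 := by
    linarith only [mul_le_mul_of_nonneg_left hc3' hc3.le, hc3']
  have hε1 : ε < 1 := by
    by_contra hcon
    push_neg at hcon
    have h1 : (1:ℝ) ≤ ε ^ d3 := by
      calc (1:ℝ) = 1 ^ d3 := (Real.one_rpow d3).symm
      _ ≤ ε ^ d3 := Real.rpow_le_rpow zero_le_one hcon hd3.le
    rw [hεd3] at h1
    have h2 : (c3/k) * g N1 ^ d3 < (c3/k) * (k*(l-1)/2*c3) :=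
      mul_lt_mul_of_pos_left (lt_of_le_of_lt hgtd3 hgt3) (div_pos hc3 hk0)
    have h3 : (c3/k) * (k*(l-1)/2*c3) = c3*c3*(l-1)/2 := by field_simp
    have h4 : c3*c3*(l-1)/2 < 1 := by nlinarith only [hc31, hl43, hl10]
    linarith only [h1, h2, h3.symm ▸ h2, h4, h3 ▸ h2]
  have hρlt : ρ < φinv N1 := by
    rw [hρε]; nlinarith only [hε1, hφinvN1]
  have hφρpos : 0 < φ ρ := hφpos ρ hρ0
  -- upper bound on φ ρ
  have hφρle : φ ρ ≤ N1 * ((l-1)/2) := by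
    have hkey : c3 * (φinv N1 / ρ)^d3 ≤ N1 / φ ρ := by
      have h := (hφgrowth ρ (φinv N1) hρ0 hρlt).1
      rwa [hφinv_right N1 hN10.le] at h
    have hφN1ne : φinv N1 ≠ 0 := hφinvN1.ne'
    have hratio : φinv N1 / ρ = ε⁻¹ := by
      rw [hρε, mul_comm, div_mul_eq_div_mul_one_div, div_self hφN1ne, one_mul, one_div]
    have hkey2 : c3 * (ε^d3)⁻¹ ≤ N1 / φ ρ := by
      rwa [hratio, Real.inv_rpow hε0.le] at hkey
    have hgd30 : 0 < g N1 ^ d3 := Real.rpow_pos_of_pos hg1 d3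
    have hkey3 : k / g N1 ^ d3 ≤ N1 / φ ρ := by
      have hc3ne : c3 ≠ 0 := hc3.ne'
      have hkne : k ≠ 0 := hk0.ne'
      have hgdne : g N1 ^ d3 ≠ 0 := hgd30.ne'
      have h : c3 * (ε^d3)⁻¹ = k / g N1 ^ d3 := by
        rw [hεd3]; field_simp
      rwa [h] at hkey2
    rw [div_le_div_iff₀ hgd30 hφρpos] at hkey3
    have h1 : N1 * g N1 ^ d3 ≤ N1 * (k*(l-1)/2*c3) :=
      mul_le_mul_of_nonneg_left (le_of_lt (lt_of_le_of_lt hgtd3 hgt3)) hN10.le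
    have h2 : N1 * (k*(l-1)/2*c3) ≤ N1 * (k*(l-1)/2) := by
      apply mul_le_mul_of_nonneg_left _ hN10.le
      nlinarith only [hc3', hk0, hl10, mul_pos hk0 hl10]
    nlinarith only [hkey3, h1, h2, hk0]
  -- endpoints
  set a : ℝ := k*l*P - k*Ni with hadef
  set b : ℝ := N1 - Ni with hbdef
  have halb : k*P*(l-1) ≤ a := by
    rw [hadef]; nlinarith only [hNiP, hk0]
  have ha0 : 0 < a := lt_of_lt_of_le (mul_pos (mul_pos hk0 hP0) hl10) halb
  have hab : a < b := by
    rw [hadef, hbdef, hN1def]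
    linarith only [mul_pos (mul_pos hkl0 hP0) (sub_pos.2 hk), mul_pos hNi0 (sub_pos.2 hk)]
  have habc : a ≤ b + φ ρ := by linarith
  have hkP0 : 0 < k*P := mul_pos hk0 hP0
  have hkPN1 : k*P ≤ N1 := by
    rw [hN1def]
    linarith only [mul_nonneg (mul_pos hk0 hP0).le (sub_pos.2 hkl1).le]
  have hlen2 : 0 < N1 - k*P := by
    rw [hN1def]
    linarith only [mul_pos (mul_pos hk0 hP0) (sub_pos.2 hkl1)]
  -- integrability of the comparison function
  have hVφpos : ∀ s : ℝ, 0 < s → 0 < V x (φinv s) := fun s hs => hVpos x _ (hφinv_pos s hs)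
  have hFint : ∀ p r : ℝ, 0 < p → p ≤ r →
      IntervalIntegrable (fun s => 1 / V x (φinv s)) volume p r := by
    intro p r hp hpr
    apply AntitoneOn.intervalIntegrable
    rw [uIcc_of_le hpr]
    intro s hs s' hs' hss'
    have hs0 : 0 < s := lt_of_lt_of_le hp hs.1
    have hs'0 : 0 < s' := lt_of_lt_of_le hp hs'.1
    exact one_div_le_one_div_of_le (hVφpos s hs0)
      (hVmono x (mem_Ioi.2 (hφinv_pos s hs0)) (mem_Ioi.2 (hφinv_pos s' hs'0))
        (hφinv_mono s s' hs0.le hss'))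
  set I2 : ℝ := ∫ s in (k*P)..N1, 1 / V x (φinv s) with hI2def
  have hI20 : 0 ≤ I2 := by
    rw [hI2def]
    apply intervalIntegral.integral_nonneg hkPN1
    intro s hs
    have hs0 : 0 < s := lt_of_lt_of_le hkP0 hs.1
    exact (one_div_pos.2 (hVφpos s hs0)).le
  -- positivity of the right-hand side
  have hc3dd : 0 < c3 ^ (d2/d3) := Real.rpow_pos_of_pos hc3 _
  have h2d2 : 0 < (2:ℝ) ^ d2 := Real.rpow_pos_of_pos two_pos _
  have hkld : 0 < (k*l/(l-1)) ^ (d2/d3) := Real.rpow_pos_of_pos (div_pos hkl0 hl10) _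
  have hVρ : 0 < V x ρ := hVpos x ρ hρ0
  have hRHS0 : 0 ≤ (3 * ((2:ℝ) ^ d2 * c2 * L2 / L1) * c2 / c3 ^ (d2/d3)) *
      (k * l / (l - 1)) ^ (d2/d3) * (V x ρ / φ ρ) * I2 := by
    have h1 : 0 ≤ 3 * ((2:ℝ) ^ d2 * c2 * L2 / L1) * c2 / c3 ^ (d2/d3) :=
      div_nonneg (mul_nonneg (mul_nonneg (by norm_num)
        (div_pos (mul_pos (mul_pos h2d2 hc20) hL20) hL1).le) hc20.le) hc3dd.le
    have h2 : 0 ≤ V x ρ / φ ρ := (div_pos hVρ hφρpos).le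
    exact mul_nonneg (mul_nonneg (mul_nonneg h1 hkld.le) h2) hI20
  -- the main hitting estimate
  have hmain := hH_upper x ρ a b (φ ρ) hρ0 ha0 hab hφρpos
  by_cases hIntN : IntervalIntegrable (fun s => u x s (2*ρ)) volume a (b + φ ρ)
  · by_cases hIntD : IntervalIntegrable
        (fun s => ⨅ y : {y : M // dist y x ≤ ρ}, u y.1 s ρ) volume 0 (φ ρ)
    · -- main case
      have hNE : Nonempty {y : M // dist y x ≤ ρ} := ⟨⟨x, by rw [dist_self]; exact hρ0.le⟩⟩
      -- lower bound for the denominator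
      have hDlb : L1 * φ ρ ≤ ∫ s in (0:ℝ)..(φ ρ), ⨅ y : {y : M // dist y x ≤ ρ}, u y.1 s ρ := by
        have hconst : (∫ _ in (0:ℝ)..(φ ρ), (L1:ℝ)) = L1 * φ ρ := by
          rw [intervalIntegral.integral_const, smul_eq_mul]; ring
        rw [← hconst]
        apply intervalIntegral.integral_mono_ae_restrict hφρpos.le intervalIntegrable_const hIntD
        have hae : ∀ᵐ s ∂(volume.restrict (Icc (0:ℝ) (φ ρ))), s ∈ Icc (0:ℝ) (φ ρ) :=
          ae_restrict_mem measurableSet_Icc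
        have hne0 : ∀ᵐ s ∂(volume.restrict (Icc (0:ℝ) (φ ρ))), s ≠ (0:ℝ) := by
          apply ae_restrict_of_ae
          have hset : {s : ℝ | ¬ s ≠ 0} = {(0:ℝ)} := by ext s; simp
          rw [MeasureTheory.ae_iff, hset]
          exact Real.volume_singleton
        filter_upwards [hae, hne0] with s hs hs0
        apply le_ciInf
        intro y
        have hspos : 0 < s := lt_of_le_of_ne hs.1 (Ne.symm hs0)
        have hφs : φinv s ≤ ρ := by
          have h := hφinv_mono s (φ ρ) hspos.le hs.2
          rwa [hφinv_left ρ hρ0.le] at h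
        have hVy : 0 < V y.1 (φinv s) := hVpos y.1 _ (hφinv_pos s hspos)
        have h1 : (1:ℝ) ≤ V y.1 ρ / V y.1 (φinv s) := by
          rw [le_div_iff₀ hVy, one_mul]
          exact hVmono y.1 (mem_Ioi.2 (hφinv_pos s hspos)) (mem_Ioi.2 hρ0) hφs
        have h2 := (hu y.1 s ρ hspos hρ0).1
        rw [min_eq_left h1, mul_one] at h2
        exact h2
      -- upper bound for the numerator
      set I1 : ℝ := ∫ s in a..(b + φ ρ), 1 / V x (φinv s) with hI1def
      have hV2pos : 0 < V x (2*ρ) := hVpos x _ (by linarith)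
      have hNub : (∫ s in a..(b + φ ρ), u x s (2*ρ)) ≤ L2 * V x (2*ρ) * I1 := by
        rw [hI1def, ← intervalIntegral.integral_const_mul]
        apply intervalIntegral.integral_mono_on habc hIntN
          ((hFint a (b + φ ρ) ha0 habc).const_mul _)
        intro s hs
        have hs0 : 0 < s := lt_of_lt_of_le ha0 hs.1
        have h2 := (hu x s (2*ρ) hs0 (by linarith)).2
        calc u x s (2*ρ) ≤ L2 * min 1 (V x (2*ρ) / V x (φinv s)) := h2
          _ ≤ L2 * (V x (2*ρ) / V x (φinv s)) :=
            mul_le_mul_of_nonneg_left (min_le_right _ _) hL20.le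
          _ = L2 * V x (2*ρ) * (1 / V x (φinv s)) := by ring
      -- pointwise comparison of volume values
      set Q : ℝ := c2 * (k*l/(l-1))^(d2/d3) / c3^(d2/d3) with hQdef
      have hQ0 : 0 < Q := by
        rw [hQdef]; exact div_pos (mul_pos hc20 hkld) hc3dd
      have hQ1 : 1 ≤ Q := by
        rw [hQdef]
        have hkl1' : (1:ℝ) ≤ k*l/(l-1) := by
          rw [le_div_iff₀ hl10, one_mul]
          linarith only [hl43, hkl1]
        have hX : (1:ℝ) ≤ (k*l/(l-1))^(d2/d3) := by
          calc (1:ℝ) = 1 ^ (d2/d3) := (Real.one_rpow _).symm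
          _ ≤ (k*l/(l-1))^(d2/d3) := Real.rpow_le_rpow zero_le_one hkl1' hdd
        have hY : c3^(d2/d3) ≤ 1 := Real.rpow_le_one hc3.le hc3' hdd
        rw [le_div_iff₀ hc3dd, one_mul]
        nlinarith only [hX, hY, hc2]
      have hpoint : ∀ s ∈ Icc a (b + φ ρ), ∀ s' ∈ Icc (k*P) N1,
          V x (φinv s') ≤ Q * V x (φinv s) := by
        intro s hs s' hs'
        have hs0 : 0 < s := lt_of_lt_of_le ha0 hs.1
        have hs'0 : 0 < s' := lt_of_lt_of_le hkP0 hs'.1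
        have hVs := hVφpos s hs0
        have hVs' := hVφpos s' hs'0
        rcases le_or_gt (φinv s') (φinv s) with hle | hlt
        · have h1 : V x (φinv s') ≤ V x (φinv s) :=
            hVmono x (mem_Ioi.2 (hφinv_pos s' hs'0)) (mem_Ioi.2 (hφinv_pos s hs0)) hle
          nlinarith only [h1, hQ1, hVs]
        · have hg1' := (hVgrowth x (φinv s) (φinv s') (hφinv_pos s hs0) hlt).2
          have hg2 := (hφgrowth (φinv s) (φinv s') (hφinv_pos s hs0) hlt).1
          rw [hφinv_right s hs0.le, hφinv_right s' hs'0.le] at hg2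
          set R : ℝ := φinv s' / φinv s with hRdef
          have hR0 : 0 < R := div_pos (hφinv_pos s' hs'0) (hφinv_pos s hs0)
          have hRd3 : R ^ d3 ≤ s' / (c3 * s) := by
            rw [le_div_iff₀ (mul_pos hc3 hs0)]
            calc R^d3 * (c3*s) = (c3 * R^d3) * s := by ring
            _ ≤ (s'/s) * s := mul_le_mul_of_nonneg_right hg2 hs0.le
            _ = s' := div_mul_cancel₀ s' hs0.ne'
          have hRle : R ≤ (s'/(c3*s))^(1/d3) := by
            have hrw : R = (R ^ d3)^(1/d3) := by
              rw [← Real.rpow_mul hR0.le, mul_one_div, div_self (ne_of_gt hd3), Real.rpow_one]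
            rw [hrw]
            exact Real.rpow_le_rpow (Real.rpow_nonneg hR0.le _) hRd3
              (div_nonneg zero_le_one hd3.le)
          have hsa : k*P*(l-1) ≤ s := le_trans halb hs.1
          have hs'N1 : s' ≤ N1 := hs'.2
          have hss' : s' / (c3*s) ≤ (k*l/(l-1))/c3 := by
            rw [div_le_div_iff₀ (mul_pos hc3 hs0) hc3]
            have hW0 : (0:ℝ) < k*l/(l-1) := div_pos hkl0 hl10
            have step1 : (k*l/(l-1)) * (c3*(k*P*(l-1))) ≤ (k*l/(l-1)) * (c3*s) :=
              mul_le_mul_of_nonneg_left (mul_le_mul_of_nonneg_left hsa hc3.le) hW0.le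
            have step2 : (k*l/(l-1)) * (c3*(k*P*(l-1))) = c3 * N1 := by
              rw [hN1def]
              have hl1ne : l - 1 ≠ 0 := hl10.ne'
              field_simp
            nlinarith only [step1, step2, hs'N1, hc3]
          have hqnn : 0 ≤ s'/(c3*s) := div_nonneg hs'0.le (mul_pos hc3 hs0).le
          have hRd2 : R ^ d2 ≤ (k*l/(l-1))^(d2/d3) / c3^(d2/d3) := by
            have h6 : R ^ d2 ≤ ((s'/(c3*s))^(1/d3))^d2 :=
              Real.rpow_le_rpow hR0.le hRle hd2.le
            have h7 : ((s'/(c3*s))^(1/d3))^d2 = (s'/(c3*s))^(d2/d3) := by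
              rw [← Real.rpow_mul hqnn, show 1/d3*d2 = d2/d3 by ring]
            have h8 : (s'/(c3*s))^(d2/d3) ≤ ((k*l/(l-1))/c3)^(d2/d3) :=
              Real.rpow_le_rpow hqnn hss' hdd
            have h9 : ((k*l/(l-1))/c3)^(d2/d3) = (k*l/(l-1))^(d2/d3)/c3^(d2/d3) :=
              Real.div_rpow (div_nonneg hkl0.le hl10.le) hc3.le _
            rw [h7] at h6
            rw [h9] at h8
            linarith only [h6, h8]
          have h10 : V x (φinv s') ≤ c2 * R^d2 * V x (φinv s) := by
            rw [div_le_iff₀ hVs] at hg1'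
            exact hg1'
          calc V x (φinv s') ≤ c2 * R^d2 * V x (φinv s) := h10
            _ ≤ c2 * ((k*l/(l-1))^(d2/d3)/c3^(d2/d3)) * V x (φinv s) := by
              apply mul_le_mul_of_nonneg_right _ hVs.le
              exact mul_le_mul_of_nonneg_left hRd2 hc20.le
            _ = Q * V x (φinv s) := by rw [hQdef]; ring
      -- upper bound for I1 by a multiple of I2
      have hFub : ∀ s ∈ Icc a (b + φ ρ), 1 / V x (φinv s) ≤ Q * I2 / (N1 - k*P) := by
        intro s hs
        have hs0 : 0 < s := lt_of_lt_of_le ha0 hs.1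
        have hVs := hVφpos s hs0
        have h2 : (∫ _ in (k*P)..N1, (1 / V x (φinv s))) ≤
            ∫ s' in (k*P)..N1, Q * (1 / V x (φinv s')) := by
          apply intervalIntegral.integral_mono_on hkPN1 intervalIntegrable_const
            ((hFint _ _ hkP0 hkPN1).const_mul Q)
          intro s' hs'
          have hs'0 : 0 < s' := lt_of_lt_of_le hkP0 hs'.1
          have hVs' := hVφpos s' hs'0
          rw [mul_one_div, div_le_div_iff₀ hVs hVs', one_mul]
          exact hpoint s hs s' hs'
        have h1 : (N1 - k*P) * (1 / V x (φinv s)) ≤ Q * I2 := by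
          calc (N1 - k*P) * (1 / V x (φinv s))
              = ∫ _ in (k*P)..N1, (1 / V x (φinv s)) := by
                rw [intervalIntegral.integral_const, smul_eq_mul]
            _ ≤ ∫ s' in (k*P)..N1, Q * (1 / V x (φinv s')) := h2
            _ = Q * I2 := by rw [intervalIntegral.integral_const_mul, hI2def]
        rw [le_div_iff₀ hlen2]
        linarith only [h1]
      have hI1ub : I1 ≤ (b + φ ρ - a) * (Q * I2 / (N1 - k*P)) := by
        rw [hI1def]
        calc (∫ s in a..(b + φ ρ), 1 / V x (φinv s))
            ≤ ∫ _ in a..(b + φ ρ), (Q * I2 / (N1 - k*P)) :=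
              intervalIntegral.integral_mono_on habc (hFint a _ ha0 habc)
                intervalIntegrable_const hFub
          _ = (b + φ ρ - a) * (Q * I2 / (N1 - k*P)) := by
              rw [intervalIntegral.integral_const, smul_eq_mul]
      have hlen1 : b + φ ρ - a ≤ 3 * (N1 - k*P) := by
        have f1 : Ni*(k-1) ≤ P*(k-1) :=
          mul_le_mul_of_nonneg_right hNiP (by linarith)
        have f2 : P*(k-1) ≤ (k*l)*P*(k-1) := by
          linarith only [mul_nonneg (sub_pos.2 hkl1).le
            (mul_nonneg hP0.le (show (0:ℝ) ≤ k - 1 by linarith))]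
        have f3 : φ ρ ≤ k*(k*l*P)*((l-1)/2) := by rw [← hN1def]; exact hφρle
        have f4 : k*(k*l*P)*((l-1)/2) ≤ 3*(k*P)*(l-1) := by
          linarith only [mul_nonneg (mul_pos (mul_pos hk0 hP0) hl10).le
            (show (0:ℝ) ≤ 2 - k*l by linarith), mul_pos (mul_pos hk0 hP0) hl10]
        have f5 : (0:ℝ) ≤ k*l*P*(k-1) :=
          mul_nonneg (mul_pos hkl0 hP0).le (by linarith)
        rw [hadef, hbdef, hN1def]
        linarith only [f1, f2, f3, f4, f5]
      have hQI2 : 0 ≤ Q * I2 / (N1 - k*P) :=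
        div_nonneg (mul_nonneg hQ0.le hI20) hlen2.le
      have hI1ub2 : I1 ≤ 3 * (Q * I2) := by
        have hne : N1 - k*P ≠ 0 := hlen2.ne'
        calc I1 ≤ (b + φ ρ - a) * (Q * I2 / (N1 - k*P)) := hI1ub
          _ ≤ 3 * (N1 - k*P) * (Q * I2 / (N1 - k*P)) :=
            mul_le_mul_of_nonneg_right hlen1 hQI2
          _ = 3 * (Q * I2) := by field_simp
      -- volume doubling for 2ρ
      have hV2ub : V x (2*ρ) ≤ 2^d2 * c2 * V x ρ := by
        have h := (hVgrowth x ρ (2*ρ) hρ0 (by linarith)).2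
        have h2 : (2*ρ)/ρ = 2 := by
          rw [mul_div_assoc, div_self hρ0.ne', mul_one]
        rw [h2, div_le_iff₀ hVρ] at h
        linarith only [h]
      -- assembling
      have hDpos : 0 < L1 * φ ρ := mul_pos hL1 hφρpos
      have hN0 : 0 ≤ ∫ s in a..(b + φ ρ), u x s (2*ρ) :=
        intervalIntegral.integral_nonneg habc (fun s _ => hu_nonneg x s _)
      have hstep1 : H x ρ a b ≤ (∫ s in a..(b + φ ρ), u x s (2*ρ)) / (L1 * φ ρ) :=
        le_trans hmain (div_le_div_of_nonneg_left hN0 hDpos hDlb)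
      calc H x ρ a b ≤ (∫ s in a..(b + φ ρ), u x s (2*ρ)) / (L1 * φ ρ) := hstep1
        _ ≤ (L2 * V x (2*ρ) * I1) / (L1 * φ ρ) := by
            exact (div_le_div_iff_of_pos_right hDpos).2 hNub
        _ ≤ (L2 * V x (2*ρ) * (3*(Q*I2))) / (L1 * φ ρ) := by
            apply (div_le_div_iff_of_pos_right hDpos).2
            exact mul_le_mul_of_nonneg_left hI1ub2 (mul_pos hL20 hV2pos).le
        _ ≤ (L2 * (2^d2 * c2 * V x ρ) * (3*(Q*I2))) / (L1 * φ ρ) := by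
            apply (div_le_div_iff_of_pos_right hDpos).2
            apply mul_le_mul_of_nonneg_right _
              (mul_nonneg (by norm_num) (mul_nonneg hQ0.le hI20))
            exact mul_le_mul_of_nonneg_left hV2ub hL20.le
        _ = (3 * ((2:ℝ) ^ d2 * c2 * L2 / L1) * c2 / c3 ^ (d2/d3)) *
              (k * l / (l - 1)) ^ (d2/d3) * (V x ρ / φ ρ) * I2 := by
            rw [hQdef]
            have hL1ne : L1 ≠ 0 := hL1.ne'
            have hφρne : φ ρ ≠ 0 := hφρpos.ne'
            have hc3ddne : c3 ^ (d2/d3) ≠ 0 := hc3dd.ne'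
            field_simp
    · have hD : (∫ s in (0:ℝ)..(φ ρ), ⨅ y : {y : M // dist y x ≤ ρ}, u y.1 s ρ) = 0 :=
        intervalIntegral.integral_undef hIntD
      rw [hD, div_zero] at hmain
      exact le_trans hmain hRHS0
  · have hN : (∫ s in a..(b + φ ρ), u x s (2*ρ)) = 0 :=
      intervalIntegral.integral_undef hIntN
    rw [hN, zero_div] at hmain
    exact le_trans hmain hRHS0
end

section
/- Suppose d1 > d4 and 1 < l < k < 2. Fix t > 0, define the sequence n_0 = t, n_{2m+1} = k·n_{2m}, n_{2m+2} = l·n_{2m+1} (m ≥ 0), and set R_{k,t} := inf{g(u)/g(v) : 1 ≤ u/v ≤ k, v ≥ t}. Then for every x ∈ M and every integer i ≥ 0, writing ρ_i := (c3/k)^{1/d3}·φ⁻¹(n_{2i+1})·g(n_{2i+1}): (V(x,ρ_i)/φ(ρ_i))·∫_{n_{2i}}^{n_{2i+1}} du/V(x,φ⁻¹(u)) ≥ (c1·c3^{2d2/d3}/(c2²·c4))·((k−1)/(kl−1))·k^{1−2d2/d3}·min{R_{k,t}, (c3/l)^{1/d3}}^{d2−d3}·∫_{n_{2i}}^{n_{2i+2}}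 [V(x, φ⁻¹(u)·g(u)) / (φ(φ⁻¹(u)·g(u))·V(x,φ⁻¹(u)))] du. -/
open Real Set MeasureTheory

lemma ratio_le_aux {x y q c p : ℝ} (hx : 0 < x) (hy : 0 < y) (hc : 0 < c) (hp : 0 < p)
    (h : c * (y / x) ^ p ≤ q) : y ≤ (q / c) ^ (1 / p) * x := by
  have hyx : (0:ℝ) < y / x := div_pos hy hx
  have h1 : (y / x) ^ p ≤ q / c := by rw [le_div_iff₀' hc]; exact h
  have h2 : y / x ≤ (q / c) ^ (1 / p) := by
    have h3 := Real.rpow_le_rpow (le_of_lt (Real.rpow_pos_of_pos hyx p)) h1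
      (by positivity : (0:ℝ) ≤ 1 / p)
    rwa [← Real.rpow_mul hyx.le, mul_one_div, div_self hp.ne', Real.rpow_one] at h3
  calc y = (y / x) * x := by field_simp
  _ ≤ (q / c) ^ (1 / p) * x := by gcongr

lemma growth_upper_aux {f : ℝ → ℝ} {c2 d2 : ℝ} (hc2 : 1 ≤ c2)
    (hgrow : ∀ r R : ℝ, 0 < r → r < R → f R / f r ≤ c2 * (R / r) ^ d2)
    {r R : ℝ} (hr : 0 < r) (hfr : 0 < f r) (hrR : r ≤ R) :
    f R ≤ c2 * (R / r) ^ d2 * f r := by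
  rcases eq_or_lt_of_le hrR with h | h
  · subst h
    have : (r / r : ℝ) = 1 := div_self hr.ne'
    rw [this, Real.one_rpow, mul_one]
    nlinarith
  · have := hgrow r R hr h
    rw [div_le_iff₀ hfr] at this
    exact this

lemma growth_lower_aux {f : ℝ → ℝ} {c1 d1 : ℝ} (hc1' : c1 ≤ 1)
    (hgrow : ∀ r R : ℝ, 0 < r → r < R → c1 * (R / r) ^ d1 ≤ f R / f r)
    {r R : ℝ} (hr : 0 < r) (hfr : 0 < f r) (hrR : r ≤ R) :
    c1 * (R / r) ^ d1 * f r ≤ f R := by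
  rcases eq_or_lt_of_le hrR with h | h
  · subst h
    have : (r / r : ℝ) = 1 := div_self hr.ne'
    rw [this, Real.one_rpow, mul_one]
    nlinarith
  · have := hgrow r R hr h
    rw [le_div_iff₀ hfr] at this
    exact this
set_option maxHeartbeats 1000000 in
/-- (transient case) comparison of the block integral with the
full lower-rate integrand (Lemma 5.9 / `lem:int-int`). -/
theorem transient_block_integral_comparison
    {M : Type*} [MetricSpace M]
    (V : M → ℝ → ℝ) (c1 c2 d1 d2 : ℝ)
    (hc1 : 0 < c1) (hc1' : c1 ≤ 1) (hc2 : 1 ≤ c2) (hd1 : 0 < d1) (hd12 : d1 ≤ d2)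
    (hVpos : ∀ (x : M) (r : ℝ), 0 < r → 0 < V x r)
    (hVmono : ∀ x : M, MonotoneOn (V x) (Ioi (0:ℝ)))
    (hVgrowth : ∀ (x : M) (r R : ℝ), 0 < r → r < R →
      c1 * (R / r) ^ d1 ≤ V x R / V x r ∧ V x R / V x r ≤ c2 * (R / r) ^ d2)
    (φ φinv : ℝ → ℝ) (c3 c4 d3 d4 : ℝ)
    (hc3 : 0 < c3) (hc3' : c3 ≤ 1) (hc4 : 1 ≤ c4) (hd3 : 0 < d3) (hd34 : d3 ≤ d4)
    (hφ0 : φ 0 = 0)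
    (hφmono : StrictMonoOn φ (Ici (0:ℝ)))
    (hφcont : ContinuousOn φ (Ici (0:ℝ)))
    (hφsurj : ∀ y : ℝ, 0 ≤ y → ∃ x : ℝ, 0 ≤ x ∧ φ x = y)
    (hφinv_nonneg : ∀ y : ℝ, 0 ≤ y → 0 ≤ φinv y)
    (hφinv_right : ∀ y : ℝ, 0 ≤ y → φ (φinv y) = y)
    (hφinv_left : ∀ x : ℝ, 0 ≤ x → φinv (φ x) = x)
    (hφgrowth : ∀ r R : ℝ, 0 < r → r < R →
      c3 * (R / r) ^ d3 ≤ φ R / φ r ∧ φ R / φ r ≤ c4 * (R / r) ^ d4)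
    (hd41 : d4 < d1)
    (g : ℝ → ℝ) (hg_pos : ∀ t : ℝ, 0 < t → 0 < g t)
    (hg_anti : AntitoneOn g (Ioi (0:ℝ)))
    (hg_lim : Filter.Tendsto g Filter.atTop (nhds 0))
    (t k l : ℝ) (ht : 0 < t)
    (hl : 1 < l) (hlk : l < k) (hk : k < 2)
    (n : ℕ → ℝ) (hn0 : n 0 = t)
    (hodd : ∀ m : ℕ, n (2*m+1) = k * n (2*m))
    (heven : ∀ m : ℕ, n (2*m+2) = l * n (2*m+1))
    (Rkt : ℝ)
    (hRkt : Rkt = sInf {w : ℝ | ∃ s v : ℝ, t ≤ v ∧ 1 ≤ s / v ∧ s / v ≤ k ∧ w = g s / g v}) :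
    ∀ (x : M) (i : ℕ),
      (c1 * c3 ^ (2*d2/d3) / (c2 ^ 2 * c4)) * ((k - 1) / (k * l - 1)) *
          k ^ (1 - 2*d2/d3) *
          (min Rkt ((c3/l) ^ (1/d3))) ^ (d2 - d3) *
          (∫ s in (n (2*i))..(n (2*i+2)),
            V x (φinv s * g s) / (φ (φinv s * g s) * V x (φinv s))) ≤
        (V x ((c3/k) ^ (1/d3) * (φinv (n (2*i+1)) * g (n (2*i+1)))) /
          φ ((c3/k) ^ (1/d3) * (φinv (n (2*i+1)) * g (n (2*i+1))))) *
          ∫ s in (n (2*i))..(n (2*i+1)), 1 / V x (φinv s) := by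
  intro x i
  have hk1 : (1:ℝ) < k := hl.trans hlk
  have hkpos : (0:ℝ) < k := by linarith
  have hlpos : (0:ℝ) < l := by linarith
  have hd23 : d3 < d2 := lt_of_le_of_lt hd34 (lt_of_lt_of_le hd41 hd12)
  have hd3ne : d3 ≠ 0 := hd3.ne'
  -- the sequence stays above t
  have hA_ge : ∀ j : ℕ, t ≤ n (2*j) := by
    intro j
    induction j with
    | zero => simp [hn0]
    | succ m ih =>
      have hpos : 0 < n (2*m) := lt_of_lt_of_le ht ih
      have h1 : n (2*(m+1)) = l * (k * n (2*m)) := by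
        have h2 : 2*(m+1) = 2*m + 2 := by ring
        rw [h2, heven m, hodd m]
      rw [h1]
      have hlk1 : 1 < l*k := by nlinarith only [hl, hk1]
      linarith only [ih, mul_le_mul_of_nonneg_right hlk1.le hpos.le]
  set A := n (2*i) with hAdef
  set B := n (2*i+1) with hBdef
  set Cc := n (2*i+2) with hCdef
  have hAt : t ≤ A := hA_ge i
  have hApos : 0 < A := lt_of_lt_of_le ht hAt
  have hB : B = k * A := hodd i
  have hC : Cc = l * B := heven i
  have hBpos : 0 < B := by rw [hB]; positivity
  have hCpos : 0 < Cc := by rw [hC]; positivity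
  have hAB : A < B := by rw [hB]; nlinarith only [hApos, hk1]
  have hBC : B < Cc := by rw [hC]; nlinarith only [hBpos, hl]
  have hAC : A < Cc := hAB.trans hBC
  -- φ and φinv basics
  have hφpos : ∀ r : ℝ, 0 < r → 0 < φ r := by
    intro r hr
    have h := hφmono Set.self_mem_Ici hr.le hr
    rwa [hφ0] at h
  have hφinv_mono : ∀ y z : ℝ, 0 ≤ y → y ≤ z → φinv y ≤ φinv z := by
    intro y z hy hyz
    by_contra hcon
    push_neg at hcon
    have h := hφmono (hφinv_nonneg z (hy.trans hyz)) (hφinv_nonneg y hy) hcon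
    rw [hφinv_right y hy, hφinv_right z (hy.trans hyz)] at h
    exact absurd h (not_lt.mpr hyz)
  have hφinv_pos : ∀ y : ℝ, 0 < y → 0 < φinv y := by
    intro y hy
    rcases lt_or_eq_of_le (hφinv_nonneg y hy.le) with h | h
    · exact h
    · exfalso
      have h2 := hφinv_right y hy.le
      rw [← h, hφ0] at h2
      linarith
  have hφinv_ratio : ∀ u w q : ℝ, 0 < u → u ≤ w → w / u ≤ q →
      φinv w ≤ (q / c3) ^ (1/d3) * φinv u := by
    intro u w q hu huw hq
    have hwpos : 0 < w := lt_of_lt_of_le hu huw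
    have hiu := hφinv_pos u hu
    have hiw := hφinv_pos w hwpos
    have hq1 : 1 ≤ q := le_trans (by rw [le_div_iff₀ hu]; linarith only [huw]) hq
    rcases eq_or_lt_of_le (hφinv_mono u w hu.le huw) with h | h
    · rw [← h]
      have hcoef : 1 ≤ (q / c3) ^ (1/d3) := by
        calc (1:ℝ) = 1 ^ (1/d3) := (Real.one_rpow _).symm
        _ ≤ (q / c3) ^ (1/d3) :=
          Real.rpow_le_rpow zero_le_one
            (by rw [le_div_iff₀ hc3]; linarith only [hq1, hc3']) (by positivity)
      linarith only [mul_le_mul_of_nonneg_right hcoef hiu.le]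
    · have hg2 := (hφgrowth (φinv u) (φinv w) hiu h).1
      rw [hφinv_right u hu.le, hφinv_right w hwpos.le] at hg2
      exact ratio_le_aux hiu hiw hc3 hd3 (le_trans hg2 hq)
  -- the key radius
  set Pq := φinv B * g B with hPdef
  have hgB : 0 < g B := hg_pos B hBpos
  have hPpos : 0 < Pq := mul_pos (hφinv_pos B hBpos) hgB
  set θ := (c3/k) ^ (1/d3) with hθdef
  have hθpos : 0 < θ := by rw [hθdef]; positivity
  set ρ := θ * Pq with hρdef
  have hρpos : 0 < ρ := mul_pos hθpos hPpos
  have hVρ : 0 < V x ρ := hVpos x ρ hρpos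
  have hφρ : 0 < φ ρ := hφpos ρ hρpos
  set μ := min Rkt ((c3/l) ^ (1/d3)) with hμdef
  -- basic facts about Rkt
  have hSne : {w : ℝ | ∃ s v : ℝ, t ≤ v ∧ 1 ≤ s / v ∧ s / v ≤ k ∧ w = g s / g v}.Nonempty := by
    refine ⟨g t / g t, t, t, le_refl t, ?_, ?_, rfl⟩
    · rw [div_self ht.ne']
    · rw [div_self ht.ne']; linarith
  have hlb : ∀ w ∈ {w : ℝ | ∃ s v : ℝ, t ≤ v ∧ 1 ≤ s / v ∧ s / v ≤ k ∧ w = g s / g v},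
      (0:ℝ) ≤ w := by
    rintro w ⟨s, v, hv, h1, h2, rfl⟩
    have hvpos : 0 < v := lt_of_lt_of_le ht hv
    have hspos : 0 < s := by
      have h3 : v ≤ s := by rwa [le_div_iff₀ hvpos, one_mul] at h1
      linarith
    exact le_of_lt (div_pos (hg_pos s hspos) (hg_pos v hvpos))
  have hSbdd : BddBelow {w : ℝ | ∃ s v : ℝ, t ≤ v ∧ 1 ≤ s / v ∧ s / v ≤ k ∧ w = g s / g v} :=
    ⟨0, hlb⟩
  have hRkt_nonneg : 0 ≤ Rkt := hRkt ▸ le_csInf hSne hlb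
  have hRkt_le : ∀ s v : ℝ, t ≤ v → 1 ≤ s / v → s / v ≤ k → Rkt ≤ g s / g v := by
    intro s v h1 h2 h3
    rw [hRkt]; exact csInf_le hSbdd ⟨s, v, h1, h2, h3, rfl⟩
  -- monotonicity of u ↦ V x (φinv u) and integrability
  have hWmono : ∀ u v : ℝ, 0 < u → u ≤ v → V x (φinv u) ≤ V x (φinv v) := by
    intro u v hu huv
    exact hVmono x (mem_Ioi.mpr (hφinv_pos u hu))
      (mem_Ioi.mpr (hφinv_pos v (lt_of_lt_of_le hu huv))) (hφinv_mono u v hu.le huv)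
  have hanti2 : AntitoneOn (fun u => 1 / V x (φinv u)) (uIcc A Cc) := by
    rw [uIcc_of_le hAC.le]
    intro u hu v hv huv
    have hupos : 0 < u := lt_of_lt_of_le hApos hu.1
    have h1 : 0 < V x (φinv u) := hVpos x _ (hφinv_pos u hupos)
    exact one_div_le_one_div_of_le h1 (hWmono u v hupos huv)
  have hanti1 : AntitoneOn (fun u => 1 / V x (φinv u)) (uIcc A B) := by
    apply hanti2.mono
    rw [uIcc_of_le hAC.le, uIcc_of_le hAB.le]
    exact Icc_subset_Icc (le_refl _) hBC.le
  have hint2 : IntervalIntegrable (fun u => 1 / V x (φinv u)) volume A Cc :=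
    hanti2.intervalIntegrable
  have hint1 : IntervalIntegrable (fun u => 1 / V x (φinv u)) volume A B :=
    hanti1.intervalIntegrable
  have hI1nonneg : 0 ≤ ∫ s in A..B, 1 / V x (φinv s) := by
    apply intervalIntegral.integral_nonneg hAB.le
    intro u hu
    have h1 : 0 < V x (φinv u) := hVpos x _ (hφinv_pos u (lt_of_lt_of_le hApos hu.1))
    positivity
  have hRHS : 0 ≤ (V x ρ / φ ρ) * ∫ s in A..B, 1 / V x (φinv s) :=
    mul_nonneg (div_nonneg hVρ.le hφρ.le) hI1nonneg
  rcases eq_or_lt_of_le hRkt_nonneg with hR0 | hRpos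
  · -- degenerate case : Rkt = 0
    have hμ0 : μ = 0 := by
      rw [hμdef, ← hR0]
      exact min_eq_left (by positivity)
    rw [hμ0, Real.zero_rpow (by linarith only [hd23] : (0:ℝ) < d2 - d3).ne']
    simpa using hRHS
  -- main case : Rkt > 0
  have hμpos : 0 < μ := lt_min hRpos (by positivity)
  have hμR : μ ≤ Rkt := min_le_left _ _
  have hμθl : μ ≤ (c3/l) ^ (1/d3) := min_le_right _ _
  have hμ1 : μ ≤ 1 := le_trans hμθl
    (Real.rpow_le_one (by positivity) (by rw [div_le_one hlpos]; linarith) (by positivity))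
  set X := (k/c3) ^ (d2/d3) with hXdef
  have hXpos : 0 < X := by rw [hXdef]; positivity
  set Kpt := (c2*c4/c1) * X * μ ^ (d3-d2) / k with hKdef
  have hμ'pos : 0 < μ ^ (d3-d2) := Real.rpow_pos_of_pos hμpos _
  have hKpos : 0 < Kpt := by
    rw [hKdef]
    have := hc1; have := hc2; positivity
  -- pointwise comparison of V/φ at radius φinv u * g u with the fixed radius ρ
  have hpoint : ∀ u : ℝ, A ≤ u → u ≤ Cc →
      V x (φinv u * g u) / φ (φinv u * g u) ≤ Kpt * (V x ρ / φ ρ) := by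
    intro u hu1 hu2
    have hupos : 0 < u := lt_of_lt_of_le hApos hu1
    have hiu : 0 < φinv u := hφinv_pos u hupos
    have hgu : 0 < g u := hg_pos u hupos
    set r := φinv u * g u with hrdef
    have hrpos : 0 < r := mul_pos hiu hgu
    have hφr : 0 < φ r := hφpos r hrpos
    have hVr : 0 < V x r := hVpos x r hrpos
    -- step 1 : r ≤ μ⁻¹ * Pq
    have hstep1 : r ≤ μ⁻¹ * Pq := by
      rcases le_or_gt u B with hcase | hcase
      · have h1 : φinv u ≤ φinv B := hφinv_mono u B hupos.le hcase
        have h2 : Rkt ≤ g B / g u := by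
          apply hRkt_le B u (le_trans hAt hu1)
          · rw [le_div_iff₀ hupos]; linarith only [hcase]
          · rw [div_le_iff₀ hupos, hB]
            nlinarith only [hu1, hkpos]
        have h2' : Rkt * g u ≤ g B := (le_div_iff₀ hgu).mp h2
        have h5 : g u ≤ μ⁻¹ * g B := by
          rw [inv_mul_eq_div, le_div_iff₀ hμpos]
          nlinarith only [h2', hμR, hgu]
        calc r = φinv u * g u := rfl
        _ ≤ φinv B * (μ⁻¹ * g B) :=
          mul_le_mul h1 h5 hgu.le (hφinv_nonneg B hBpos.le)
        _ = μ⁻¹ * Pq := by rw [hPdef]; ring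
      · have h1 : φinv u ≤ (l / c3) ^ (1/d3) * φinv B := by
          apply hφinv_ratio B u l hBpos hcase.le
          rw [div_le_iff₀ hBpos]
          rw [hC] at hu2; linarith
        have h2 : g u ≤ g B := hg_anti (mem_Ioi.mpr hBpos) (mem_Ioi.mpr hupos) hcase.le
        have h3 : (l/c3 : ℝ) ^ (1/d3) ≤ μ⁻¹ := by
          have e : (l/c3 : ℝ) = (c3/l)⁻¹ := by rw [inv_div]
          rw [e, Real.inv_rpow (by positivity : (0:ℝ) ≤ c3/l)]
          exact inv_anti₀ hμpos hμθl
        calc r = φinv u * g u := rfl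
        _ ≤ ((l/c3) ^ (1/d3) * φinv B) * g B :=
          mul_le_mul h1 h2 hgu.le (mul_nonneg (by positivity) (hφinv_nonneg B hBpos.le))
        _ = (l/c3) ^ (1/d3) * Pq := by rw [hPdef]; ring
        _ ≤ μ⁻¹ * Pq := mul_le_mul_of_nonneg_right h3 hPpos.le
    -- step 2 : split on r ≤ ρ or ρ < r
    rcases le_or_gt r ρ with hcase | hcase
    · -- small radius : use lower volume growth and upper φ growth
      have hVlow := growth_lower_aux hc1'
        (fun r R hr hrR => (hVgrowth x r R hr hrR).1) hrpos hVr hcase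
      have hφup := growth_upper_aux hc4
        (fun r R hr hrR => (hφgrowth r R hr hrR).2) hrpos hφr hcase
      have hq1 : 1 ≤ ρ / r := (one_le_div hrpos).mpr hcase
      have hqd : (ρ/r) ^ d4 ≤ (ρ/r) ^ d1 :=
        Real.rpow_le_rpow_of_exponent_le hq1 (by linarith)
      have hx1 : 0 < (ρ/r) ^ d1 := Real.rpow_pos_of_pos (by positivity) _
      have hmain : V x r / φ r ≤ (c4/c1) * (V x ρ / φ ρ) := by
        rw [← mul_div_assoc]
        apply (div_le_div_iff₀ hφr hφρ).mpr
        -- goal : V x r * φ ρ ≤ c4/c1 * V x ρ * φ r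
        have hφup2 : φ ρ ≤ c4 * ((ρ/r) ^ d1 * φ r) := by
          have h := mul_le_mul_of_nonneg_right hqd hφr.le
          calc φ ρ ≤ c4 * (ρ/r) ^ d4 * φ r := hφup
          _ = c4 * ((ρ/r) ^ d4 * φ r) := by ring
          _ ≤ c4 * ((ρ/r) ^ d1 * φ r) := by
            apply mul_le_mul_of_nonneg_left h (by linarith)
        have key := mul_le_mul_of_nonneg_left
          (mul_le_mul_of_nonneg_right hVlow hφr.le)
          (le_of_lt (div_pos (by linarith : (0:ℝ) < c4) hc1))
        have e : (c4/c1) * (c1 * (ρ/r) ^ d1 * V x r * φ r)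
            = V x r * (c4 * ((ρ/r) ^ d1 * φ r)) := by
          field_simp
        rw [e] at key
        have h9 := mul_le_mul_of_nonneg_left hφup2 hVr.le
        linarith only [key, h9]
      have hKge : c4/c1 ≤ Kpt := by
        have hc41 : (0:ℝ) < c4/c1 := div_pos (by linarith) hc1
        have h1 : (k:ℝ) ≤ X := by
          rw [hXdef]
          have hk3 : k ≤ k/c3 := by rw [le_div_iff₀ hc3]; nlinarith only [hc3', hkpos]
          calc (k:ℝ) = k ^ (1:ℝ) := (Real.rpow_one k).symm
          _ ≤ k ^ (d2/d3) := Real.rpow_le_rpow_of_exponent_le hk1.le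
            (by rw [le_div_iff₀ hd3]; linarith)
          _ ≤ (k/c3) ^ (d2/d3) := Real.rpow_le_rpow hkpos.le hk3
            (div_nonneg (by linarith) hd3.le)
        have h2 : (1:ℝ) ≤ μ ^ (d3-d2) :=
          Real.one_le_rpow_of_pos_of_le_one_of_nonpos hμpos hμ1 (by linarith)
        rw [hKdef, le_div_iff₀ hkpos]
        calc c4/c1 * k ≤ c4/c1 * X := mul_le_mul_of_nonneg_left h1 hc41.le
        _ = (1 * (c4/c1) * X) * 1 := by ring
        _ ≤ (c2 * (c4/c1) * X) * (μ ^ (d3-d2)) := by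
          apply mul_le_mul _ h2 zero_le_one
            (by positivity)
          · apply mul_le_mul_of_nonneg_right _ hXpos.le
            apply mul_le_mul_of_nonneg_right hc2 hc41.le
        _ = c2 * c4 / c1 * X * μ ^ (d3-d2) := by ring
      calc V x r / φ r ≤ (c4/c1) * (V x ρ / φ ρ) := hmain
      _ ≤ Kpt * (V x ρ / φ ρ) :=
        mul_le_mul_of_nonneg_right hKge (div_nonneg hVρ.le hφρ.le)
    · -- large radius : use upper volume growth and lower φ growth
      have hVup := growth_upper_aux hc2
        (fun r R hr hrR => (hVgrowth x r R hr hrR).2) hρpos hVρ hcase.le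
      have hφlow := growth_lower_aux hc3'
        (fun r R hr hrR => (hφgrowth r R hr hrR).1) hρpos hφρ hcase.le
      have hrρ2 : r / ρ ≤ (μ*θ)⁻¹ := by
        rw [div_le_iff₀ hρpos]
        calc r ≤ μ⁻¹ * Pq := hstep1
        _ = (μ*θ)⁻¹ * ρ := by
          rw [hρdef]; field_simp
      have hQ : (r/ρ) ^ (d2-d3) ≤ μ ^ (d3-d2) * θ ^ (d3-d2) := by
        have h1 : (r/ρ) ^ (d2-d3) ≤ ((μ*θ)⁻¹) ^ (d2-d3) :=
          Real.rpow_le_rpow (by positivity) hrρ2 (by linarith)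
        have h2 : ((μ*θ)⁻¹) ^ (d2-d3) = μ ^ (d3-d2) * θ ^ (d3-d2) := by
          rw [mul_inv, Real.mul_rpow (by positivity) (by positivity),
            Real.inv_rpow hμpos.le, Real.inv_rpow hθpos.le,
            ← Real.rpow_neg hμpos.le, ← Real.rpow_neg hθpos.le,
            show -(d2-d3) = d3-d2 by ring]
        rw [h2] at h1; exact h1
      have hθe : θ ^ (d3-d2) = (c3/k) * X := by
        rw [hθdef, hXdef, ← Real.rpow_mul (by positivity : (0:ℝ) ≤ c3/k),
          show (1/d3)*(d3-d2) = 1 - d2/d3 by field_simp,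
          Real.rpow_sub (by positivity : (0:ℝ) < c3/k), Real.rpow_one, div_eq_mul_inv,
          ← Real.inv_rpow (by positivity : (0:ℝ) ≤ c3/k), inv_div]
      have hmain : V x r / φ r ≤ ((c2/c3) * ((r/ρ) ^ (d2-d3))) * (V x ρ / φ ρ) := by
        rw [div_le_iff₀ hφr]
        have h2 : (r/ρ) ^ d2 = (r/ρ) ^ (d2-d3) * (r/ρ) ^ d3 := by
          rw [← Real.rpow_add (by positivity : (0:ℝ) < r/ρ)]; ring_nf
        have hq3 : (r/ρ) ^ d3 ≤ φ r / (c3 * φ ρ) := by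
          rw [le_div_iff₀ (by positivity)]
          calc (r/ρ) ^ d3 * (c3 * φ ρ) = c3 * (r/ρ) ^ d3 * φ ρ := by ring
          _ ≤ φ r := hφlow
        calc V x r ≤ c2 * (r/ρ) ^ d2 * V x ρ := hVup
        _ = (c2 * V x ρ * (r/ρ) ^ (d2-d3)) * ((r/ρ) ^ d3) := by rw [h2]; ring
        _ ≤ (c2 * V x ρ * (r/ρ) ^ (d2-d3)) * (φ r / (c3 * φ ρ)) := by
          apply mul_le_mul_of_nonneg_left hq3
          exact mul_nonneg (mul_nonneg (by linarith) hVρ.le)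
            (Real.rpow_pos_of_pos (by positivity) _).le
        _ = ((c2/c3) * ((r/ρ) ^ (d2-d3))) * (V x ρ / φ ρ) * φ r := by
          rw [div_eq_mul_inv (φ r), mul_inv, div_eq_mul_inv c2 c3,
            div_eq_mul_inv (V x ρ)]
          ring
      have hcoef2 : (c2/c3) * ((r/ρ) ^ (d2-d3)) ≤ Kpt := by
        have h3 : (c2/c3) * ((r/ρ) ^ (d2-d3)) ≤ (c2/c3) * (μ ^ (d3-d2) * θ ^ (d3-d2)) :=
          mul_le_mul_of_nonneg_left hQ (by positivity)
        rw [hθe] at h3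
        have h4 : (c2/c3) * (μ ^ (d3-d2) * ((c3/k) * X)) = c2 * X * μ ^ (d3-d2) / k := by
          field_simp
        rw [h4] at h3
        refine le_trans h3 ?_
        rw [hKdef]
        have h5 : c2 * X * μ ^ (d3-d2) ≤ c2 * c4 / c1 * X * μ ^ (d3-d2) := by
          have h6 : c2 ≤ c2 * c4 / c1 := by
            rw [le_div_iff₀ hc1]; nlinarith only [hc2, hc4, hc1']
          apply mul_le_mul_of_nonneg_right _ hμ'pos.le
          exact mul_le_mul_of_nonneg_right h6 hXpos.le
        exact (div_le_div_iff_of_pos_right hkpos).mpr h5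
      calc V x r / φ r ≤ ((c2/c3) * ((r/ρ) ^ (d2-d3))) * (V x ρ / φ ρ) := hmain
      _ ≤ Kpt * (V x ρ / φ ρ) :=
        mul_le_mul_of_nonneg_right hcoef2 (div_nonneg hVρ.le hφρ.le)
  -- the ratio V x (φinv B) / V x (φinv A)
  have hWA : 0 < V x (φinv A) := hVpos x _ (hφinv_pos A hApos)
  have hWB : 0 < V x (φinv B) := hVpos x _ (hφinv_pos B hBpos)
  have h4 : V x (φinv B) ≤ c2 * X * V x (φinv A) := by
    have hiA : 0 < φinv A := hφinv_pos A hApos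
    have hiAB : φinv B ≤ (k / c3) ^ (1/d3) * φinv A := by
      apply hφinv_ratio A B k hApos hAB.le
      rw [hB, mul_div_assoc, div_self hApos.ne', mul_one]
    have hcoef : (1:ℝ) ≤ (k/c3) ^ (1/d3) := by
      calc (1:ℝ) = 1 ^ (1/d3) := (Real.one_rpow _).symm
      _ ≤ (k/c3) ^ (1/d3) := Real.rpow_le_rpow zero_le_one
        (by rw [le_div_iff₀ hc3]; nlinarith only [hc3', hk1]) (by positivity)
    have hRpos' : 0 < (k/c3) ^ (1/d3) * φinv A := by positivity
    have h1 : V x (φinv B) ≤ V x ((k/c3) ^ (1/d3) * φinv A) :=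
      hVmono x (mem_Ioi.mpr (hφinv_pos B hBpos)) (mem_Ioi.mpr hRpos') hiAB
    have h2' := growth_upper_aux hc2 (fun r R hr hrR => (hVgrowth x r R hr hrR).2) hiA
      (hVpos x _ hiA)
      (le_trans (by linarith only [mul_le_mul_of_nonneg_right hcoef hiA.le] :
        φinv A ≤ (k/c3) ^ (1/d3) * φinv A) (le_refl _))
    have e : ((k/c3) ^ (1/d3) * φinv A) / φinv A = (k/c3) ^ (1/d3) := by
      field_simp
    rw [e] at h2'
    have e2 : ((k/c3) ^ (1/d3)) ^ d2 = X := by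
      rw [hXdef, ← Real.rpow_mul (by positivity)]
      congr 1
      field_simp
    rw [e2] at h2'
    exact le_trans h1 h2'
  -- fold the constant in the goal
  set Cf := c1 * c3 ^ (2*d2/d3) / (c2 ^ 2 * c4) * ((k - 1) / (k * l - 1)) *
    k ^ (1 - 2*d2/d3) * μ ^ (d2 - d3) with hCf
  have hCfpos : 0 < Cf := by
    rw [hCf]
    have h1 : (0:ℝ) < k - 1 := by linarith only [hk1]
    have h2 : (0:ℝ) < k*l - 1 := by nlinarith only [hk1, hl]
    have h3 : (0:ℝ) < c1 * c3 ^ (2*d2/d3) / (c2 ^ 2 * c4) := by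
      have := hc1; have := hc2; have := hc3; positivity
    have h5 : (0:ℝ) < k ^ (1 - 2*d2/d3) := Real.rpow_pos_of_pos hkpos _
    have h6 : (0:ℝ) < μ ^ (d2 - d3) := Real.rpow_pos_of_pos hμpos _
    exact mul_pos (mul_pos (mul_pos h3 (div_pos h1 h2)) h5) h6
  -- the key constant identity
  have hkey : Cf * Kpt * ((k*l-1)/(k-1)) * (c2 * X) = 1 := by
    have hXX : c3 ^ (2*d2/d3) * (X * X) = k ^ (2*d2/d3) := by
      rw [hXdef, ← Real.rpow_add (by positivity : (0:ℝ) < k/c3),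
        show d2/d3 + d2/d3 = 2*d2/d3 by ring,
        ← Real.mul_rpow hc3.le (by positivity),
        show c3 * (k/c3) = k by field_simp]
    have he4 : k ^ (1-2*d2/d3) = k / (c3 ^ (2*d2/d3) * (X*X)) := by
      rw [hXX, Real.rpow_sub hkpos, Real.rpow_one]
    have hy' : μ ^ (d3-d2) = (μ ^ (d2-d3))⁻¹ := by
      rw [show (d3-d2 : ℝ) = -(d2-d3) by ring, Real.rpow_neg hμpos.le]
    rw [hCf, hKdef, he4, hy']
    have h1 : (k-1:ℝ) ≠ 0 := (by linarith only [hk1] : (0:ℝ) < k-1).ne'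
    have h2 : (k*l-1:ℝ) ≠ 0 := by nlinarith only [hk1, hl]
    have h3 : (c3 ^ (2*d2/d3)) ≠ 0 := (Real.rpow_pos_of_pos hc3 _).ne'
    have h4' : X ≠ 0 := hXpos.ne'
    have h5 : (μ ^ (d2-d3)) ≠ 0 := (Real.rpow_pos_of_pos hμpos _).ne'
    field_simp
  have hkey2 : Cf * Kpt * (k*l-1) * (c2 * X) = k - 1 := by
    have h1 : (k-1:ℝ) ≠ 0 := (by linarith only [hk1] : (0:ℝ) < k-1).ne'
    field_simp at hkey
    linarith only [hkey]
  -- integral comparisons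
  have h2int : (∫ s in A..Cc, 1 / V x (φinv s)) ≤ (Cc - A) * (1 / V x (φinv A)) := by
    have h := intervalIntegral.integral_mono_on hAC.le hint2
      (intervalIntegrable_const (c := 1 / V x (φinv A)))
      (fun u hu => by
        have hupos : 0 < u := lt_of_lt_of_le hApos hu.1
        have h1 : 0 < V x (φinv u) := hVpos x _ (hφinv_pos u hupos)
        exact one_div_le_one_div_of_le hWA (hWmono A u hApos hu.1))
    simpa [intervalIntegral.integral_const, smul_eq_mul] using h
  have h3int : (B - A) * (1 / V x (φinv B)) ≤ ∫ s in A..B, 1 / V x (φinv s) := by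
    have h := intervalIntegral.integral_mono_on hAB.le
      (intervalIntegrable_const (c := 1 / V x (φinv B))) hint1
      (fun u hu => by
        have hupos : 0 < u := lt_of_lt_of_le hApos hu.1
        have h1 : 0 < V x (φinv u) := hVpos x _ (hφinv_pos u hupos)
        exact one_div_le_one_div_of_le h1 (hWmono u B hupos hu.2))
    simpa [intervalIntegral.integral_const, smul_eq_mul] using h
  by_cases hFint : IntervalIntegrable
    (fun s => V x (φinv s * g s) / (φ (φinv s * g s) * V x (φinv s))) volume A Cc
  · -- main chain
    have hpw : ∀ u ∈ Icc A Cc,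
        V x (φinv u * g u) / (φ (φinv u * g u) * V x (φinv u)) ≤
          Kpt * (V x ρ / φ ρ) * (1 / V x (φinv u)) := by
      intro u hu
      have hupos : 0 < u := lt_of_lt_of_le hApos hu.1
      have hWu : 0 < V x (φinv u) := hVpos x _ (hφinv_pos u hupos)
      have e : V x (φinv u * g u) / (φ (φinv u * g u) * V x (φinv u)) =
          (V x (φinv u * g u) / φ (φinv u * g u)) * (1 / V x (φinv u)) := by
        rw [div_mul_eq_div_div, div_eq_mul_one_div]
      rw [e]
      exact mul_le_mul_of_nonneg_right (hpoint u hu.1 hu.2) (by positivity)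
    have hint2' : IntervalIntegrable
        (fun u => Kpt * (V x ρ / φ ρ) * (1 / V x (φinv u))) volume A Cc :=
      hint2.const_mul _
    have hI : (∫ s in A..Cc, V x (φinv s * g s) / (φ (φinv s * g s) * V x (φinv s))) ≤
        Kpt * (V x ρ / φ ρ) * ∫ s in A..Cc, 1 / V x (φinv s) := by
      rw [← intervalIntegral.integral_const_mul]
      exact intervalIntegral.integral_mono_on hAC.le hFint hint2' hpw
    have hbase : Cf * Kpt * (Cc - A) * V x (φinv B) ≤ (B - A) * V x (φinv A) := by
      have hCcA : Cc - A = (k*l-1) * A := by rw [hC, hB]; ring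
      have hBA : B - A = (k-1) * A := by rw [hB]; ring
      have h5 : Cf * Kpt * (Cc - A) * V x (φinv B) ≤
          Cf * Kpt * (Cc - A) * (c2 * X * V x (φinv A)) := by
        apply mul_le_mul_of_nonneg_left h4
        have h6 : (0:ℝ) ≤ Cc - A := by linarith only [hAC]
        exact mul_nonneg (mul_nonneg hCfpos.le hKpos.le) h6
      calc Cf * Kpt * (Cc - A) * V x (φinv B) ≤
          Cf * Kpt * (Cc - A) * (c2 * X * V x (φinv A)) := h5
      _ = Cf * Kpt * (k*l-1) * (c2 * X) * (A * V x (φinv A)) := by rw [hCcA]; ring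
      _ = (k-1) * (A * V x (φinv A)) := by rw [hkey2]
      _ = (B - A) * V x (φinv A) := by rw [hBA]; ring
    have h7 : Cf * Kpt * (Cc - A) / V x (φinv A) ≤ (B - A) / V x (φinv B) :=
      (div_le_div_iff₀ hWA hWB).mpr hbase
    calc Cf * (∫ s in A..Cc, V x (φinv s * g s) / (φ (φinv s * g s) * V x (φinv s))) ≤
        Cf * (Kpt * (V x ρ / φ ρ) * ∫ s in A..Cc, 1 / V x (φinv s)) :=
      mul_le_mul_of_nonneg_left hI hCfpos.le
    _ ≤ Cf * (Kpt * (V x ρ / φ ρ) * ((Cc - A) * (1 / V x (φinv A)))) := by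
      apply mul_le_mul_of_nonneg_left _ hCfpos.le
      apply mul_le_mul_of_nonneg_left h2int
      exact mul_nonneg hKpos.le (div_nonneg hVρ.le hφρ.le)
    _ = (V x ρ / φ ρ) * (Cf * Kpt * (Cc - A) / V x (φinv A)) := by ring
    _ ≤ (V x ρ / φ ρ) * ((B - A) / V x (φinv B)) :=
      mul_le_mul_of_nonneg_left h7 (div_nonneg hVρ.le hφρ.le)
    _ = (V x ρ / φ ρ) * ((B - A) * (1 / V x (φinv B))) := by ring
    _ ≤ (V x ρ / φ ρ) * ∫ s in A..B, 1 / V x (φinv s) :=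
      mul_le_mul_of_nonneg_left h3int (div_nonneg hVρ.le hφρ.le)
  · rw [intervalIntegral.integral_undef hFint]
    simpa using hRHS
end

section
/- Set K1 := 2^{d2}·c2·L2/L1 and K3 := K1·(c_{v,2}/c_{v,1})². If a, b, c, r are positive constants with a < b and φ(r) ≤ min{a, c}, then for every x ∈ M: H(x,r,a,b) ≤ K3·log((b+c)/a) / (1 + log(c/φ(r))). -/
open Real Set MeasureTheory

set_option maxHeartbeats 1000000 in
/-- (recurrent case) upper bound on the hitting probability of a
ball during a finite time interval (Lemma A.1(i) / `prop:hit-prob-critical`). -/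
theorem recurrent_hitting_upper
    {M : Type*} [MetricSpace M]
    (V : M → ℝ → ℝ) (c1 c2 d1 d2 : ℝ)
    (hc1 : 0 < c1) (hc1' : c1 ≤ 1) (hc2 : 1 ≤ c2) (hd1 : 0 < d1) (hd12 : d1 ≤ d2)
    (hVpos : ∀ (x : M) (r : ℝ), 0 < r → 0 < V x r)
    (hVmono : ∀ x : M, MonotoneOn (V x) (Ioi (0:ℝ)))
    (hVgrowth : ∀ (x : M) (r R : ℝ), 0 < r → r < R →
      c1 * (R / r) ^ d1 ≤ V x R / V x r ∧ V x R / V x r ≤ c2 * (R / r) ^ d2)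
    (φ φinv : ℝ → ℝ) (c3 c4 d3 d4 : ℝ)
    (hc3 : 0 < c3) (hc3' : c3 ≤ 1) (hc4 : 1 ≤ c4) (hd3 : 0 < d3) (hd34 : d3 ≤ d4)
    (hφ0 : φ 0 = 0)
    (hφmono : StrictMonoOn φ (Ici (0:ℝ)))
    (hφcont : ContinuousOn φ (Ici (0:ℝ)))
    (hφsurj : ∀ y : ℝ, 0 ≤ y → ∃ x : ℝ, 0 ≤ x ∧ φ x = y)
    (hφinv_nonneg : ∀ y : ℝ, 0 ≤ y → 0 ≤ φinv y)
    (hφinv_right : ∀ y : ℝ, 0 ≤ y → φ (φinv y) = y)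
    (hφinv_left : ∀ x : ℝ, 0 ≤ x → φinv (φ x) = x)
    (hφgrowth : ∀ r R : ℝ, 0 < r → r < R →
      c3 * (R / r) ^ d3 ≤ φ R / φ r ∧ φ R / φ r ≤ c4 * (R / r) ^ d4)
    (cv1 cv2 : ℝ) (hcv1 : 0 < cv1) (hcv12 : cv1 ≤ cv2)
    (hVφ : ∀ (x : M) (r : ℝ), 0 < r → cv1 * φ r ≤ V x r ∧ V x r ≤ cv2 * φ r)
    (u : M → ℝ → ℝ → ℝ) (L1 L2 : ℝ) (hL1 : 0 < L1) (hL12 : L1 ≤ L2)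
    (hu_nonneg : ∀ (x : M) (t r : ℝ), 0 ≤ u x t r)
    (hu : ∀ (x : M) (t r : ℝ), 0 < t → 0 < r →
      L1 * min 1 (V x r / V x (φinv t)) ≤ u x t r ∧
      u x t r ≤ L2 * min 1 (V x r / V x (φinv t)))
    (H : M → ℝ → ℝ → ℝ → ℝ)
    (hH_nonneg : ∀ (x : M) (r a b : ℝ), 0 ≤ H x r a b)
    (hH_upper : ∀ (x : M) (r a b c : ℝ), 0 < r → 0 < a → a < b → 0 < c →
      H x r a b ≤ (∫ t in a..(b + c), u x t (2 * r)) /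
        (∫ t in (0:ℝ)..c, ⨅ y : {y : M // dist y x ≤ r}, u y.1 t r)) :
    ∀ (x : M) (a b c r : ℝ), 0 < a → a < b → 0 < c → 0 < r →
      φ r ≤ min a c →
      H x r a b ≤ (((2:ℝ) ^ d2 * c2 * L2 / L1) * (cv2 / cv1) ^ 2) *
        Real.log ((b + c) / a) / (1 + Real.log (c / φ r)) := by
  intro x a b c r ha hab hc hr hφmin
  obtain ⟨hφa, hφc⟩ := le_min_iff.mp hφmin
  have hφr : 0 < φ r := by
    have := hφmono (self_mem_Ici) (le_of_lt hr : (0:ℝ) ≤ r) hr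
    rwa [hφ0] at this
  have hcv2 : 0 < cv2 := hcv1.trans_le hcv12
  have hL2 : 0 < L2 := hL1.trans_le hL12
  have hc2' : 0 < c2 := lt_of_lt_of_le one_pos hc2
  have h2d2 : (0:ℝ) < 2 ^ d2 := Real.rpow_pos_of_pos two_pos d2
  have hbc : 0 < b + c := by linarith
  have hS : 0 ≤ Real.log ((b + c) / a) := by
    apply Real.log_nonneg
    rw [le_div_iff₀ ha]; linarith
  have hT : 0 < 1 + Real.log (c / φ r) := by
    have : 0 ≤ Real.log (c / φ r) := by
      apply Real.log_nonneg
      rw [le_div_iff₀ hφr]; linarith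
    linarith
  have hK3 : 0 ≤ ((2:ℝ) ^ d2 * c2 * L2 / L1) * (cv2 / cv1) ^ 2 := by positivity
  have hRHS : 0 ≤ (((2:ℝ) ^ d2 * c2 * L2 / L1) * (cv2 / cv1) ^ 2) *
      Real.log ((b + c) / a) / (1 + Real.log (c / φ r)) :=
    div_nonneg (mul_nonneg hK3 hS) hT.le
  have hH := hH_upper x r a b c hr ha hab hc
  set f : ℝ → ℝ := fun t => ⨅ y : {y : M // dist y x ≤ r}, u y.1 t r with hf
  set g : ℝ → ℝ := fun t => u x t (2 * r) with hg
  have hφinv_pos : ∀ t : ℝ, 0 < t → 0 < φinv t := by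
    intro t ht
    rcases (hφinv_nonneg t ht.le).lt_or_eq with h | h
    · exact h
    · exfalso
      have := hφinv_right t ht.le
      rw [← h, hφ0] at this
      linarith
  haveI : Nonempty {y : M // dist y x ≤ r} := ⟨⟨x, by simp [hr.le]⟩⟩
  by_cases hfI : IntervalIntegrable f volume 0 c
  swap
  · rw [intervalIntegral.integral_undef hfI, div_zero] at hH
    exact hH.trans hRHS
  by_cases hgI : IntervalIntegrable g volume a (b + c)
  swap
  · rw [intervalIntegral.integral_undef hgI, zero_div] at hH
    exact hH.trans hRHS
  -- lower bounds for f
  have hflb1 : ∀ t ∈ Ioc (0:ℝ) (φ r), L1 ≤ f t := by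
    intro t ht
    apply le_ciInf
    intro y
    have hmin : min (1:ℝ) (V y.1 r / V y.1 (φinv t)) = 1 := by
      rw [min_eq_left]
      rw [le_div_iff₀ (hVpos y.1 _ (hφinv_pos t ht.1)), one_mul]
      apply hVmono y.1 (mem_Ioi.mpr (hφinv_pos t ht.1)) (mem_Ioi.mpr hr)
      by_contra hcon
      push_neg at hcon
      have := hφmono (hr.le : r ∈ Ici (0:ℝ)) (hφinv_nonneg t ht.1.le) hcon
      rw [hφinv_right t ht.1.le] at this
      exact absurd ht.2 (not_le.mpr this)
    have := (hu y.1 t r ht.1 hr).1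
    rw [hmin, mul_one] at this
    exact this
  have hflb2 : ∀ t ∈ Icc (φ r) c, L1 * (cv1 / cv2) * φ r * (1 / t) ≤ f t := by
    intro t ht
    have ht0 : 0 < t := hφr.trans_le ht.1
    apply le_ciInf
    intro y
    have hlow := (hu y.1 t r ht0 hr).1
    have hbound : (cv1 / cv2) * (φ r / t) ≤ min (1:ℝ) (V y.1 r / V y.1 (φinv t)) := by
      apply le_min
      · apply mul_le_one₀ (div_le_one_of_le₀ hcv12 hcv2.le) (by positivity)
        exact div_le_one_of_le₀ ht.1 ht0.le
      · have h1 : cv1 * φ r ≤ V y.1 r := (hVφ y.1 r hr).1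
        have h2 : V y.1 (φinv t) ≤ cv2 * t := by
          have := (hVφ y.1 (φinv t) (hφinv_pos t ht0)).2
          rwa [hφinv_right t ht0.le] at this
        calc (cv1 / cv2) * (φ r / t) = (cv1 * φ r) / (cv2 * t) := by
              field_simp
          _ ≤ V y.1 r / V y.1 (φinv t) :=
              div_le_div₀ (hVpos y.1 r hr).le h1
                (hVpos y.1 _ (hφinv_pos t ht0)) h2
    calc L1 * (cv1 / cv2) * φ r * (1 / t) = L1 * ((cv1 / cv2) * (φ r / t)) := by ring
      _ ≤ L1 * min (1:ℝ) (V y.1 r / V y.1 (φinv t)) := by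
          exact mul_le_mul_of_nonneg_left hbound hL1.le
      _ ≤ u y.1 t r := hlow
  -- integrability of pieces
  have hfI1 : IntervalIntegrable f volume 0 (φ r) :=
    hfI.mono_set (uIcc_subset_uIcc (by simp [hφr.le, hc.le, le_refl]) (by
      rw [mem_uIcc]; left; exact ⟨hφr.le, hφc⟩))
  have hfI2 : IntervalIntegrable f volume (φ r) c :=
    hfI.mono_set (uIcc_subset_uIcc (by
      rw [mem_uIcc]; left; exact ⟨hφr.le, hφc⟩) (by
      rw [mem_uIcc]; left; exact ⟨hc.le, le_refl c⟩))
  have hinvI : IntervalIntegrable (fun t => L1 * (cv1 / cv2) * φ r * (1 / t))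
      volume (φ r) c := by
    apply ContinuousOn.intervalIntegrable
    apply ContinuousOn.mul continuousOn_const
    apply ContinuousOn.div continuousOn_const continuousOn_id
    intro t ht
    rw [uIcc_of_le hφc] at ht
    exact (hφr.trans_le ht.1).ne'
  -- denominator lower bound
  have hD1 : L1 * φ r ≤ ∫ t in (0:ℝ)..(φ r), f t := by
    have : (∫ t in (0:ℝ)..(φ r), (L1:ℝ)) ≤ ∫ t in (0:ℝ)..(φ r), f t := by
      apply intervalIntegral.integral_mono_ae_restrict hφr.le
        intervalIntegrable_const hfI1
      have h0 : (volume : Measure ℝ) {(0:ℝ)} = 0 := volume_singleton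
      rw [Filter.EventuallyLE, ae_restrict_iff' measurableSet_Icc]
      filter_upwards [measure_eq_zero_iff_ae_notMem.mp h0] with t ht0 htmem
      exact hflb1 t ⟨lt_of_le_of_ne htmem.1 (by simpa [eq_comm] using ht0), htmem.2⟩
    rwa [intervalIntegral.integral_const, smul_eq_mul, sub_zero, mul_comm] at this
  have hD2 : L1 * (cv1 / cv2) * φ r * Real.log (c / φ r) ≤ ∫ t in (φ r)..c, f t := by
    have hmono := intervalIntegral.integral_mono_on hφc hinvI hfI2 hflb2
    have hcalc : (∫ t in (φ r)..c, L1 * (cv1 / cv2) * φ r * (1 / t)) =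
        L1 * (cv1 / cv2) * φ r * Real.log (c / φ r) := by
      rw [intervalIntegral.integral_const_mul, integral_one_div]
      rw [uIcc_of_le hφc]
      intro hmem
      exact absurd hmem.1 (not_le.mpr hφr)
    rwa [hcalc] at hmono
  have hDsplit : (∫ t in (0:ℝ)..c, f t) =
      (∫ t in (0:ℝ)..(φ r), f t) + ∫ t in (φ r)..c, f t :=
    (intervalIntegral.integral_add_adjacent_intervals hfI1 hfI2).symm
  have hD : L1 * (cv1 / cv2) * φ r * (1 + Real.log (c / φ r)) ≤ ∫ t in (0:ℝ)..c, f t := by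
    rw [hDsplit]
    have h1 : cv1 / cv2 ≤ 1 := div_le_one_of_le₀ hcv12 hcv2.le
    have h2 : L1 * (cv1 / cv2) * φ r ≤ L1 * 1 * φ r :=
      mul_le_mul_of_nonneg_right (mul_le_mul_of_nonneg_left h1 hL1.le) hφr.le
    rw [mul_one] at h2
    nlinarith [hD1, hD2]
  -- numerator upper bound
  set K : ℝ := L2 * (c2 * 2 ^ d2) * (cv2 / cv1) with hK
  have hgub : ∀ t ∈ Icc a (b + c), g t ≤ K * φ r * (1 / t) := by
    intro t ht
    have ht0 : 0 < t := ha.trans_le ht.1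
    have hup := (hu x t (2 * r) ht0 (by linarith)).2
    have hV2r : V x (2 * r) ≤ c2 * 2 ^ d2 * V x r := by
      have := (hVgrowth x r (2 * r) hr (by linarith)).2
      rw [div_le_iff₀ (hVpos x r hr)] at this
      have h2 : (2 * r / r : ℝ) = 2 := by field_simp
      rw [h2] at this
      linarith
    have hVr : V x r ≤ cv2 * φ r := (hVφ x r hr).2
    have hVt : cv1 * t ≤ V x (φinv t) := by
      have := (hVφ x (φinv t) (hφinv_pos t ht0)).1
      rwa [hφinv_right t ht0.le] at this
    have hVtpos : 0 < V x (φinv t) := hVpos x _ (hφinv_pos t ht0)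
    calc g t ≤ L2 * min (1:ℝ) (V x (2 * r) / V x (φinv t)) := hup
      _ ≤ L2 * (V x (2 * r) / V x (φinv t)) :=
          mul_le_mul_of_nonneg_left (min_le_right _ _) hL2.le
      _ ≤ L2 * ((c2 * 2 ^ d2 * (cv2 * φ r)) / (cv1 * t)) := by
          apply mul_le_mul_of_nonneg_left _ hL2.le
          exact div_le_div₀ (by positivity)
            (hV2r.trans (mul_le_mul_of_nonneg_left hVr (by positivity))) (by positivity) hVt
      _ = K * φ r * (1 / t) := by
          rw [hK]; field_simp
  have hKpos : 0 < K := by rw [hK]; positivity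
  have hNint : IntervalIntegrable (fun t => K * φ r * (1 / t)) volume a (b + c) := by
    apply ContinuousOn.intervalIntegrable
    apply ContinuousOn.mul continuousOn_const
    apply ContinuousOn.div continuousOn_const continuousOn_id
    intro t ht
    rw [uIcc_of_le (by linarith : a ≤ b + c)] at ht
    exact (ha.trans_le ht.1).ne'
  have hN : (∫ t in a..(b + c), g t) ≤ K * φ r * Real.log ((b + c) / a) := by
    have hmono := intervalIntegral.integral_mono_on (by linarith : a ≤ b + c) hgI hNint hgub
    have hcalc : (∫ t in a..(b + c), K * φ r * (1 / t)) =
        K * φ r * Real.log ((b + c) / a) := by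
      rw [intervalIntegral.integral_const_mul, integral_one_div]
      rw [uIcc_of_le (by linarith : a ≤ b + c)]
      intro hmem
      exact absurd hmem.1 (not_le.mpr ha)
    rwa [hcalc] at hmono
  -- combine
  have hNnonneg : 0 ≤ ∫ t in a..(b + c), g t :=
    intervalIntegral.integral_nonneg (by linarith) (fun t _ => hu_nonneg x t (2 * r))
  have hD0pos : 0 < L1 * (cv1 / cv2) * φ r * (1 + Real.log (c / φ r)) := by positivity
  have hdiv : (∫ t in a..(b + c), g t) / (∫ t in (0:ℝ)..c, f t) ≤
      (K * φ r * Real.log ((b + c) / a)) /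
        (L1 * (cv1 / cv2) * φ r * (1 + Real.log (c / φ r))) :=
    div_le_div₀ (by positivity) hN hD0pos hD
  have heq : (K * φ r * Real.log ((b + c) / a)) /
      (L1 * (cv1 / cv2) * φ r * (1 + Real.log (c / φ r))) =
      (((2:ℝ) ^ d2 * c2 * L2 / L1) * (cv2 / cv1) ^ 2) *
        Real.log ((b + c) / a) / (1 + Real.log (c / φ r)) := by
    rw [hK]
    field_simp
  exact hH.trans (hdiv.trans_eq heq)
end
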